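/- arXiv:1901.09560 — 6 statements merged into one kernel-verified Lean document; each statement's English description precedes it below -/
import Mathlib

section
/- For every odd integer n ≥ 5 there exists a 3-graph H on n vertices with minimum vertex degree δ1(H) ≥ ((n−1)/2)·⌊d⋆(n)⌋ such that some vertex of H is not contained in any copy of K4^{(3)−}; consequently c1(n, K4^{(3)−}) ≥ ((n−1)/2)·⌊d⋆(n)⌋. -/
open Finset

/-- The degree of a vertex in a hypergraph: the number of edges containing it. -/
def hdeg {V : Type*} [DecidableEq V] (G : Finset (Finset V)) (x : V) : ℕ :=
  (G.filter (fun e => x ∈ e)).card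

/-- The minimum vertex degree of a hypergraph. -/
noncomputable def minDeg {V : Type*} [DecidableEq V] (G : Finset (Finset V)) : ℕ :=
  sInf (Set.range (hdeg G))

/-- Vertex `x` is covered by a copy of `K₄⁽³⁾⁻` in the 3-graph `H`. -/
def CovK4m {V : Type*} [DecidableEq V] (H : Finset (Finset V)) (x : V) : Prop :=
  ∃ a b c d : V, a ≠ b ∧ a ≠ c ∧ a ≠ d ∧ b ≠ c ∧ b ≠ d ∧ c ≠ d ∧
    (x = a ∨ x = b ∨ x = c ∨ x = d) ∧
    ({a, b, c} : Finset V) ∈ H ∧ ({a, b, d} : Finset V) ∈ H ∧ ({a, c, d} : Finset V) ∈ H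

/-- `c₁(n, K₄⁽³⁾⁻)`: the maximum of `δ₁(G)` over `n`-vertex 3-graphs `G` having
no `K₄⁽³⁾⁻`-covering. -/
noncomputable def c1K4m (n : ℕ) : ℕ :=
  sSup {d : ℕ | ∃ H : Finset (Finset (Fin n)),
    (∀ e ∈ H, e.card = 3) ∧ (∃ x, ¬ CovK4m H x) ∧ d = minDeg H}

/-- `d⋆(n) = (√(13n² − 72n + 108) − n + 6)/6`. -/
noncomputable def dstar (n : ℕ) : ℝ :=
  (Real.sqrt (13 * (n : ℝ) ^ 2 - 72 * n + 108) - n + 6) / 6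

/-!
Write `n = 2m + 1` and `d = ⌊d⋆(n)⌋`, and let `G` be the `d`-regular bipartite graph on two
copies of `ℤ/m` in which `i` and `j` are adjacent when `(i + j) mod m < d`. Add a vertex `x₀`
whose link is `G`, and take every triple avoiding `x₀` that spans no cherry (path with two
edges) of `G`. A `K₄⁽³⁾⁻` through `x₀` would either put a triangle into the bipartite link, or
give its apex two link neighbours lying in an `x₀`-free edge, which then spans a cherry.
The degree of `x₀` is `|E(G)| = md`. Any other vertex `u` lies in `d` edges through `x₀`, and at
most `3·C(d, 2)` of the `C(n − 2, 2)` triples `{u, v, w}` avoiding `x₀` span a cherry; since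
`d⋆(n)` is the positive root of `3x² + (n − 6)x = (n − 2)(n − 3)`, the bound `d ≤ d⋆(n)` is
exactly what makes `d + C(n − 2, 2) − 3·C(d, 2) ≥ md`.
-/

open SimpleGraph

theorem Sym2.toFinset_injective {α : Type*} [DecidableEq α] :
    Function.Injective (Sym2.toFinset : Sym2 α → Finset α) := fun s t h =>
  Sym2.ext fun x => by rw [← Sym2.mem_toFinset, h, Sym2.mem_toFinset]

theorem card_filter_add_val_lt {m d : ℕ} [NeZero m] (hdm : d ≤ m) (c : Fin m) :
    #{j : Fin m | (c + j).val < d} = d := by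
  rw [card_equiv (Equiv.addLeft c) (t := {k | k.val < d}) (by simp), Fin.card_filter_val_lt,
    min_eq_right hdm]

namespace SimpleGraph

variable {V : Type*} [DecidableEq V]

def IsCherryFree (G : SimpleGraph V) (e : Finset V) : Prop :=
  ∀ a ∈ e, ∀ b ∈ e, ∀ c ∈ e, b ≠ c → ¬(G.Adj a b ∧ G.Adj a c)

instance (G : SimpleGraph V) [DecidableRel G.Adj] : DecidablePred G.IsCherryFree := fun _ => by
  unfold IsCherryFree; infer_instance

theorem adj_or_adj_of_not_isCherryFree {G : SimpleGraph V} {u v w : V}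
    (h : ¬G.IsCherryFree {u, v, w}) :
    G.Adj u v ∧ G.Adj u w ∨ G.Adj v u ∧ G.Adj v w ∨ G.Adj w u ∧ G.Adj w v := by
  simp only [IsCherryFree, mem_insert, mem_singleton, not_forall, not_not] at h
  obtain ⟨a, ha, b, hb, c, hc, hbc, hab, hac⟩ := h
  rcases ha with rfl | rfl | rfl <;> rcases hb with rfl | rfl | rfl <;>
    rcases hc with rfl | rfl | rfl <;> simp_all

variable [Fintype V]

def cherryFreeCone (G : SimpleGraph V) [DecidableRel G.Adj] (x₀ : V) : Finset (Finset V) :=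
  G.edgeFinset.image (fun s => insert x₀ s.toFinset) ∪
    {e ∈ (univ : Finset V).powersetCard 3 | x₀ ∉ e ∧ G.IsCherryFree e}

variable {G : SimpleGraph V} [DecidableRel G.Adj] {x₀ u : V}

theorem card_filter_not_isCherryFree_insert_le {d : ℕ} (hΔ : ∀ v, G.degree v ≤ d)
    {s : Finset V} (hu : u ∉ s) :
    #{p ∈ s.powersetCard 2 | ¬G.IsCherryFree (insert u p)} ≤ 3 * d.choose 2 := by
  -- A cherry in `insert u {v, w}` is centred at `u`, or at a neighbour `v` of `u` whose other
  -- leaf `w` is a neighbour of `v` different from `u`.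
  set A := (G.neighborFinset u).powersetCard 2
  set B := (G.neighborFinset u).biUnion fun v =>
    ((G.neighborFinset v).erase u).image fun w => ({v, w} : Finset V)
  have hsub : {p ∈ s.powersetCard 2 | ¬G.IsCherryFree (insert u p)} ⊆ A ∪ B := by
    intro p hp
    obtain ⟨hps, hnc⟩ := mem_filter.1 hp
    obtain ⟨hp_sub, hp_card⟩ := mem_powersetCard.1 hps
    obtain ⟨v, w, -, rfl⟩ := card_eq_two.1 hp_card
    have hw : w ≠ u := by rintro rfl; exact hu (hp_sub (by simp))
    have hv : v ≠ u := by rintro rfl; exact hu (hp_sub (by simp))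
    rcases adj_or_adj_of_not_isCherryFree hnc with ⟨huv, huw⟩ | ⟨hvu, hvw⟩ | ⟨hwu, hwv⟩
    · exact mem_union_left _ (mem_powersetCard.2 ⟨by simp [insert_subset_iff, huv, huw], hp_card⟩)
    · exact mem_union_right _ (mem_biUnion.2 ⟨v, by simpa using hvu.symm,
        mem_image.2 ⟨w, by simp [hw, hvw], rfl⟩⟩)
    · exact mem_union_right _ (mem_biUnion.2 ⟨w, by simpa using hwu.symm,
        mem_image.2 ⟨v, by simp [hv, hwv], pair_comm _ _⟩⟩)
  have hA : #A ≤ d.choose 2 := by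
    rw [card_powersetCard]; exact Nat.choose_le_choose 2 (hΔ u)
  have hB : #B ≤ d * (d - 1) := by
    refine card_biUnion_le.trans ?_
    calc ∑ v ∈ G.neighborFinset u, #(((G.neighborFinset v).erase u).image
            fun w => ({v, w} : Finset V))
        ≤ ∑ _v ∈ G.neighborFinset u, (d - 1) := sum_le_sum fun v hv => by
          have huv : u ∈ G.neighborFinset v := by
            simpa using ((G.mem_neighborFinset _ _).1 hv).symm
          refine card_image_le.trans ?_
          rw [card_erase_of_mem huv, card_neighborFinset_eq_degree]
          exact Nat.sub_le_sub_right (hΔ v) 1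
      _ ≤ d * (d - 1) := by rw [sum_const, smul_eq_mul]; exact Nat.mul_le_mul_right _ (hΔ u)
  have hd : d * (d - 1) = 2 * d.choose 2 := by
    rw [Nat.choose_two_right, Nat.mul_div_cancel' (Nat.even_mul_pred_self d).two_dvd]
  calc _ ≤ #(A ∪ B) := card_le_card hsub
    _ ≤ #A + #B := card_union_le _ _
    _ ≤ 3 * d.choose 2 := by omega

theorem notMem_toFinset_of_mem_edgeFinset (hx₀ : ∀ v, ¬G.Adj x₀ v) {s : Sym2 V}
    (hs : s ∈ G.edgeFinset) : x₀ ∉ s.toFinset := fun hx => by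
  rw [Sym2.mem_toFinset] at hx
  rw [mem_edgeFinset, ← Sym2.other_spec hx] at hs
  exact hx₀ _ hs

theorem insert_mem_cherryFreeCone {a b : V} (h : G.Adj a b) :
    {x₀, a, b} ∈ G.cherryFreeCone x₀ :=
  mem_union_left _ (mem_image.2 ⟨s(a, b), G.mem_edgeFinset.2 h, by rw [Sym2.toFinset_mk_eq]⟩)

theorem adj_of_mem_cherryFreeCone {e : Finset V} (h : e ∈ G.cherryFreeCone x₀) (hx : x₀ ∈ e)
    {a b : V} (ha : a ∈ e) (hb : b ∈ e) (ha₀ : a ≠ x₀) (hb₀ : b ≠ x₀) (hab : a ≠ b) :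
    G.Adj a b := by
  rcases mem_union.1 h with h | h
  · obtain ⟨s, hs, rfl⟩ := mem_image.1 h
    simp only [mem_insert, ha₀, hb₀, Sym2.mem_toFinset, false_or] at ha hb
    rw [(Sym2.mem_and_mem_iff hab).1 ⟨ha, hb⟩] at hs
    exact G.mem_edgeFinset.1 hs
  · exact absurd hx (mem_filter.1 h).2.1

theorem isCherryFree_of_mem_cherryFreeCone {e : Finset V} (h : e ∈ G.cherryFreeCone x₀)
    (hx : x₀ ∉ e) : G.IsCherryFree e := by
  rcases mem_union.1 h with h | h
  · obtain ⟨s, -, rfl⟩ := mem_image.1 h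
    exact absurd (mem_insert_self _ _) hx
  · exact (mem_filter.1 h).2.2

theorem mem_cherryFreeCone_of_isCherryFree {e : Finset V} (he : #e = 3) (hx : x₀ ∉ e)
    (hc : G.IsCherryFree e) : e ∈ G.cherryFreeCone x₀ :=
  mem_union_right _ (mem_filter.2 ⟨mem_powersetCard.2 ⟨subset_univ _, he⟩, hx, hc⟩)

theorem card_eq_three_of_mem_cherryFreeCone (hx₀ : ∀ v, ¬G.Adj x₀ v) {e : Finset V}
    (h : e ∈ G.cherryFreeCone x₀) : #e = 3 := by
  rcases mem_union.1 h with h | h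
  · obtain ⟨s, hs, rfl⟩ := mem_image.1 h
    rw [card_insert_of_notMem (notMem_toFinset_of_mem_edgeFinset hx₀ hs),
      Sym2.card_toFinset_of_not_isDiag _ (G.not_isDiag_of_mem_edgeSet (mem_edgeFinset.1 hs))]
  · exact (mem_powersetCard.1 (mem_filter.1 h).1).2

theorem not_covK4m_cherryFreeCone (hG : G.CliqueFree 3) : ¬CovK4m (G.cherryFreeCone x₀) x₀ := by
  rintro ⟨a, b, c, d, hab, hac, had, hbc, hbd, hcd, hx, habc, habd, hacd⟩
  rcases hx with rfl | rfl | rfl | rfl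
  · exact hG {b, c, d} (is3Clique_triple_iff.2
      ⟨adj_of_mem_cherryFreeCone habc (by simp) (by simp) (by simp) hab.symm hac.symm hbc,
        adj_of_mem_cherryFreeCone habd (by simp) (by simp) (by simp) hab.symm had.symm hbd,
        adj_of_mem_cherryFreeCone hacd (by simp) (by simp) (by simp) hac.symm had.symm hcd⟩)
  · exact isCherryFree_of_mem_cherryFreeCone hacd (by simp [hab.symm, hbc, hbd])
      a (by simp) c (by simp) d (by simp) hcd
      ⟨adj_of_mem_cherryFreeCone habc (by simp) (by simp) (by simp) hab hbc.symm hac,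
        adj_of_mem_cherryFreeCone habd (by simp) (by simp) (by simp) hab hbd.symm had⟩
  · exact isCherryFree_of_mem_cherryFreeCone habd (by simp [hac.symm, hbc.symm, hcd])
      a (by simp) b (by simp) d (by simp) hbd
      ⟨adj_of_mem_cherryFreeCone habc (by simp) (by simp) (by simp) hac hbc hab,
        adj_of_mem_cherryFreeCone hacd (by simp) (by simp) (by simp) hac hcd.symm had⟩
  · exact isCherryFree_of_mem_cherryFreeCone habc (by simp [had.symm, hbd.symm, hcd.symm])
      a (by simp) b (by simp) c (by simp) hbc
      ⟨adj_of_mem_cherryFreeCone habd (by simp) (by simp) (by simp) had hbd hab,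
        adj_of_mem_cherryFreeCone hacd (by simp) (by simp) (by simp) had hcd hac⟩

theorem card_edgeFinset_le_hdeg_cherryFreeCone (hx₀ : ∀ v, ¬G.Adj x₀ v) :
    #G.edgeFinset ≤ hdeg (G.cherryFreeCone x₀) x₀ := by
  refine card_le_card_of_injOn (fun s => insert x₀ s.toFinset)
    (fun s hs => mem_filter.2 ⟨mem_union_left _ (mem_image_of_mem _ hs), mem_insert_self _ _⟩) ?_
  intro s hs t ht (hst : insert x₀ _ = insert x₀ _)
  have hs' := notMem_toFinset_of_mem_edgeFinset hx₀ (mem_coe.1 hs)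
  have ht' := notMem_toFinset_of_mem_edgeFinset hx₀ (mem_coe.1 ht)
  exact Sym2.toFinset_injective (by rw [← erase_insert hs', hst, erase_insert ht'])

theorem degree_le_card_filter_mem_cherryFreeCone (hx₀ : ∀ v, ¬G.Adj x₀ v) :
    G.degree u ≤ #{e ∈ G.cherryFreeCone x₀ | u ∈ e ∧ x₀ ∈ e} := by
  refine card_le_card_of_injOn (fun w => {x₀, u, w}) (fun w hw => ?_)
    fun w hw w' hw' (h : ({x₀, u, w} : Finset V) = {x₀, u, w'}) => ?_
  · exact mem_filter.2 ⟨insert_mem_cherryFreeCone ((mem_neighborFinset _ _ _).1 hw), by simp⟩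
  · have hw₀ : w ≠ x₀ := by
      rintro rfl; exact hx₀ u ((mem_neighborFinset _ _ _).1 hw).symm
    have hwu : w ≠ u := (G.ne_of_adj ((mem_neighborFinset _ _ _).1 hw)).symm
    have : w ∈ ({x₀, u, w'} : Finset V) := by rw [← h]; simp
    simpa [hw₀, hwu] using this

theorem card_filter_isCherryFree_insert_le (hu : u ≠ x₀) :
    #{p ∈ ((univ : Finset V) \ {x₀, u}).powersetCard 2 | G.IsCherryFree (insert u p)} ≤
      #{e ∈ G.cherryFreeCone x₀ | u ∈ e ∧ x₀ ∉ e} := by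
  have hup : ∀ {p}, p ∈ ((univ : Finset V) \ {x₀, u}).powersetCard 2 → u ∉ p :=
    fun hp h => by simpa using (mem_powersetCard.1 hp).1 h
  refine card_le_card_of_injOn (insert u) (fun p hp => ?_) fun p hp p' hp' h => ?_
  · obtain ⟨hps, hcf⟩ := mem_filter.1 hp
    have hx₀ : x₀ ∉ insert u p := by
      simp only [mem_insert, not_or]
      exact ⟨hu.symm, fun h => by simpa using (mem_powersetCard.1 hps).1 h⟩
    refine mem_filter.2 ⟨mem_cherryFreeCone_of_isCherryFree ?_ hx₀ hcf, mem_insert_self _ _, hx₀⟩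
    rw [card_insert_of_notMem (hup hps), (mem_powersetCard.1 hps).2]
  · rw [← erase_insert (hup (mem_filter.1 hp).1), ← erase_insert (hup (mem_filter.1 hp').1)]
    exact congrArg (erase · u) h

theorem degree_add_choose_le_hdeg_cherryFreeCone (hx₀ : ∀ v, ¬G.Adj x₀ v) {d : ℕ}
    (hΔ : ∀ v, G.degree v ≤ d) (hu : u ≠ x₀) :
    G.degree u + (Fintype.card V - 2).choose 2 ≤
      hdeg (G.cherryFreeCone x₀) u + 3 * d.choose 2 := by
  set T := ((univ : Finset V) \ {x₀, u}).powersetCard 2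
  have hT : #T = (Fintype.card V - 2).choose 2 := by
    rw [card_powersetCard, card_sdiff_of_subset (subset_univ _), card_pair hu.symm, card_univ]
  have hsplit : hdeg (G.cherryFreeCone x₀) u = #{e ∈ G.cherryFreeCone x₀ | u ∈ e ∧ x₀ ∈ e} +
      #{e ∈ G.cherryFreeCone x₀ | u ∈ e ∧ x₀ ∉ e} := by
    rw [hdeg, ← card_filter_add_card_filter_not (p := (x₀ ∈ ·)), filter_filter, filter_filter]
  have hcone := degree_le_card_filter_mem_cherryFreeCone (u := u) hx₀
  have hgood : #{p ∈ T | G.IsCherryFree (insert u p)} ≤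
      #{e ∈ G.cherryFreeCone x₀ | u ∈ e ∧ x₀ ∉ e} := card_filter_isCherryFree_insert_le hu
  have hbad : #{p ∈ T | ¬G.IsCherryFree (insert u p)} ≤ 3 * d.choose 2 :=
    card_filter_not_isCherryFree_insert_le hΔ (by simp)
  have hT' := card_filter_add_card_filter_not (s := T) (G.IsCherryFree <| insert u ·)
  omega

end SimpleGraph

/-- `none` is the isolated vertex that becomes the apex `x₀`. -/
def circulantBipartite (m d : ℕ) : SimpleGraph (Option (Fin m ⊕ Fin m)) :=
  SimpleGraph.fromRel fun x y =>
    ∃ i j : Fin m, x = some (.inl i) ∧ y = some (.inr j) ∧ (i + j).val < d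

namespace circulantBipartite

variable {m d : ℕ}

instance : DecidableRel (circulantBipartite m d).Adj := fun _ _ =>
  inferInstanceAs (Decidable (_ ∧ (_ ∨ _)))

theorem not_adj_none (x : Option (Fin m ⊕ Fin m)) : ¬(circulantBipartite m d).Adj none x := by
  simp [circulantBipartite]

theorem cliqueFree_three : (circulantBipartite m d).CliqueFree 3 := by
  let c : (circulantBipartite m d).Coloring Bool := Coloring.mk
    (fun | some (.inl _) => true | _ => false)
    (by rintro _ _ ⟨-, ⟨i, j, rfl, rfl, -⟩ | ⟨i, j, rfl, rfl, -⟩⟩ <;> simp)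
  exact c.colorable.cliqueFree (by simp)

theorem degree_some (hdm : d ≤ m) (s : Fin m ⊕ Fin m) :
    (circulantBipartite m d).degree (some s) = d := by
  rw [← card_neighborFinset_eq_degree]
  rcases s with i | j
  · have : NeZero m := NeZero.of_pos i.pos
    have : (circulantBipartite m d).neighborFinset (some (.inl i)) =
        ({j | (i + j).val < d} : Finset (Fin m)).image (some ∘ .inr) := by
      ext (_ | j | j) <;> (rw [mem_neighborFinset]; simp [circulantBipartite])
    rw [this, card_image_of_injective _ ((Option.some_injective _).comp Sum.inr_injective),
      card_filter_add_val_lt hdm]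
  · have : NeZero m := NeZero.of_pos j.pos
    have : (circulantBipartite m d).neighborFinset (some (.inr j)) =
        ({i | (j + i).val < d} : Finset (Fin m)).image (some ∘ .inl) := by
      ext (_ | i | i) <;> (rw [mem_neighborFinset]; simp [circulantBipartite, add_comm])
    rw [this, card_image_of_injective _ ((Option.some_injective _).comp Sum.inl_injective),
      card_filter_add_val_lt hdm]

theorem degree_none : (circulantBipartite m d).degree none = 0 := by
  rw [← card_neighborFinset_eq_degree, card_eq_zero, eq_empty_iff_forall_notMem]
  simpa using not_adj_none

theorem degree_le (hdm : d ≤ m) (x : Option (Fin m ⊕ Fin m)) :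
    (circulantBipartite m d).degree x ≤ d := by
  cases x with
  | none => simp [degree_none]
  | some s => exact (degree_some hdm s).le

theorem card_edgeFinset (hdm : d ≤ m) : #(circulantBipartite m d).edgeFinset = m * d := by
  have h := sum_degrees_eq_twice_card_edges (circulantBipartite m d)
  simp only [Fintype.sum_option, degree_none, degree_some hdm, sum_const, card_univ,
    Fintype.card_sum, Fintype.card_fin, smul_eq_mul] at h
  linarith

end circulantBipartite

theorem exists_hypergraph_not_covK4m {m d : ℕ} (hdm : d ≤ m)
    (hmd : m * d + 3 * d.choose 2 ≤ d + (2 * m - 1).choose 2) :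
    ∃ H : Finset (Finset (Fin (2 * m + 1))), (∀ e ∈ H, #e = 3) ∧ (∀ x, m * d ≤ hdeg H x) ∧
      ∃ x, ¬CovK4m H x := by
  let f : Fin (2 * m + 1) ≃ Option (Fin m ⊕ Fin m) := Fintype.equivOfCardEq (by simp; ring)
  let G := (circulantBipartite m d).comap f
  let φ : G ≃g circulantBipartite m d := Iso.comap f _
  have hx₀ : ∀ v, ¬G.Adj (f.symm none) v := fun v => by
    simpa [G] using circulantBipartite.not_adj_none (f v)
  have hΔ : ∀ v, G.degree v ≤ d := fun v => by
    rw [← φ.degree_eq]; exact circulantBipartite.degree_le hdm _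
  have hreg : ∀ v, v ≠ f.symm none → G.degree v = d := by
    intro v hv
    obtain ⟨s, hs⟩ := Option.ne_none_iff_exists'.1 fun h => hv (by rw [← h, f.symm_apply_apply])
    rw [← φ.degree_eq, Iso.comap_apply, hs, circulantBipartite.degree_some hdm]
  refine ⟨G.cherryFreeCone (f.symm none), fun _ => card_eq_three_of_mem_cherryFreeCone hx₀,
    fun v => ?_, f.symm none, not_covK4m_cherryFreeCone
      (circulantBipartite.cliqueFree_three.comap φ.isContained)⟩
  by_cases hv : v = f.symm none
  · subst hv
    calc m * d = #G.edgeFinset := by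
          rw [φ.card_edgeFinset_eq, circulantBipartite.card_edgeFinset hdm]
      _ ≤ _ := card_edgeFinset_le_hdeg_cherryFreeCone hx₀
  · have := degree_add_choose_le_hdeg_cherryFreeCone hx₀ hΔ hv
    rw [hreg v hv, Fintype.card_fin, show 2 * m + 1 - 2 = 2 * m - 1 by omega] at this
    omega

theorem dstar_quadratic_eq (n : ℕ) :
    3 * dstar n ^ 2 + (n - 6) * dstar n = (n - 2) * (n - 3) := by
  have h := Real.sq_sqrt (by nlinarith [sq_nonneg ((n : ℝ) - 3)] :
    (0 : ℝ) ≤ 13 * (n : ℝ) ^ 2 - 72 * n + 108)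
  unfold dstar
  linear_combination (1 / 12 : ℝ) * h

theorem one_le_dstar (n : ℕ) : 1 ≤ dstar n := by
  have : (n : ℝ) ≤ Real.sqrt (13 * (n : ℝ) ^ 2 - 72 * n + 108) :=
    Real.le_sqrt_of_sq_le (by nlinarith [sq_nonneg ((n : ℝ) - 3)])
  unfold dstar
  linarith

theorem dstar_lt {m : ℕ} (hm : 1 ≤ m) : dstar (2 * m + 1) < m + 1 := by
  have hm' : (1 : ℝ) ≤ m := by exact_mod_cast hm
  have : Real.sqrt (13 * ((2 * m + 1 : ℕ) : ℝ) ^ 2 - 72 * (2 * m + 1 : ℕ) + 108) < 8 * m + 1 := by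
    rw [Real.sqrt_lt' (by linarith)]
    push_cast
    nlinarith
  unfold dstar
  push_cast at this ⊢
  linarith

theorem quadratic_le_of_le_dstar {n : ℕ} (hn : 3 ≤ n) {x : ℝ} (hx₀ : 0 ≤ x) (hx : x ≤ dstar n) :
    3 * x ^ 2 + (n - 6) * x ≤ (n - 2) * (n - 3) := by
  have hn' : (3 : ℝ) ≤ n := by exact_mod_cast hn
  have hpos : 0 ≤ 3 * (dstar n + x) + n - 6 := by linarith [one_le_dstar n]
  nlinarith [dstar_quadratic_eq n, mul_nonneg (sub_nonneg.2 hx) hpos]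

theorem floor_dstar_le {m : ℕ} (hm : 1 ≤ m) : ⌊dstar (2 * m + 1)⌋₊ ≤ m :=
  Nat.lt_succ_iff.1 <| (Nat.floor_lt (by linarith [one_le_dstar (2 * m + 1)])).2 <| by
    exact_mod_cast dstar_lt hm

theorem mul_floor_dstar_add_three_mul_choose_le {m : ℕ} (hm : 1 ≤ m) :
    m * ⌊dstar (2 * m + 1)⌋₊ + 3 * (⌊dstar (2 * m + 1)⌋₊).choose 2 ≤
      ⌊dstar (2 * m + 1)⌋₊ + (2 * m - 1).choose 2 := by
  set d := ⌊dstar (2 * m + 1)⌋₊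
  have hd : (d : ℝ) ≤ dstar (2 * m + 1) := Nat.floor_le (by linarith [one_le_dstar (2 * m + 1)])
  have hq := quadratic_le_of_le_dstar (by omega) d.cast_nonneg hd
  rw [← Nat.cast_le (α := ℝ)]
  push_cast [Nat.cast_choose_two, Nat.cast_sub (by omega : 1 ≤ 2 * m)] at hq ⊢
  linarith

theorem le_c1K4m {n k : ℕ} {H : Finset (Finset (Fin n))} (h3 : ∀ e ∈ H, #e = 3) {x : Fin n}
    (hx : ¬CovK4m H x) (hk : ∀ v, k ≤ hdeg H v) : k ≤ c1K4m n := by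
  have hmin : k ≤ minDeg H := le_csInf ⟨_, x, rfl⟩ (by rintro _ ⟨v, rfl⟩; exact hk v)
  refine hmin.trans (le_csSup ⟨Fintype.card (Finset (Fin n)), ?_⟩ ⟨H, h3, ⟨x, hx⟩, rfl⟩)
  rintro _ ⟨H', -, ⟨y, -⟩, rfl⟩
  exact (Nat.sInf_le (Set.mem_range_self y)).trans ((card_filter_le _ _).trans (card_le_univ _))

theorem stmt0 (n : ℕ) (hn : 5 ≤ n) (hodd : Odd n) :
    (∃ H : Finset (Finset (Fin n)),
      (∀ e ∈ H, e.card = 3) ∧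
      (∀ x : Fin n, (n - 1) / 2 * ⌊dstar n⌋₊ ≤ hdeg H x) ∧
      ∃ x : Fin n, ¬ CovK4m H x) ∧
    (n - 1) / 2 * ⌊dstar n⌋₊ ≤ c1K4m n := by
  obtain ⟨m, rfl⟩ := hodd
  have hm : 1 ≤ m := by omega
  obtain ⟨H, h3, hH, x, hx⟩ := exists_hypergraph_not_covK4m (floor_dstar_le hm)
    (mul_floor_dstar_add_three_mul_choose_le hm)
  rw [show (2 * m + 1 - 1) / 2 = m by omega]
  exact ⟨⟨H, h3, hH, x, hx⟩, le_c1K4m h3 hx hH⟩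
end

section
/- For every ε > 0 there exist δ > 0 and n0 ∈ ℕ such that the following holds for every n ≥ n0: if H is a 3-graph on n+1 vertices with minimum vertex degree δ1(H) ≥ ((√13 − 1)/6 − δ)·n²/2 and x is a vertex of H not covered by any copy of K4^{(3)−}, then the link graph H_x can be made bipartite by removing at most εn² edges; that is, there is a partition of V(H)∖{x} into two sets S and T such that the number of edges of H_x lying entirely inside S or entirely inside T is at most εn². -/
open Finset

section AES
open SimpleGraph

lemma walk_split {V : Type*} {G : SimpleGraph V} {a b : V} (w : G.Walk a b) :
    ∀ i j : ℕ, i ≤ j → j ≤ w.length →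
    ∃ p : G.Walk (w.getVert i) (w.getVert j), p.length = j - i := by
  induction w with
  | nil =>
    intro i j hij hj
    simp only [SimpleGraph.Walk.length_nil, Nat.le_zero] at hj
    subst hj
    interval_cases i
    exact ⟨SimpleGraph.Walk.nil, rfl⟩
  | @cons u v c h q ih =>
    intro i j hij hj
    rw [SimpleGraph.Walk.length_cons] at hj
    match i, j with
    | 0, 0 => exact ⟨SimpleGraph.Walk.nil, rfl⟩
    | 0, (j+1) =>
      obtain ⟨p, hp⟩ := ih 0 j (Nat.zero_le _) (by omega)
      refine ⟨(SimpleGraph.Walk.cons h (p.copy (q.getVert_zero) rfl)).copy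
        ((SimpleGraph.Walk.cons h q).getVert_zero).symm
        (by rw [SimpleGraph.Walk.getVert_cons_succ]), ?_⟩
      simp only [SimpleGraph.Walk.length_copy, SimpleGraph.Walk.length_cons, hp]; omega
    | (i+1), (j+1) =>
      obtain ⟨p, hp⟩ := ih i j (by omega) (by omega)
      refine ⟨p.copy (by rw [SimpleGraph.Walk.getVert_cons_succ])
        (by rw [SimpleGraph.Walk.getVert_cons_succ]), ?_⟩
      simp [hp]

lemma coloring_of_no_odd_walk {V : Type*} {G : SimpleGraph V}
    (h : ∀ (v : V) (w : G.Walk v v), ¬ Odd w.length) :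
    ∃ C : V → Bool, ∀ a b, G.Adj a b → C a ≠ C b := by
  classical
  refine ⟨fun v => if ∃ p : G.Walk ((G.connectedComponentMk v).out) v, Even p.length
    then true else false, ?_⟩
  intro a b hab
  have hroot : (G.connectedComponentMk a).out = (G.connectedComponentMk b).out := by
    rw [ConnectedComponent.connectedComponentMk_eq_of_adj hab]
  have hreach : G.Reachable ((G.connectedComponentMk a).out) a := by
    apply ConnectedComponent.exact
    exact (G.connectedComponentMk a).out_eq
  obtain ⟨p⟩ := hreach
  rcases Nat.even_or_odd p.length with hev | hodd
  · have ha : (∃ q : G.Walk ((G.connectedComponentMk a).out) a, Even q.length) := ⟨p, hev⟩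
    have hb : ¬ (∃ q : G.Walk ((G.connectedComponentMk b).out) b, Even q.length) := by
      rintro ⟨q, hq⟩
      exact h _ ((p.concat hab).append (q.copy hroot.symm rfl).reverse) (by
        rw [Walk.length_append, Walk.length_concat, Walk.length_reverse, Walk.length_copy]
        rcases hev with ⟨k, hk⟩; rcases hq with ⟨m, hm⟩
        exact ⟨k + m, by omega⟩)
    simp only [ha, hb, if_true, if_false]
    exact fun hcon => by simp at hcon
  · have ha : ¬ (∃ q : G.Walk ((G.connectedComponentMk a).out) a, Even q.length) := by
      rintro ⟨q, hq⟩
      exact h _ (q.append p.reverse) (by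
        rw [Walk.length_append, Walk.length_reverse]
        rcases hq with ⟨k, hk⟩; rcases hodd with ⟨m, hm⟩
        exact ⟨k + m, by omega⟩)
    have hb : (∃ q : G.Walk ((G.connectedComponentMk b).out) b, Even q.length) := by
      refine ⟨(p.concat hab).copy hroot rfl, ?_⟩
      rw [Walk.length_copy, Walk.length_concat]
      rcases hodd with ⟨m, hm⟩
      exact ⟨m + 1, by omega⟩
    simp only [ha, hb, if_true, if_false]
    exact fun hcon => by simp at hcon

lemma aes {V : Type*} [DecidableEq V] [Fintype V] (G : SimpleGraph V) (N : V → Finset V)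
    (hN : ∀ u v : V, u ∈ N v ↔ G.Adj v u)
    (S : Finset V)
    (htf : ∀ a b c, G.Adj a b → G.Adj b c → G.Adj a c → False)
    (hsupp : ∀ a b, G.Adj a b → a ∈ S)
    (hdegS : ∀ v ∈ S, 2 * S.card < 5 * (N v).card) :
    ∃ C : V → Bool, ∀ a b, G.Adj a b → C a ≠ C b := by
  classical
  by_cases hodd : ∀ (v : V) (w : G.Walk v v), ¬ Odd w.length
  · exact coloring_of_no_odd_walk hodd
  push_neg at hodd
  obtain ⟨v0, w0, hw0⟩ := hodd
  set P : ℕ → Prop := fun k => Odd k ∧ ∃ v : V, ∃ w : G.Walk v v, w.length = k with hP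
  have hne : ∃ k, P k := ⟨w0.length, hw0, v0, w0, rfl⟩
  set ℓ := sInf {k | P k} with hldef
  have hlP : P ℓ := Nat.sInf_mem hne
  obtain ⟨hlodd, v, w, hw⟩ := hlP
  have hmin : ∀ (u : V) (q : G.Walk u u), Odd q.length → ℓ ≤ q.length := by
    intro u q hq
    exact Nat.sInf_le ⟨hq, u, q, rfl⟩
  have hl1 : ℓ ≠ 1 := by
    intro h1
    have : G.Adj (w.getVert 0) (w.getVert 1) := w.adj_getVert_succ (by omega)
    rw [w.getVert_zero] at this
    have h1' : w.getVert 1 = v := by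
      have := w.getVert_length
      rw [hw, h1] at this
      exact this
    rw [h1'] at this
    exact G.irrefl this
  have hl3 : ℓ ≠ 3 := by
    intro h3
    have a01 : G.Adj (w.getVert 0) (w.getVert 1) := w.adj_getVert_succ (by omega)
    have a12 : G.Adj (w.getVert 1) (w.getVert 2) := w.adj_getVert_succ (by omega)
    have a23 : G.Adj (w.getVert 2) (w.getVert 3) := w.adj_getVert_succ (by omega)
    have h3' : w.getVert 3 = w.getVert 0 := by
      have := w.getVert_length
      rw [hw, h3] at this
      rw [this, w.getVert_zero]
    rw [h3'] at a23
    exact htf _ _ _ a01 a12 a23.symm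
  have hl5 : 5 ≤ ℓ := by
    rcases hlodd with ⟨k, hk⟩; omega
  have hdiff : ∀ (u : V) (i j : ℕ), i < j → j < ℓ → G.Adj u (w.getVert i) →
      G.Adj u (w.getVert j) → (j - i = 2 ∨ j - i = ℓ - 2) := by
    intro u i j hij hj hai haj
    obtain ⟨p, hp⟩ := walk_split w i j (le_of_lt hij) (by omega)
    rcases Nat.even_or_odd (j - i) with hev | hod
    · obtain ⟨q1, hq1⟩ := walk_split w j w.length (by omega) (le_refl _)
      obtain ⟨q2, hq2⟩ := walk_split w 0 i (Nat.zero_le _) (by omega)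
      have hW2len : (Walk.cons haj
          ((((q1.copy rfl w.getVert_length).append (q2.copy w.getVert_zero rfl))).concat
            hai.symm)).length = (ℓ - j) + i + 2 := by
        rw [Walk.length_cons, Walk.length_concat, Walk.length_append, Walk.length_copy,
          Walk.length_copy, hq1, hq2]
        omega
      have hW2odd : Odd (Walk.cons haj
          ((((q1.copy rfl w.getVert_length).append (q2.copy w.getVert_zero rfl))).concat
            hai.symm)).length := by
        rw [hW2len]
        rcases hlodd with ⟨k, hk⟩; rcases hev with ⟨m, hm⟩
        exact ⟨(ℓ - j + i + 1)/2, by omega⟩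
      have := hmin u _ hW2odd
      rw [hW2len] at this
      rcases hev with ⟨m, hm⟩
      left; omega
    · have hW1len : (Walk.cons hai (p.concat haj.symm)).length = (j - i) + 2 := by
        rw [Walk.length_cons, Walk.length_concat, hp]
      have hW1odd : Odd (Walk.cons hai (p.concat haj.symm)).length := by
        rw [hW1len]
        rcases hod with ⟨m, hm⟩
        exact ⟨m + 1, by omega⟩
      have := hmin u _ hW1odd
      rw [hW1len] at this
      rcases hlodd with ⟨k, hk⟩; rcases hod with ⟨m, hm⟩
      right; omega
  have hAcard : ∀ u : V, ((Finset.range ℓ).filter (fun i => u ∈ N (w.getVert i))).card ≤ 2 := by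
    intro u
    by_contra hc
    push_neg at hc
    obtain ⟨a, b, c, ha, hb, hcc, hab, hac, hbc⟩ := Finset.two_lt_card_iff.mp hc
    simp only [Finset.mem_filter, Finset.mem_range] at ha hb hcc
    have key : ∀ i j : ℕ, i < ℓ → j < ℓ → u ∈ N (w.getVert i) → u ∈ N (w.getVert j) →
        i < j → (j - i = 2 ∨ j - i = ℓ - 2) := by
      intro i j hi hj hni hnj hij
      exact hdiff u i j hij hj ((hN u _).mp hni).symm ((hN u _).mp hnj).symm
    have hcase : ∀ i j k : ℕ, i < j → j < k → k < ℓ →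
        u ∈ N (w.getVert i) → u ∈ N (w.getVert j) → u ∈ N (w.getVert k) → False := by
      intro i j k hij hjk hk hni hnj hnk
      have h12 := key i j (by omega) (by omega) hni hnj hij
      have h23 := key j k (by omega) hk hnj hnk hjk
      have h13 := key i k (by omega) hk hni hnk (by omega)
      rcases hlodd with ⟨m, hm⟩
      omega
    rcases Nat.lt_trichotomy a b with h1 | h1 | h1
    · rcases Nat.lt_trichotomy b c with h2 | h2 | h2
      · exact hcase a b c h1 h2 hcc.1 ha.2 hb.2 hcc.2
      · exact hbc h2
      · rcases Nat.lt_trichotomy a c with h3 | h3 | h3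
        · exact hcase a c b h3 h2 hb.1 ha.2 hcc.2 hb.2
        · exact hac h3
        · exact hcase c a b h3 h1 hb.1 hcc.2 ha.2 hb.2
    · exact hab h1
    · rcases Nat.lt_trichotomy a c with h2 | h2 | h2
      · exact hcase b a c h1 h2 hcc.1 hb.2 ha.2 hcc.2
      · exact hac h2
      · rcases Nat.lt_trichotomy b c with h3 | h3 | h3
        · exact hcase b c a h3 h2 ha.1 hb.2 hcc.2 ha.2
        · exact hbc h3
        · exact hcase c b a h3 h1 ha.1 hcc.2 hb.2 ha.2
  have hcycS : ∀ i ∈ Finset.range ℓ, w.getVert i ∈ S := by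
    intro i hi
    rw [Finset.mem_range] at hi
    exact hsupp _ _ (w.adj_getVert_succ (by omega))
  have hub : ∑ i ∈ Finset.range ℓ, (N (w.getVert i)).card ≤ 2 * S.card := by
    have e1 : ∀ i : ℕ, (N (w.getVert i)).card
        = ∑ u : V, (if u ∈ N (w.getVert i) then 1 else 0) := by
      intro i
      rw [Finset.sum_ite_mem, Finset.univ_inter, Finset.card_eq_sum_ones]
    calc ∑ i ∈ Finset.range ℓ, (N (w.getVert i)).card
        = ∑ i ∈ Finset.range ℓ, ∑ u : V, (if u ∈ N (w.getVert i) then 1 else 0) :=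
          Finset.sum_congr rfl (fun i _ => e1 i)
      _ = ∑ u : V, ∑ i ∈ Finset.range ℓ, (if u ∈ N (w.getVert i) then 1 else 0) :=
          Finset.sum_comm
      _ = ∑ u : V, ((Finset.range ℓ).filter (fun i => u ∈ N (w.getVert i))).card :=
          Finset.sum_congr rfl (fun u _ => (Finset.card_filter _ _).symm)
      _ ≤ ∑ u : V, (if u ∈ S then 2 else 0) := by
          apply Finset.sum_le_sum
          intro u _
          by_cases hu : u ∈ S
          · simp only [hu, if_true]; exact hAcard u
          · simp only [hu, if_false]
            rw [Nat.le_zero, Finset.card_eq_zero, Finset.filter_eq_empty_iff]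
            intro i _ hmem
            exact hu (hsupp u _ ((hN u _).mp hmem).symm)
      _ = 2 * S.card := by
          rw [Finset.sum_ite_mem, Finset.univ_inter, Finset.sum_const, smul_eq_mul, mul_comm]
  have hlb : ℓ * (2 * S.card + 1) ≤ ∑ i ∈ Finset.range ℓ, 5 * (N (w.getVert i)).card := by
    calc ℓ * (2 * S.card + 1) = ∑ _i ∈ Finset.range ℓ, (2 * S.card + 1) := by
          rw [Finset.sum_const, Finset.card_range, smul_eq_mul]
      _ ≤ ∑ i ∈ Finset.range ℓ, 5 * (N (w.getVert i)).card := by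
          apply Finset.sum_le_sum
          intro i hi
          exact hdegS _ (hcycS i hi)
  rw [← Finset.mul_sum] at hlb
  nlinarith [hub, hlb, hl5, Nat.zero_le S.card]

end AES

set_option maxHeartbeats 3000000 in
theorem stmt3 (ε : ℝ) (hε : 0 < ε) :
    ∃ (δ : ℝ) (n0 : ℕ), 0 < δ ∧ ∀ n : ℕ, n0 ≤ n →
      ∀ H : Finset (Finset (Fin (n + 1))), (∀ e ∈ H, e.card = 3) →
      (∀ v : Fin (n + 1),
        ((Real.sqrt 13 - 1) / 6 - δ) * (n : ℝ) ^ 2 / 2 ≤ (hdeg H v : ℝ)) →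
      ∀ x : Fin (n + 1), ¬ CovK4m H x →
      ∃ S T : Finset (Fin (n + 1)), Disjoint S T ∧ S ∪ T = Finset.univ \ {x} ∧
        ((H.filter (fun e => x ∈ e ∧ ((e \ {x}) ⊆ S ∨ (e \ {x}) ⊆ T))).card : ℝ)
          ≤ ε * (n : ℝ) ^ 2 := by
  classical
  have h13 : Real.sqrt 13 ^ 2 = 13 := Real.sq_sqrt (by norm_num)
  have hs13nn : (0:ℝ) ≤ Real.sqrt 13 := Real.sqrt_nonneg 13
  have hs13lb : (3.604 : ℝ) ≤ Real.sqrt 13 := by nlinarith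
  have hs13ub : Real.sqrt 13 ≤ 4 := by nlinarith
  set c : ℝ := (Real.sqrt 13 - 1) / 6 with hcdef
  have hclb : (0.434 : ℝ) ≤ c := by rw [hcdef]; linarith
  have hcub : c ≤ 1/2 := by rw [hcdef]; linarith
  have hcsq : 1 - c = 3 * c^2 := by
    rw [hcdef]; field_simp; nlinarith
  set δ : ℝ := min ε 1 / 10^7 with hδdef
  have hδpos : 0 < δ := by
    have h1 : (0:ℝ) < min ε 1 := lt_min hε one_pos
    positivity
  have hδ1 : δ ≤ 1 / 10^7 := by
    rw [hδdef]
    have : min ε 1 ≤ 1 := min_le_right _ _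
    linarith
  have hδε : δ ≤ ε / 10^7 := by
    rw [hδdef]
    have : min ε 1 ≤ ε := min_le_left _ _
    linarith
  refine ⟨δ, ⌈(10:ℝ)/δ⌉₊ + 1, hδpos, ?_⟩
  intro n hn H h3 hdegH x hCov
  have hn1 : 1 ≤ n := by omega
  have hnR1 : (1:ℝ) ≤ (n:ℝ) := by exact_mod_cast hn1
  have hnRpos : (0:ℝ) < (n:ℝ) := by linarith
  have hnδ : (10:ℝ)/δ ≤ (n:ℝ) := by
    calc (10:ℝ)/δ ≤ (⌈(10:ℝ)/δ⌉₊ : ℝ) := Nat.le_ceil _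
      _ ≤ (n:ℝ) := by exact_mod_cast Nat.le_of_succ_le hn
  have hnδ' : (10:ℝ) ≤ δ * n := by
    rw [div_le_iff₀ hδpos] at hnδ; linarith [hnδ]
  -- the vertex set minus x
  set W : Finset (Fin (n+1)) := Finset.univ \ {x} with hWdef
  have hWcard : W.card = n := by
    rw [hWdef, Finset.card_sdiff_of_subset (by simp), Finset.card_univ, Fintype.card_fin,
      Finset.card_singleton]
    omega
  have hmemW : ∀ v : Fin (n+1), v ∈ W ↔ v ≠ x := by
    intro v; rw [hWdef]; simp
  -- the link graph
  set adj : Fin (n+1) → Fin (n+1) → Prop :=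
    fun u v => u ≠ v ∧ u ≠ x ∧ v ≠ x ∧ ({x, u, v} : Finset (Fin (n+1))) ∈ H with hadjdef
  have hadj_symm : ∀ u v, adj u v → adj v u := by
    intro u v ⟨h1, h2, h3', h4⟩
    refine ⟨h1.symm, h3', h2, ?_⟩
    have : ({x, v, u} : Finset (Fin (n+1))) = {x, u, v} := by
      ext y; simp; tauto
    rw [this]; exact h4
  set N : Fin (n+1) → Finset (Fin (n+1)) :=
    fun v => Finset.univ.filter (fun u => adj v u) with hNdef
  have hmemN : ∀ u v, u ∈ N v ↔ adj v u := by
    intro u v; rw [hNdef]; simp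
  set d : Fin (n+1) → ℕ := fun v => (N v).card with hddef
  have hNsubW : ∀ v, N v ⊆ W := by
    intro v u hu
    rw [hmemN] at hu
    rw [hmemW]
    exact hu.2.2.1
  have hdle : ∀ v, d v ≤ n := by
    intro v
    rw [hddef]
    calc (N v).card ≤ W.card := Finset.card_le_card (hNsubW v)
      _ = n := hWcard
  -- triangle-freeness of the link
  have htf : ∀ a b c', adj a b → adj b c' → adj a c' → False := by
    intro a b c' h1 h2 h3'
    exact hCov ⟨x, a, b, c', h1.2.1.symm, h1.2.2.1.symm, h2.2.2.1.symm,
      h1.1, h3'.1, h2.1, Or.inl rfl, h1.2.2.2, h3'.2.2.2, h2.2.2.2⟩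
  -- generic cardinality of pair-sets
  have hbUcard : ∀ B' : Finset (Fin (n+1)),
      (B'.biUnion (fun v => (N v).image (fun u => (v, u)))).card = ∑ v ∈ B', d v := by
    intro B'
    rw [Finset.card_biUnion]
    · exact Finset.sum_congr rfl fun v _ =>
        Finset.card_image_of_injective _ (fun a b hab => by
          simpa using congrArg Prod.snd hab)
    · intro v hv v' hv' hne
      simp only [Finset.disjoint_left, Finset.mem_image]
      rintro p ⟨u, hu, rfl⟩ ⟨u', hu', hp⟩
      exact hne (by simpa using (congrArg Prod.fst hp).symm)
  -- extracting the two non-x vertices of an edge through x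
  have hpairx : ∀ e ∈ H, x ∈ e → ∃ q : (Fin (n+1)) × (Fin (n+1)),
      adj q.1 q.2 ∧ e = {x, q.1, q.2} := by
    intro e heH hxe
    have hc2 : (e.erase x).card = 2 := by
      rw [Finset.card_erase_of_mem hxe, h3 e heH]
    obtain ⟨u, v, huv, heq⟩ := Finset.card_eq_two.mp hc2
    have hu : u ∈ e.erase x := by rw [heq]; exact Finset.mem_insert_self _ _
    have hv : v ∈ e.erase x := by rw [heq]; simp
    have hux : u ≠ x := (Finset.mem_erase.mp hu).1
    have hvx : v ≠ x := (Finset.mem_erase.mp hv).1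
    have hee : e = {x, u, v} := by
      rw [← Finset.insert_erase hxe, heq]
    exact ⟨(u, v), ⟨huv, hux, hvx, by rw [← hee]; exact heH⟩, hee⟩
  -- each vertex v has at most d v edges through both v and x
  have hfiber : ∀ v, v ≠ x → (H.filter (fun e => v ∈ e ∧ x ∈ e)).card ≤ d v := by
    intro v hvx
    have hrecon : ∀ e0 ∈ H.filter (fun e => v ∈ e ∧ x ∈ e),
        insert x (insert v ((e0.erase x).erase v)) = e0 := by
      intro e0 h0
      rw [Finset.mem_filter] at h0
      rw [Finset.insert_erase (Finset.mem_erase.mpr ⟨hvx, h0.2.1⟩), Finset.insert_erase h0.2.2]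
    have himg : (H.filter (fun e => v ∈ e ∧ x ∈ e)).image (fun e => (e.erase x).erase v)
        ⊆ (N v).image (fun u => ({u} : Finset (Fin (n+1)))) := by
      intro s hs
      rw [Finset.mem_image] at hs
      obtain ⟨e, he, rfl⟩ := hs
      rw [Finset.mem_filter] at he
      obtain ⟨heH, hve, hxe⟩ := he
      have hc : ((e.erase x).erase v).card = 1 := by
        rw [Finset.card_erase_of_mem (Finset.mem_erase.mpr ⟨hvx, hve⟩),
          Finset.card_erase_of_mem hxe, h3 e heH]
      obtain ⟨u, hu⟩ := Finset.card_eq_one.mp hc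
      have hu_mem : u ∈ (e.erase x).erase v := by rw [hu]; simp
      have huv : u ≠ v := (Finset.mem_erase.mp hu_mem).1
      have hux : u ≠ x := (Finset.mem_erase.mp (Finset.mem_erase.mp hu_mem).2).1
      have hue : u ∈ e := (Finset.mem_erase.mp (Finset.mem_erase.mp hu_mem).2).2
      have hcard3 : ({x, v, u} : Finset (Fin (n+1))).card = 3 := by
        rw [Finset.card_insert_of_notMem (by simp [Ne.symm hvx, Ne.symm hux]),
          Finset.card_insert_of_notMem (by simp [Ne.symm huv]), Finset.card_singleton]
      have hsub : ({x, v, u} : Finset (Fin (n+1))) ⊆ e := by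
        intro y hy
        simp only [Finset.mem_insert, Finset.mem_singleton] at hy
        rcases hy with rfl | rfl | rfl <;> assumption
      have hee : ({x, v, u} : Finset (Fin (n+1))) = e :=
        Finset.eq_of_subset_of_card_le hsub (by rw [h3 e heH, hcard3])
      rw [Finset.mem_image]
      exact ⟨u, (hmemN u v).mpr ⟨Ne.symm huv, hvx, hux, by rw [hee]; exact heH⟩, hu.symm⟩
    have hinj : Set.InjOn (fun e : Finset (Fin (n+1)) => (e.erase x).erase v)
        ((H.filter (fun e => v ∈ e ∧ x ∈ e) : Finset (Finset (Fin (n+1)))) :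
          Set (Finset (Fin (n+1)))) := by
      intro e he e' he' heq
      rw [Finset.mem_coe] at he he'
      have heq' : (e.erase x).erase v = (e'.erase x).erase v := heq
      rw [← hrecon e he, ← hrecon e' he', heq']
    calc (H.filter (fun e => v ∈ e ∧ x ∈ e)).card
        = ((H.filter (fun e => v ∈ e ∧ x ∈ e)).image (fun e => (e.erase x).erase v)).card :=
          (Finset.card_image_of_injOn hinj).symm
      _ ≤ ((N v).image (fun u => ({u} : Finset (Fin (n+1))))).card := Finset.card_le_card himg
      _ ≤ (N v).card := Finset.card_image_le
  -- Step 1: lower bound on the total link degree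
  have hstep1 : 2 * hdeg H x ≤ ∑ v ∈ W, d v := by
    have hcount : ∑ v ∈ W, (H.filter (fun e => v ∈ e ∧ x ∈ e)).card = 2 * hdeg H x := by
      have h1 : ∀ v : Fin (n+1), (H.filter (fun e => v ∈ e ∧ x ∈ e)).card
          = ∑ e ∈ H.filter (fun e => x ∈ e), (if v ∈ e then 1 else 0) := by
        intro v
        rw [Finset.card_filter, Finset.sum_filter]
        apply Finset.sum_congr rfl
        intro e _
        by_cases h1 : v ∈ e <;> by_cases h2 : x ∈ e <;> simp [h1, h2]
      calc ∑ v ∈ W, (H.filter (fun e => v ∈ e ∧ x ∈ e)).card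
          = ∑ v ∈ W, ∑ e ∈ H.filter (fun e => x ∈ e), (if v ∈ e then 1 else 0) :=
            Finset.sum_congr rfl fun v _ => h1 v
        _ = ∑ e ∈ H.filter (fun e => x ∈ e), ∑ v ∈ W, (if v ∈ e then 1 else 0) :=
            Finset.sum_comm
        _ = ∑ e ∈ H.filter (fun e => x ∈ e), (W.filter (fun v => v ∈ e)).card :=
            Finset.sum_congr rfl fun e _ => (Finset.card_filter _ _).symm
        _ = ∑ _e ∈ H.filter (fun e => x ∈ e), 2 := by
            apply Finset.sum_congr rfl
            intro e he
            rw [Finset.mem_filter] at he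
            have hWe : W.filter (fun v => v ∈ e) = e.erase x := by
              ext y
              simp only [Finset.mem_filter, Finset.mem_erase, hmemW y]
              try tauto
            rw [hWe, Finset.card_erase_of_mem he.2, h3 e he.1]
        _ = 2 * hdeg H x := by
            rw [Finset.sum_const, smul_eq_mul, hdeg]
            try rw [mul_comm]
    rw [← hcount]
    apply Finset.sum_le_sum
    intro v hv
    exact hfiber v ((hmemW v).mp hv)
  -- Step 2: the per-vertex counting inequality
  have tri1 : ∀ a b : Fin (n+1), ({a, x, b} : Finset (Fin (n+1))) = {x, a, b} := by
    intro a b; ext y; simp; tauto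
  have hpv : ∀ v ∈ W, hdeg H v + Nat.choose (d v) 2 + (∑ u ∈ N v, (d u - 1))
      ≤ d v + Nat.choose n 2 := by
    intro v hvW
    have hvx : v ≠ x := (hmemW v).mp hvW
    have hsplit : hdeg H v = (H.filter (fun e => v ∈ e ∧ x ∈ e)).card
        + (H.filter (fun e => v ∈ e ∧ x ∉ e)).card := by
      rw [hdeg, ← Finset.filter_filter, ← Finset.filter_filter]
      exact (Finset.card_filter_add_card_filter_not (p := fun e => x ∈ e)).symm
    set Av := (H.filter (fun e => v ∈ e ∧ x ∉ e)).image (fun e => e.erase v) with hAvdef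
    have hAvcard : Av.card = (H.filter (fun e => v ∈ e ∧ x ∉ e)).card := by
      apply Finset.card_image_of_injOn
      intro e he e' he' heq
      rw [Finset.mem_coe, Finset.mem_filter] at he he'
      have heq' : e.erase v = e'.erase v := heq
      rw [← Finset.insert_erase he.2.1, ← Finset.insert_erase he'.2.1, heq']
    set E1 := Finset.powersetCard 2 (N v) with hE1def
    have hE1card : E1.card = Nat.choose (d v) 2 := by rw [hE1def, Finset.card_powersetCard]
    set E2 := (N v).biUnion (fun u => ((N u).erase v).image
        (fun z => ({u, z} : Finset (Fin (n+1))))) with hE2def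
    have hdisjE2 : ∀ u1 ∈ N v, ∀ u2 ∈ N v, u1 ≠ u2 →
        Disjoint (((N u1).erase v).image (fun z => ({u1, z} : Finset (Fin (n+1)))))
          (((N u2).erase v).image (fun z => ({u2, z} : Finset (Fin (n+1))))) := by
      intro u1 h1 u2 h2 hne
      rw [Finset.disjoint_left]
      rintro s hs1 hs2
      rw [Finset.mem_image] at hs1 hs2
      obtain ⟨z1, hz1, rfl⟩ := hs1
      obtain ⟨z2, hz2, heq⟩ := hs2
      have hu2 : u2 ∈ ({u1, z1} : Finset (Fin (n+1))) := by rw [← heq]; simp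
      have hz1Nu : z1 ∈ N u1 := Finset.mem_of_mem_erase hz1
      rcases Finset.mem_insert.mp hu2 with h | h
      · exact hne h.symm
      · rw [Finset.mem_singleton] at h
        rw [← h] at hz1Nu
        exact htf v u1 u2 ((hmemN _ _).mp h1) ((hmemN _ _).mp hz1Nu) ((hmemN _ _).mp h2)
    have hE2card : E2.card = ∑ u ∈ N v, (d u - 1) := by
      rw [hE2def, Finset.card_biUnion hdisjE2]
      apply Finset.sum_congr rfl
      intro u hu
      have hvNu : v ∈ N u := (hmemN v u).mpr (hadj_symm _ _ ((hmemN u v).mp hu))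
      rw [Finset.card_image_of_injOn, Finset.card_erase_of_mem hvNu]
      intro z1 h1 z2 h2 heq
      have h1' : z1 ∈ N u := Finset.mem_of_mem_erase (Finset.mem_coe.mp h1)
      have hz1u : z1 ≠ u := Ne.symm ((hmemN z1 u).mp h1').1
      have heq' : ({u, z1} : Finset (Fin (n+1))) = {u, z2} := heq
      have : z1 ∈ ({u, z2} : Finset (Fin (n+1))) := by rw [← heq']; simp
      rcases Finset.mem_insert.mp this with h | h
      · exact absurd h hz1u
      · rwa [Finset.mem_singleton] at h
    have hsubX : Av ∪ E1 ∪ E2 ⊆ Finset.powersetCard 2 (Finset.univ.erase v) := by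
      intro s hs
      rw [Finset.mem_powersetCard]
      rcases Finset.mem_union.mp hs with hs' | hs2
      · rcases Finset.mem_union.mp hs' with hsA | hsE1
        · rw [hAvdef, Finset.mem_image] at hsA
          obtain ⟨e, he, rfl⟩ := hsA
          rw [Finset.mem_filter] at he
          constructor
          · exact Finset.erase_subset_erase v (Finset.subset_univ e)
          · rw [Finset.card_erase_of_mem he.2.1, h3 e he.1]
        · rw [hE1def, Finset.mem_powersetCard] at hsE1
          refine ⟨hsE1.1.trans (fun u hu => Finset.mem_erase.mpr
            ⟨Ne.symm ((hmemN u v).mp hu).1, Finset.mem_univ u⟩), hsE1.2⟩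
      · rw [hE2def, Finset.mem_biUnion] at hs2
        obtain ⟨u, hu, hs2'⟩ := hs2
        rw [Finset.mem_image] at hs2'
        obtain ⟨z, hz, rfl⟩ := hs2'
        have hadj_vu := (hmemN u v).mp hu
        have hzv : z ≠ v := (Finset.mem_erase.mp hz).1
        have hadj_uz := (hmemN z u).mp (Finset.mem_of_mem_erase hz)
        constructor
        · intro y hy
          rcases Finset.mem_insert.mp hy with rfl | hy
          · exact Finset.mem_erase.mpr ⟨Ne.symm hadj_vu.1, Finset.mem_univ _⟩
          · rw [Finset.mem_singleton] at hy; subst hy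
            exact Finset.mem_erase.mpr ⟨hzv, Finset.mem_univ _⟩
        · rw [Finset.card_insert_of_notMem (by simp [hadj_uz.1]), Finset.card_singleton]
    have hdAE1 : Disjoint Av E1 := by
      rw [Finset.disjoint_left]
      intro s hsA hsE1
      rw [hAvdef, Finset.mem_image] at hsA
      obtain ⟨e, he, rfl⟩ := hsA
      rw [Finset.mem_filter] at he
      obtain ⟨heH, hve, hxe⟩ := he
      rw [hE1def, Finset.mem_powersetCard] at hsE1
      obtain ⟨α, β, hαβ, heq⟩ := Finset.card_eq_two.mp hsE1.2
      have hαN : α ∈ N v := hsE1.1 (by rw [heq]; simp)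
      have hβN : β ∈ N v := hsE1.1 (by rw [heq]; simp)
      have hadjα := (hmemN α v).mp hαN
      have hadjβ := (hmemN β v).mp hβN
      have hee : e = {v, α, β} := by rw [← Finset.insert_erase hve, heq]
      apply hCov
      refine ⟨v, x, α, β, hvx, hadjα.1, hadjβ.1, Ne.symm hadjα.2.2.1, Ne.symm hadjβ.2.2.1, hαβ,
        Or.inr (Or.inl rfl), ?_, ?_, ?_⟩
      · rw [tri1]; exact hadjα.2.2.2
      · rw [tri1]; exact hadjβ.2.2.2
      · rw [← hee]; exact heH
    have hdAE2 : Disjoint Av E2 := by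
      rw [Finset.disjoint_left]
      intro s hsA hsE2
      rw [hAvdef, Finset.mem_image] at hsA
      obtain ⟨e, he, rfl⟩ := hsA
      rw [Finset.mem_filter] at he
      obtain ⟨heH, hve, hxe⟩ := he
      rw [hE2def, Finset.mem_biUnion] at hsE2
      obtain ⟨u, hu, hs2'⟩ := hsE2
      rw [Finset.mem_image] at hs2'
      obtain ⟨z, hz, heq⟩ := hs2'
      have hadj_vu := (hmemN u v).mp hu
      have hzv : z ≠ v := (Finset.mem_erase.mp hz).1
      have hadj_uz := (hmemN z u).mp (Finset.mem_of_mem_erase hz)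
      have heq' : e.erase v = ({u, z} : Finset (Fin (n+1))) := heq.symm
      have hee : e = {v, u, z} := by rw [← Finset.insert_erase hve, heq']
      apply hCov
      refine ⟨u, x, v, z, hadj_vu.2.2.1, Ne.symm hadj_vu.1, hadj_uz.1, Ne.symm hvx,
        Ne.symm hadj_uz.2.2.1, Ne.symm hzv, Or.inr (Or.inl rfl), ?_, ?_, ?_⟩
      · have : ({u, x, v} : Finset (Fin (n+1))) = {x, v, u} := by ext y; simp; tauto
        rw [this]; exact hadj_vu.2.2.2
      · rw [tri1]; exact hadj_uz.2.2.2
      · have : ({u, v, z} : Finset (Fin (n+1))) = {v, u, z} := by ext y; simp; tauto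
        rw [this, ← hee]; exact heH
    have hdE1E2 : Disjoint E1 E2 := by
      rw [Finset.disjoint_left]
      intro s hsE1 hsE2
      rw [hE1def, Finset.mem_powersetCard] at hsE1
      rw [hE2def, Finset.mem_biUnion] at hsE2
      obtain ⟨u, hu, hs2'⟩ := hsE2
      rw [Finset.mem_image] at hs2'
      obtain ⟨z, hz, heq⟩ := hs2'
      have hadj_uz := (hmemN z u).mp (Finset.mem_of_mem_erase hz)
      have hzN : z ∈ N v := hsE1.1 (by rw [← heq]; simp)
      have huN : u ∈ N v := hsE1.1 (by rw [← heq]; simp)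
      exact htf v u z ((hmemN _ _).mp huN) hadj_uz ((hmemN _ _).mp hzN)
    have hcardunion : (Av ∪ E1 ∪ E2).card = Av.card + E1.card + E2.card := by
      rw [Finset.card_union_of_disjoint (Finset.disjoint_union_left.mpr ⟨hdAE2, hdE1E2⟩),
        Finset.card_union_of_disjoint hdAE1]
    have hXcard : (Finset.powersetCard 2 (Finset.univ.erase v)).card = Nat.choose n 2 := by
      rw [Finset.card_powersetCard, Finset.card_erase_of_mem (Finset.mem_univ v),
        Finset.card_univ, Fintype.card_fin]
      simp
    have hle := Finset.card_le_card hsubX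
    rw [hcardunion, hXcard, hAvcard, hE1card, hE2card] at hle
    have h1 := hfiber v hvx
    omega
  -- Step 3: swapping the double sum
  have hNx : d x = 0 := by
    rw [hddef]
    simp only []
    rw [Finset.card_eq_zero, hNdef]
    simp only []
    apply Finset.filter_false_of_mem
    intro u _ hadj
    exact hadj.2.1 rfl
  have hfiltN : ∀ u : Fin (n+1), W.filter (fun v => u ∈ N v) = N u := by
    intro u
    ext v
    rw [Finset.mem_filter, hmemN, hmemN, hmemW]
    constructor
    · rintro ⟨-, h⟩; exact hadj_symm _ _ h
    · intro h
      have h' := hadj_symm _ _ h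
      exact ⟨h'.2.1, h'⟩
  have hswap : ∑ v ∈ W, ∑ u ∈ N v, (d u - 1) = ∑ u ∈ W, (d u - 1) * d u := by
    calc ∑ v ∈ W, ∑ u ∈ N v, (d u - 1)
        = ∑ v ∈ W, ∑ u ∈ Finset.univ, (if u ∈ N v then d u - 1 else 0) := by
          apply Finset.sum_congr rfl
          intro v _
          rw [Finset.sum_ite_mem, Finset.univ_inter]
      _ = ∑ u ∈ Finset.univ, ∑ v ∈ W, (if u ∈ N v then d u - 1 else 0) := Finset.sum_comm
      _ = ∑ u ∈ Finset.univ, (d u - 1) * d u := by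
          apply Finset.sum_congr rfl
          intro u _
          rw [← Finset.sum_filter, Finset.sum_const, hfiltN, smul_eq_mul, mul_comm]
      _ = ∑ u ∈ W, (d u - 1) * d u := by
          symm
          apply Finset.sum_subset (Finset.subset_univ W)
          intro u _ hu
          have hux : u = x := by
            by_contra h; exact hu ((hmemW u).mpr h)
          rw [hux, hNx, Nat.mul_zero]
  -- Step 4: the summed inequality
  have hsumN : (∑ v ∈ W, hdeg H v) + (∑ v ∈ W, Nat.choose (d v) 2)
      + (∑ u ∈ W, (d u - 1) * d u) ≤ (∑ v ∈ W, d v) + n * Nat.choose n 2 := by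
    have h0 := Finset.sum_le_sum hpv
    rw [Finset.sum_add_distrib, Finset.sum_add_distrib, Finset.sum_add_distrib,
      Finset.sum_const, hWcard, smul_eq_mul, hswap] at h0
    exact h0
  -- move to the reals
  set Dr : ℝ := ∑ v ∈ W, ((d v : ℕ) : ℝ) with hDrdef
  set Qr : ℝ := ∑ v ∈ W, ((d v : ℕ) : ℝ)^2 with hQrdef
  have hDub : Dr ≤ (n:ℝ)^2 := by
    rw [hDrdef]
    calc ∑ v ∈ W, ((d v : ℕ) : ℝ) ≤ ∑ v ∈ W, (n:ℝ) := by
          apply Finset.sum_le_sum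
          intro v _
          exact_mod_cast hdle v
      _ = (n:ℝ)^2 := by rw [Finset.sum_const, hWcard, nsmul_eq_mul]; ring
  have hDnn : 0 ≤ Dr := by
    rw [hDrdef]
    apply Finset.sum_nonneg
    intro v _
    positivity
  have hDlb : (c - δ) * (n:ℝ)^2 ≤ Dr := by
    have h1 := hdegH x
    have h2 : ((2 * hdeg H x : ℕ) : ℝ) ≤ ((∑ v ∈ W, d v : ℕ) : ℝ) := Nat.cast_le.mpr hstep1
    rw [Nat.cast_mul, Nat.cast_sum] at h2
    rw [hDrdef]
    push_cast at h2 ⊢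
    linarith
  have hcast_choose : ((∑ v ∈ W, Nat.choose (d v) 2 : ℕ) : ℝ) = (Qr - Dr)/2 := by
    rw [Nat.cast_sum]
    have hper : ∀ v ∈ W, ((Nat.choose (d v) 2 : ℕ):ℝ)
        = (((d v : ℕ):ℝ)^2 - ((d v : ℕ):ℝ))/2 := by
      intro v _
      rw [Nat.cast_choose_two]
      ring
    rw [Finset.sum_congr rfl hper, ← Finset.sum_div, Finset.sum_sub_distrib,
      hQrdef, hDrdef]
  have hcast_sq : ((∑ u ∈ W, (d u - 1) * d u : ℕ) : ℝ) = Qr - Dr := by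
    rw [Nat.cast_sum]
    have hper : ∀ u ∈ W, (((d u - 1) * d u : ℕ):ℝ)
        = ((d u : ℕ):ℝ)^2 - ((d u : ℕ):ℝ) := by
      intro u _
      rcases Nat.eq_zero_or_pos (d u) with h | h
      · rw [h]; simp
      · rw [Nat.cast_mul, Nat.cast_sub h]
        push_cast
        ring
    rw [Finset.sum_congr rfl hper, Finset.sum_sub_distrib, hQrdef, hDrdef]
  have hsum_hdeg : (n:ℝ) * ((c - δ) * (n:ℝ)^2 / 2) ≤ ((∑ v ∈ W, hdeg H v : ℕ) : ℝ) := by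
    rw [Nat.cast_sum]
    calc (n:ℝ) * ((c - δ) * (n:ℝ)^2 / 2) = ∑ _v ∈ W, ((c - δ) * (n:ℝ)^2 / 2) := by
          rw [Finset.sum_const, hWcard, nsmul_eq_mul]
      _ ≤ ∑ v ∈ W, ((hdeg H v : ℕ) : ℝ) := Finset.sum_le_sum (fun v _ => hdegH v)
  have hchoose_n : ((n * Nat.choose n 2 : ℕ) : ℝ) ≤ (n:ℝ)^3 / 2 := by
    rw [Nat.cast_mul, Nat.cast_choose_two]
    have : (n:ℝ) * ((n:ℝ) * ((n:ℝ) - 1) / 2) ≤ (n:ℝ)^3/2 := by nlinarith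
    linarith
  have hQub : Qr ≤ (c^2 + δ/3) * (n:ℝ)^3 + (5/3) * (n:ℝ)^2 := by
    have h0 : ((∑ v ∈ W, hdeg H v : ℕ) : ℝ) + ((∑ v ∈ W, Nat.choose (d v) 2 : ℕ) : ℝ)
        + ((∑ u ∈ W, (d u - 1) * d u : ℕ) : ℝ)
        ≤ ((∑ v ∈ W, d v : ℕ) : ℝ) + ((n * Nat.choose n 2 : ℕ) : ℝ) := by
      have := (Nat.cast_le (α := ℝ)).mpr hsumN
      push_cast at this ⊢
      convert this using 2 <;> push_cast <;> ring
    rw [hcast_choose, hcast_sq] at h0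
    have hD' : ((∑ v ∈ W, d v : ℕ) : ℝ) = Dr := by rw [Nat.cast_sum, hDrdef]
    rw [hD'] at h0
    have hcsq' : (1 - c)*(n:ℝ)^3 = 3*c^2*(n:ℝ)^3 := by rw [hcsq]
    linarith [hsum_hdeg, hchoose_n, hDub, hcsq', h0]
  -- Step 5: variance bound
  have hn3 : (0:ℝ) < (n:ℝ)^3 := by positivity
  have hδsmall : δ ≤ 0.001 := le_trans hδ1 (by norm_num)
  have hcd_nn : 0 ≤ c - δ := by linarith
  have hvar : ∑ v ∈ W, (((d v : ℕ):ℝ) - Dr/n)^2 ≤ (3/2) * δ * (n:ℝ)^3 := by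
    have hexp : ∑ v ∈ W, (((d v:ℕ):ℝ) - Dr/n)^2
        = Qr - 2*(Dr/(n:ℝ))*Dr + (n:ℝ)*(Dr/n)^2 := by
      have hper : ∀ v ∈ W, (((d v:ℕ):ℝ) - Dr/n)^2
          = ((d v:ℕ):ℝ)^2 - 2*(Dr/(n:ℝ))*((d v:ℕ):ℝ) + (Dr/n)^2 := fun v _ => by ring
      rw [Finset.sum_congr rfl hper, Finset.sum_add_distrib, Finset.sum_sub_distrib,
        ← Finset.mul_sum, Finset.sum_const, hWcard, nsmul_eq_mul, hQrdef, hDrdef]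
    have heq2 : Qr - 2*(Dr/(n:ℝ))*Dr + (n:ℝ)*(Dr/n)^2 = Qr - Dr^2/n := by
      field_simp
      ring
    rw [hexp, heq2]
    have hD2 : (c - δ)^2 * (n:ℝ)^3 ≤ Dr^2/(n:ℝ) := by
      rw [le_div_iff₀ hnRpos]
      have h1 : (c-δ)*(n:ℝ)^2 * ((c-δ)*(n:ℝ)^2) ≤ Dr * Dr :=
        mul_le_mul hDlb hDlb (by positivity) hDnn
      linarith [h1]
    have h53 : (5/3:ℝ)*(n:ℝ)^2 ≤ (1/6)*δ*(n:ℝ)^3 := by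
      have h10 := mul_le_mul_of_nonneg_right hnδ' (sq_nonneg (n:ℝ))
      linarith [h10]
    have h2c : 2*c*δ ≤ δ := by
      linarith [mul_nonneg (sub_nonneg.mpr hcub) hδpos.le]
    have hkey : (c^2 + δ/3) - (c-δ)^2 ≤ (4/3)*δ := by nlinarith [h2c, sq_nonneg δ]
    have hkey' : ((c^2 + δ/3) - (c-δ)^2) * (n:ℝ)^3 ≤ ((4/3)*δ) * (n:ℝ)^3 :=
      mul_le_mul_of_nonneg_right hkey hn3.le
    linarith [hQub, hD2, h53, hkey']
  -- Step 6: the bad set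
  set B := W.filter (fun v => ((d v : ℕ):ℝ) < (c - 3/200) * n) with hBdef
  have hmu : (c - δ)*(n:ℝ) ≤ Dr/n := by
    rw [le_div_iff₀ hnRpos]
    calc (c-δ)*(n:ℝ)*(n:ℝ) = (c-δ)*(n:ℝ)^2 := by ring
      _ ≤ Dr := hDlb
  have hBcard : (B.card : ℝ) ≤ 26667 * δ * (n:ℝ) := by
    have hper : ∀ v ∈ B, ((3/400:ℝ)*(n:ℝ))^2 ≤ (((d v:ℕ):ℝ) - Dr/n)^2 := by
      intro v hv
      rw [hBdef, Finset.mem_filter] at hv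
      have hdv := hv.2
      have hgap : (3/400:ℝ)*(n:ℝ) ≤ Dr/n - ((d v:ℕ):ℝ) := by
        have h1 := mul_le_mul_of_nonneg_right (le_refl ((3/400:ℝ))) hnRpos.le
        linarith [hmu, hdv, hδsmall, mul_le_mul_of_nonneg_right (show δ ≤ 3/400 by linarith) hnRpos.le]
      have ha : (0:ℝ) ≤ (3/400:ℝ)*(n:ℝ) := by positivity
      calc ((3/400:ℝ)*(n:ℝ))^2 ≤ (Dr/n - ((d v:ℕ):ℝ))^2 := pow_le_pow_left₀ ha hgap 2
        _ = (((d v:ℕ):ℝ) - Dr/n)^2 := by ring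
    have hsumB : (B.card:ℝ) * ((3/400:ℝ)*(n:ℝ))^2 ≤ (3/2)*δ*(n:ℝ)^3 := by
      calc (B.card:ℝ) * ((3/400:ℝ)*(n:ℝ))^2 = ∑ _v ∈ B, ((3/400:ℝ)*(n:ℝ))^2 := by
            rw [Finset.sum_const, nsmul_eq_mul]
        _ ≤ ∑ v ∈ B, (((d v:ℕ):ℝ) - Dr/n)^2 := Finset.sum_le_sum hper
        _ ≤ ∑ v ∈ W, (((d v:ℕ):ℝ) - Dr/n)^2 :=
            Finset.sum_le_sum_of_subset_of_nonneg (Finset.filter_subset _ _)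
              (fun v _ _ => sq_nonneg _)
        _ ≤ (3/2)*δ*(n:ℝ)^3 := hvar
    have hn2 : (0:ℝ) < (n:ℝ)^2 := by positivity
    have h' : (B.card:ℝ) * (9/160000) * (n:ℝ)^2 ≤ ((3/2)*δ*(n:ℝ)) * (n:ℝ)^2 := by
      calc (B.card:ℝ) * (9/160000) * (n:ℝ)^2 = (B.card:ℝ) * ((3/400:ℝ)*(n:ℝ))^2 := by ring
        _ ≤ (3/2)*δ*(n:ℝ)^3 := hsumB
        _ = ((3/2)*δ*(n:ℝ)) * (n:ℝ)^2 := by ring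
    have h'' : (B.card:ℝ) * (9/160000) ≤ (3/2)*δ*(n:ℝ) := by
      have := le_of_mul_le_mul_right h' hn2
      linarith [this]
    have hδn : 0 ≤ δ * (n:ℝ) := by positivity
    linarith [h'', hδn]
  -- Step 7: apply AES off the bad set
  set U := W \ B with hUdef
  have hBsubW : B ⊆ W := Finset.filter_subset _ _
  have hUcard : U.card ≤ n := le_trans (Finset.card_le_card Finset.sdiff_subset) hWcard.le
  set G' : SimpleGraph (Fin (n+1)) :=
    { Adj := fun u v => adj u v ∧ u ∉ B ∧ v ∉ B
      symm := by
        constructor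
        intro u v h
        exact ⟨hadj_symm _ _ h.1, h.2.2, h.2.1⟩
      loopless := by
        constructor
        intro u h
        exact h.1.1 rfl } with hG'def
  have hG'adj : ∀ u v, G'.Adj u v ↔ (adj u v ∧ u ∉ B ∧ v ∉ B) := fun u v => Iff.rfl
  set N' : Fin (n+1) → Finset (Fin (n+1)) := fun v => if v ∈ B then ∅ else (N v) \ B
    with hN'def
  have hN' : ∀ u v, u ∈ N' v ↔ G'.Adj v u := by
    intro u v
    rw [hG'adj, hN'def]
    by_cases hv : v ∈ B
    · simp [hv]
    · simp only [hv, if_false, Finset.mem_sdiff, hmemN]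
      tauto
  have htf' : ∀ a b c', G'.Adj a b → G'.Adj b c' → G'.Adj a c' → False := by
    intro a b c' h1 h2 h3'
    exact htf a b c' h1.1 h2.1 h3'.1
  have hsupp' : ∀ a b, G'.Adj a b → a ∈ U := by
    intro a b h
    rw [hUdef, Finset.mem_sdiff]
    exact ⟨(hmemW a).mpr h.1.2.1, h.2.1⟩
  have hdegS' : ∀ v ∈ U, 2 * U.card < 5 * (N' v).card := by
    intro v hv
    rw [hUdef, Finset.mem_sdiff] at hv
    obtain ⟨hvW, hvB⟩ := hv
    have hdv : (c - 3/200) * (n:ℝ) ≤ ((d v:ℕ):ℝ) := by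
      by_contra h
      push_neg at h
      exact hvB (by rw [hBdef, Finset.mem_filter]; exact ⟨hvW, h⟩)
    have hNv' : (N' v) = (N v) \ B := by rw [hN'def]; simp [hvB]
    have hcard' : d v ≤ (N' v).card + B.card := by
      rw [hNv', hddef]
      exact Finset.card_le_card_sdiff_add_card
    have h1 : (c - 3/200)*(n:ℝ) - 26667*δ*(n:ℝ) ≤ ((N' v).card : ℝ) := by
      have h2 := (Nat.cast_le (α := ℝ)).mpr hcard'
      push_cast at h2
      linarith [hBcard, hdv]
    have h2 : ((2 * U.card : ℕ) : ℝ) < ((5 * (N' v).card : ℕ) :ℝ) := by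
      have hU' : ((U.card:ℕ):ℝ) ≤ (n:ℝ) := by exact_mod_cast hUcard
      have hc_n : 0.434*(n:ℝ) ≤ c*(n:ℝ) := mul_le_mul_of_nonneg_right hclb hnRpos.le
      have hδb : 133335*δ ≤ (0.014:ℝ) := by
        calc (133335:ℝ)*δ ≤ 133335*(1/10^7) := by linarith [hδ1]
          _ ≤ 0.014 := by norm_num
      have hδbn : 133335*δ*(n:ℝ) ≤ 0.014*(n:ℝ) := mul_le_mul_of_nonneg_right hδb hnRpos.le
      push_cast
      linarith [h1, hU', hc_n, hδbn, hnR1]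
    exact_mod_cast h2
  obtain ⟨C, hC⟩ := aes G' N' hN' U htf' hsupp' hdegS'
  -- Step 8: the partition
  set S1 := B ∪ U.filter (fun v => C v = true) with hS1def
  set T1 := U.filter (fun v => C v = false) with hT1def
  refine ⟨S1, T1, ?_, ?_, ?_⟩
  · rw [Finset.disjoint_left]
    intro a ha ha'
    rw [hT1def, Finset.mem_filter] at ha'
    have haB : a ∉ B := by
      have := ha'.1
      rw [hUdef, Finset.mem_sdiff] at this
      exact this.2
    rcases Finset.mem_union.mp ha with h | h
    · exact haB h
    · rw [Finset.mem_filter] at h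
      exact absurd (h.2.symm.trans ha'.2) (by simp)
  · have hsplitU : U.filter (fun v => C v = true) ∪ U.filter (fun v => C v = false) = U := by
      ext a
      simp only [Finset.mem_union, Finset.mem_filter]
      constructor
      · rintro (⟨h', -⟩ | ⟨h', -⟩) <;> exact h'
      · intro h'
        rcases Bool.eq_false_or_eq_true (C a) with hb | hb
        · exact Or.inl ⟨h', hb⟩
        · exact Or.inr ⟨h', hb⟩
    rw [hS1def, hT1def, Finset.union_assoc, hsplitU, hUdef,
      Finset.union_sdiff_of_subset hBsubW]
  · -- the count of bad edges
    set K := H.filter (fun e => x ∈ e ∧ ((e \ {x}) ⊆ S1 ∨ (e \ {x}) ⊆ T1)) with hKdef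
    have hKnonempty : ∀ e ∈ K, ∃ b ∈ B, b ∈ e := by
      intro e he
      rw [hKdef, Finset.mem_filter] at he
      obtain ⟨heH, hxe, hor⟩ := he
      obtain ⟨q, hq, hee⟩ := hpairx e heH hxe
      have hq1x : q.1 ≠ x := hq.2.1
      have hq2x : q.2 ≠ x := hq.2.2.1
      have herase : e \ {x} = {q.1, q.2} := by
        have hxnot : x ∉ ({q.1, q.2} : Finset (Fin (n+1))) := by
          intro hx
          rcases Finset.mem_insert.mp hx with h | h
          · exact hq1x h.symm
          · exact hq2x ((Finset.mem_singleton.mp h).symm)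
        rw [Finset.sdiff_singleton_eq_erase, hee, Finset.erase_insert hxnot]
      by_contra hno
      push_neg at hno
      have hq1B : q.1 ∉ B := fun hb => hno q.1 hb (by rw [hee]; simp)
      have hq2B : q.2 ∉ B := fun hb => hno q.2 hb (by rw [hee]; simp)
      have hadj' : G'.Adj q.1 q.2 := ⟨hq, hq1B, hq2B⟩
      have hq1U : q.1 ∈ U := hsupp' _ _ hadj'
      have hq2U : q.2 ∈ U := hsupp' _ _ (hadj'.symm)
      have hCne := hC _ _ hadj'
      rcases hor with hsub | hsub
      · have h1 : q.1 ∈ S1 := hsub (by rw [herase]; simp)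
        have h2 : q.2 ∈ S1 := hsub (by rw [herase]; simp)
        rw [hS1def, Finset.mem_union] at h1 h2
        have hc1 : C q.1 = true := by
          rcases h1 with h | h
          · exact absurd h hq1B
          · exact (Finset.mem_filter.mp h).2
        have hc2 : C q.2 = true := by
          rcases h2 with h | h
          · exact absurd h hq2B
          · exact (Finset.mem_filter.mp h).2
        exact hCne (hc1.trans hc2.symm)
      · have h1 : q.1 ∈ T1 := hsub (by rw [herase]; simp)
        have h2 : q.2 ∈ T1 := hsub (by rw [herase]; simp)
        rw [hT1def, Finset.mem_filter] at h1 h2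
        exact hCne (h1.2.trans h2.2.symm)
    have hKbound : K.card ≤ ∑ v ∈ B, d v := by
      have hswapK : ∑ v ∈ B, (K.filter (fun e => v ∈ e)).card
          = ∑ e ∈ K, (B.filter (fun v => v ∈ e)).card := by
        calc ∑ v ∈ B, (K.filter (fun e => v ∈ e)).card
            = ∑ v ∈ B, ∑ e ∈ K, (if v ∈ e then 1 else 0) :=
              Finset.sum_congr rfl fun v _ => Finset.card_filter _ _
          _ = ∑ e ∈ K, ∑ v ∈ B, (if v ∈ e then 1 else 0) := Finset.sum_comm
          _ = ∑ e ∈ K, (B.filter (fun v => v ∈ e)).card :=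
              Finset.sum_congr rfl fun e _ => (Finset.card_filter _ _).symm
      have hlow : K.card ≤ ∑ v ∈ B, (K.filter (fun e => v ∈ e)).card := by
        rw [hswapK]
        calc K.card = ∑ _e ∈ K, 1 := by rw [Finset.sum_const, smul_eq_mul, mul_one]
          _ ≤ ∑ e ∈ K, (B.filter (fun v => v ∈ e)).card := by
              apply Finset.sum_le_sum
              intro e he
              obtain ⟨b, hbB, hbe⟩ := hKnonempty e he
              rw [Nat.succ_le_iff, Finset.card_pos]
              exact ⟨b, Finset.mem_filter.mpr ⟨hbB, hbe⟩⟩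
      have hup : ∀ v ∈ B, (K.filter (fun e => v ∈ e)).card ≤ d v := by
        intro v hvB
        have hvx : v ≠ x := (hmemW v).mp (hBsubW hvB)
        refine le_trans (Finset.card_le_card ?_) (hfiber v hvx)
        intro e he
        rw [Finset.mem_filter] at he
        obtain ⟨heK, hve⟩ := he
        rw [hKdef, Finset.mem_filter] at heK
        exact Finset.mem_filter.mpr ⟨heK.1, hve, heK.2.1⟩
      exact le_trans hlow (Finset.sum_le_sum hup)
    have hKn : K.card ≤ B.card * n := by
      calc K.card ≤ ∑ v ∈ B, d v := hKbound
        _ ≤ B.card * n := by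
            rw [← smul_eq_mul]
            exact Finset.sum_le_card_nsmul B _ n (fun v _ => hdle v)
    have hfinal : (K.card : ℝ) ≤ ε * (n:ℝ)^2 := by
      have h1 : (K.card : ℝ) ≤ (B.card : ℝ) * (n:ℝ) := by
        have := (Nat.cast_le (α := ℝ)).mpr hKn
        push_cast at this
        linarith
      have h2 : (B.card : ℝ) * (n:ℝ) ≤ 26667*δ*(n:ℝ)*(n:ℝ) :=
        mul_le_mul_of_nonneg_right hBcard hnRpos.le
      have h3 : 26667*δ ≤ ε := by linarith [hδε, hε]
      have h4 : 26667*δ*(n:ℝ)*(n:ℝ) ≤ ε*(n:ℝ)^2 := by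
        calc 26667*δ*(n:ℝ)*(n:ℝ) = (26667*δ)*(n:ℝ)^2 := by ring
          _ ≤ ε*(n:ℝ)^2 := mul_le_mul_of_nonneg_right h3 (sq_nonneg _)
      linarith
    exact hfinal
end

section
/- For every n ∈ ℕ divisible by 54 there exists a simple graph G on n vertices such that every vertex of G has degree exactly 19n/27 and every vertex of G is contained in exactly 4n²/27 triangles. -/
set_option maxRecDepth 40000

namespace Stmt4X

def p (a : ZMod 54) : Prop := a.val % 3 ≠ 0 ∨ a.val = 24 ∨ a.val = 30

instance : DecidablePred p := fun a => by unfold p; infer_instance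

def A : Finset (ZMod 54) := Finset.univ.filter p

lemma A_card : A.card = 38 := by decide

lemma p_neg : ∀ a : ZMod 54, p a → p (-a) := by decide

lemma p_zero : ¬ p (0 : ZMod 54) := by decide

def D : Finset (ZMod 54 × ZMod 54) :=
  Finset.univ.filter (fun q => p q.1 ∧ p q.2 ∧ p (q.2 - q.1))

set_option maxHeartbeats 1000000 in
lemma D_card : D.card = 864 := by decide

def adj (n : ℕ) (x y : Fin n) : Prop := p ((x.val : ZMod 54) - (y.val : ZMod 54))

instance (n : ℕ) : DecidableRel (adj n) := fun x y => by unfold adj; infer_instance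

lemma adj_symm (n : ℕ) {x y : Fin n} (h : adj n x y) : adj n y x := by
  have := p_neg _ h
  rwa [neg_sub] at this

lemma adj_ne (n : ℕ) {x y : Fin n} (h : adj n x y) : x ≠ y := by
  rintro rfl
  rw [adj, sub_self] at h
  exact p_zero h

def G (n : ℕ) : SimpleGraph (Fin n) where
  Adj := adj n
  symm := ⟨fun _ _ => adj_symm n⟩
  loopless := ⟨fun _ h => adj_ne n h rfl⟩

lemma div54_lt (m : ℕ) (y : Fin (54*m)) : y.val / 54 < m := by
  have := y.isLt; omega

lemma add_bound (m : ℕ) (r : ZMod 54) (k : Fin m) : r.val + 54*k.val < 54*m := by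
  have := ZMod.val_lt r; have := k.isLt; omega

lemma fib (m : ℕ) (r : ZMod 54) :
    (Finset.univ.filter fun y : Fin (54*m) => ((y.val : ZMod 54)) = r).card = m := by
  have h54 : ((54 : ℕ) : ZMod 54) = 0 := by decide
  have main : (Finset.univ.filter fun y : Fin (54*m) => ((y.val : ZMod 54)) = r).card
      = (Finset.univ : Finset (Fin m)).card := by
    refine Finset.card_nbij' (fun y => (⟨y.val / 54, div54_lt m y⟩ : Fin m))
      (fun k => (⟨r.val + 54*k.val, add_bound m r k⟩ : Fin (54*m))) ?_ ?_ ?_ ?_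
    · intro y _
      exact Finset.mem_univ _
    · intro k _
      simp only [Finset.mem_coe, Finset.mem_filter, Finset.mem_univ, true_and]
      push_cast
      have h54' : (54 : ZMod 54) = 0 := by decide
      rw [h54']
      simp [ZMod.natCast_val, ZMod.cast_id]
    · intro y hy
      simp only [Finset.mem_coe, Finset.mem_filter, Finset.mem_univ, true_and] at hy
      have : ((y.val : ℕ) : ZMod 54).val = r.val := by rw [hy]
      rw [ZMod.val_natCast] at this
      apply Fin.ext
      simp only []
      omega
    · intro k _
      have := ZMod.val_lt r
      apply Fin.ext
      simp only []
      omega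
  rw [main, Finset.card_univ, Fintype.card_fin]

lemma fib' (m : ℕ) (x : Fin (54*m)) (c : ZMod 54) :
    (Finset.univ.filter fun y : Fin (54*m) =>
      (x.val : ZMod 54) - (y.val : ZMod 54) = c).card = m := by
  have : (Finset.univ.filter fun y : Fin (54*m) =>
      (x.val : ZMod 54) - (y.val : ZMod 54) = c)
      = (Finset.univ.filter fun y : Fin (54*m) =>
      ((y.val : ZMod 54)) = (x.val : ZMod 54) - c) := by
    apply Finset.filter_congr
    intro y _
    constructor
    · intro h; rw [← h]; ring
    · intro h; rw [h]; ring
  rw [this, fib]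

lemma fib2 (m : ℕ) (x : Fin (54*m)) (q : ZMod 54 × ZMod 54) :
    (Finset.univ.filter fun pr : Fin (54*m) × Fin (54*m) =>
      (x.val : ZMod 54) - (pr.1.val : ZMod 54) = q.1 ∧
      (x.val : ZMod 54) - (pr.2.val : ZMod 54) = q.2).card = m * m := by
  have : (Finset.univ.filter fun pr : Fin (54*m) × Fin (54*m) =>
      (x.val : ZMod 54) - (pr.1.val : ZMod 54) = q.1 ∧
      (x.val : ZMod 54) - (pr.2.val : ZMod 54) = q.2)
      = (Finset.univ.filter fun y : Fin (54*m) =>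
          (x.val : ZMod 54) - (y.val : ZMod 54) = q.1) ×ˢ
        (Finset.univ.filter fun y : Fin (54*m) =>
          (x.val : ZMod 54) - (y.val : ZMod 54) = q.2) := by
    ext pr
    simp only [Finset.mem_filter, Finset.mem_univ, true_and, Finset.mem_product]
  rw [this, Finset.card_product, fib', fib']

lemma deg (m : ℕ) (x : Fin (54*m)) :
    (Finset.univ.filter fun y => adj (54*m) x y).card = 38 * m := by
  rw [Finset.card_eq_sum_card_fiberwise
      (f := fun y : Fin (54*m) => (x.val : ZMod 54) - (y.val : ZMod 54)) (t := A)
      (fun y hy => by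
        simp only [Finset.mem_coe, Finset.mem_filter, Finset.mem_univ, true_and] at hy
        rw [Finset.mem_coe, A, Finset.mem_filter]
        exact ⟨Finset.mem_univ _, hy⟩)]
  rw [Finset.sum_congr rfl (fun b hb => ?_), Finset.sum_const, A_card, smul_eq_mul]
  have hpb : p b := (Finset.mem_filter.1 hb).2
  rw [Finset.filter_filter]
  have : (Finset.univ.filter fun y : Fin (54*m) =>
      adj (54*m) x y ∧ (x.val : ZMod 54) - (y.val : ZMod 54) = b)
      = Finset.univ.filter fun y : Fin (54*m) =>
      (x.val : ZMod 54) - (y.val : ZMod 54) = b := by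
    apply Finset.filter_congr
    intro y _
    exact ⟨And.right, fun h => ⟨by unfold adj; rw [h]; exact hpb, h⟩⟩
  rw [this, fib']

lemma Qcard (m : ℕ) (x : Fin (54*m)) :
    (Finset.univ.filter fun pr : Fin (54*m) × Fin (54*m) =>
      adj (54*m) x pr.1 ∧ adj (54*m) x pr.2 ∧ adj (54*m) pr.1 pr.2).card
      = 864 * (m * m) := by
  have key : ∀ pr : Fin (54*m) × Fin (54*m),
      ((x.val : ZMod 54) - (pr.2.val : ZMod 54)) - ((x.val : ZMod 54) - (pr.1.val : ZMod 54))
        = (pr.1.val : ZMod 54) - (pr.2.val : ZMod 54) := by intro pr; ring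
  rw [Finset.card_eq_sum_card_fiberwise
      (f := fun pr : Fin (54*m) × Fin (54*m) =>
        ((x.val : ZMod 54) - (pr.1.val : ZMod 54), (x.val : ZMod 54) - (pr.2.val : ZMod 54)))
      (t := D)
      (fun pr hpr => by
        simp only [Finset.mem_coe, Finset.mem_filter, Finset.mem_univ, true_and] at hpr
        obtain ⟨h1, h2, h3⟩ := hpr
        rw [Finset.mem_coe, D, Finset.mem_filter]
        exact ⟨Finset.mem_univ _, h1, h2, by rw [key pr]; exact h3⟩)]
  rw [Finset.sum_congr rfl (fun b hb => ?_), Finset.sum_const, D_card, smul_eq_mul]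
  have hpb := (Finset.mem_filter.1 hb).2
  rw [Finset.filter_filter]
  have : (Finset.univ.filter fun pr : Fin (54*m) × Fin (54*m) =>
      (adj (54*m) x pr.1 ∧ adj (54*m) x pr.2 ∧ adj (54*m) pr.1 pr.2) ∧
      ((x.val : ZMod 54) - (pr.1.val : ZMod 54), (x.val : ZMod 54) - (pr.2.val : ZMod 54)) = b)
      = Finset.univ.filter fun pr : Fin (54*m) × Fin (54*m) =>
      (x.val : ZMod 54) - (pr.1.val : ZMod 54) = b.1 ∧
      (x.val : ZMod 54) - (pr.2.val : ZMod 54) = b.2 := by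
    apply Finset.filter_congr
    intro pr _
    rw [Prod.ext_iff]
    constructor
    · exact And.right
    · rintro ⟨e1, e2⟩
      refine ⟨⟨?_, ?_, ?_⟩, e1, e2⟩
      · unfold adj; rw [e1]; exact hpb.1
      · unfold adj; rw [e2]; exact hpb.2.1
      · unfold adj; rw [← key pr, e1, e2]; exact hpb.2.2
  rw [this, fib2]

lemma Pcard (m : ℕ) (x : Fin (54*m)) :
    (Finset.univ.filter fun pr : Fin (54*m) × Fin (54*m) =>
      (adj (54*m) x pr.1 ∧ adj (54*m) x pr.2 ∧ adj (54*m) pr.1 pr.2) ∧ pr.1 < pr.2).card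
      = 432 * (m * m) := by
  set Q := Finset.univ.filter fun pr : Fin (54*m) × Fin (54*m) =>
      adj (54*m) x pr.1 ∧ adj (54*m) x pr.2 ∧ adj (54*m) pr.1 pr.2 with hQ
  have hsplit := Finset.card_filter_add_card_filter_not
    (s := Q) (p := fun pr : Fin (54*m) × Fin (54*m) => pr.1 < pr.2)
  have hswap : (Q.filter fun pr => ¬ pr.1 < pr.2).card
      = (Q.filter fun pr => pr.1 < pr.2).card := by
    refine Finset.card_nbij' Prod.swap Prod.swap ?_ ?_ ?_ ?_
    · intro pr hpr
      simp only [hQ, Finset.mem_coe, Finset.mem_filter, Finset.mem_univ, true_and] at hpr ⊢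
      obtain ⟨⟨h1, h2, h3⟩, h4⟩ := hpr
      have hne : pr.1 ≠ pr.2 := adj_ne _ h3
      exact ⟨⟨h2, h1, adj_symm _ h3⟩, lt_of_le_of_ne (not_lt.1 h4) hne.symm⟩
    · intro pr hpr
      simp only [hQ, Finset.mem_coe, Finset.mem_filter, Finset.mem_univ, true_and] at hpr ⊢
      obtain ⟨⟨h1, h2, h3⟩, h4⟩ := hpr
      exact ⟨⟨h2, h1, adj_symm _ h3⟩, not_lt.2 (le_of_lt h4)⟩
    · intro pr _; exact Prod.swap_swap pr
    · intro pr _; exact Prod.swap_swap pr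
  have hq := Qcard m x
  rw [← hQ] at hq
  have hfilter : (Q.filter fun pr => pr.1 < pr.2)
      = Finset.univ.filter fun pr : Fin (54*m) × Fin (54*m) =>
      (adj (54*m) x pr.1 ∧ adj (54*m) x pr.2 ∧ adj (54*m) pr.1 pr.2) ∧ pr.1 < pr.2 := by
    rw [hQ, Finset.filter_filter]
  rw [← hfilter]
  omega

end Stmt4X

/-- The triangle-degree of a vertex `x` in a simple graph `G`: the number of
unordered triples of pairwise adjacent vertices containing `x`. -/
noncomputable def triDeg {V : Type*} (G : SimpleGraph V) (x : V) : ℕ :=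
  {t : Finset V | t.card = 3 ∧ x ∈ t ∧ ∀ a ∈ t, ∀ b ∈ t, a ≠ b → G.Adj a b}.ncard

theorem stmt4 (n : ℕ) (hn : 54 ∣ n) :
    ∃ G : SimpleGraph (Fin n),
      (∀ x : Fin n, (G.neighborSet x).ncard = 19 * n / 27) ∧
      (∀ x : Fin n, triDeg G x = 4 * n ^ 2 / 27) := by
  classical
  obtain ⟨m, rfl⟩ := hn
  refine ⟨Stmt4X.G (54*m), ?_, ?_⟩
  · intro x
    have hset : (Stmt4X.G (54*m)).neighborSet x
        = ↑(Finset.univ.filter fun y => Stmt4X.adj (54*m) x y) := by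
      ext y
      simp [SimpleGraph.mem_neighborSet, Stmt4X.G]
    rw [hset, Set.ncard_coe_finset, Stmt4X.deg]
    omega
  · intro x
    set F : Finset (Finset (Fin (54*m))) := Finset.univ.filter
      (fun t => t.card = 3 ∧ x ∈ t ∧
        ∀ a ∈ t, ∀ b ∈ t, a ≠ b → (Stmt4X.G (54*m)).Adj a b) with hF
    have hset : {t : Finset (Fin (54*m)) | t.card = 3 ∧ x ∈ t ∧
        ∀ a ∈ t, ∀ b ∈ t, a ≠ b → (Stmt4X.G (54*m)).Adj a b} = ↑F := by
      ext t
      simp [hF]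
    rw [triDeg, hset, Set.ncard_coe_finset]
    have hcard : F.card = (Finset.univ.filter fun pr : Fin (54*m) × Fin (54*m) =>
        (Stmt4X.adj (54*m) x pr.1 ∧ Stmt4X.adj (54*m) x pr.2 ∧
          Stmt4X.adj (54*m) pr.1 pr.2) ∧ pr.1 < pr.2).card := by
      symm
      apply Finset.card_bij (i := fun pr _ => ({x, pr.1, pr.2} : Finset (Fin (54*m))))
      · -- maps into F
        intro pr hpr
        simp only [Finset.mem_filter, Finset.mem_univ, true_and] at hpr
        obtain ⟨⟨h1, h2, h3⟩, h4⟩ := hpr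
        have hx1 : x ≠ pr.1 := Stmt4X.adj_ne _ h1
        have hx2 : x ≠ pr.2 := Stmt4X.adj_ne _ h2
        have h12 : pr.1 ≠ pr.2 := Stmt4X.adj_ne _ h3
        simp only [hF, Finset.mem_filter, Finset.mem_univ, true_and]
        refine ⟨?_, ?_, ?_⟩
        · rw [Finset.card_insert_of_notMem (by simp [hx1, hx2]),
            Finset.card_insert_of_notMem (by simp [h12]), Finset.card_singleton]
        · simp
        · intro a ha b hb hab
          have h1' := Stmt4X.adj_symm _ h1
          have h2' := Stmt4X.adj_symm _ h2
          have h3' := Stmt4X.adj_symm _ h3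
          simp only [Finset.mem_insert, Finset.mem_singleton] at ha hb
          rcases ha with rfl | rfl | rfl <;> rcases hb with rfl | rfl | rfl <;>
            first
              | exact absurd rfl hab
              | assumption
      · -- injective
        intro pr hpr qr hqr heq
        simp only [Finset.mem_filter, Finset.mem_univ, true_and] at hpr hqr
        obtain ⟨⟨hp1, hp2, hp3⟩, hp4⟩ := hpr
        obtain ⟨⟨hq1, hq2, hq3⟩, hq4⟩ := hqr
        have hx1 : x ≠ pr.1 := Stmt4X.adj_ne _ hp1
        have hx2 : x ≠ pr.2 := Stmt4X.adj_ne _ hp2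
        have hy1 : x ≠ qr.1 := Stmt4X.adj_ne _ hq1
        have hy2 : x ≠ qr.2 := Stmt4X.adj_ne _ hq2
        have m1 : pr.1 ∈ ({x, qr.1, qr.2} : Finset (Fin (54*m))) := by
          rw [← heq]; simp
        have m2 : pr.2 ∈ ({x, qr.1, qr.2} : Finset (Fin (54*m))) := by
          rw [← heq]; simp
        simp only [Finset.mem_insert, Finset.mem_singleton] at m1 m2
        rcases m1 with e1 | e1 | e1
        · exact absurd e1.symm hx1
        · rcases m2 with e2 | e2 | e2
          · exact absurd e2.symm hx2
          · rw [e1, e2] at hp4; exact absurd hp4 (lt_irrefl _)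
          · exact Prod.ext e1 e2
        · rcases m2 with e2 | e2 | e2
          · exact absurd e2.symm hx2
          · rw [e1, e2] at hp4; exact absurd (hp4.trans hq4) (lt_irrefl _)
          · rw [e1, e2] at hp4; exact absurd hp4 (lt_irrefl _)
      · -- surjective
        intro t ht
        simp only [hF, Finset.mem_filter, Finset.mem_univ, true_and] at ht
        obtain ⟨hcard3, hxt, hadj⟩ := ht
        have h2 : (t.erase x).card = 2 := by
          rw [Finset.card_erase_of_mem hxt, hcard3]
        obtain ⟨a, b, hab, habs⟩ := Finset.card_eq_two.1 h2
        have hat : a ∈ t := Finset.mem_of_mem_erase (habs ▸ Finset.mem_insert_self a {b})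
        have hbt : b ∈ t := Finset.mem_of_mem_erase
          (habs ▸ Finset.mem_insert_of_mem (Finset.mem_singleton_self b))
        have hax : a ≠ x := Finset.ne_of_mem_erase (habs ▸ Finset.mem_insert_self a {b})
        have hbx : b ≠ x := Finset.ne_of_mem_erase
          (habs ▸ Finset.mem_insert_of_mem (Finset.mem_singleton_self b))
        have hxa : Stmt4X.adj (54*m) x a := hadj x hxt a hat hax.symm
        have hxb : Stmt4X.adj (54*m) x b := hadj x hxt b hbt hbx.symm
        have hab' : Stmt4X.adj (54*m) a b := hadj a hat b hbt hab
        have htins : t = {x, a, b} := by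
          rw [← Finset.insert_erase hxt, habs]
        rcases lt_or_gt_of_ne hab with hlt | hgt
        · refine ⟨(a, b), ?_, ?_⟩
          · simp only [Finset.mem_filter, Finset.mem_univ, true_and]
            exact ⟨⟨hxa, hxb, hab'⟩, hlt⟩
          · rw [htins]
        · refine ⟨(b, a), ?_, ?_⟩
          · simp only [Finset.mem_filter, Finset.mem_univ, true_and]
            exact ⟨⟨hxb, hxa, Stmt4X.adj_symm _ hab'⟩, hgt⟩
          · rw [htins]
            ext c
            simp only [Finset.mem_insert, Finset.mem_singleton]
            tauto
    rw [hcard, Stmt4X.Pcard]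
    have hsq : (54*m)^2 = 2916 * (m*m) := by ring
    rw [hsq]
    omega
end

section
/- For every ε > 0 there exists n0 such that for all n ≥ n0 there is a 3-graph H on n+1 vertices with minimum vertex degree δ1(H) ≥ (19/27 − ε)·C(n−1, 2) in which some vertex is not covered by any copy of K4^{(3)}. Consequently c1(K4^{(3)}) ≥ 19/27, where c1(F) := limsup_{n→∞} c1(n, F)/C(n−1, 2). -/
open Finset

/-- Vertex `x` is covered by a copy of the complete 3-graph `K_t⁽³⁾` in `H`. -/
def CovK {V : Type*} [DecidableEq V] (t : ℕ) (H : Finset (Finset V)) (x : V) : Prop :=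
  ∃ S : Finset V, x ∈ S ∧ S.card = t ∧ ∀ e ⊆ S, e.card = 3 → e ∈ H

/-- `c₁(n, K_t⁽³⁾)`: the maximum of `δ₁(G)` over `n`-vertex 3-graphs `G` having
no `K_t⁽³⁾`-covering. -/
noncomputable def c1K (t n : ℕ) : ℕ :=
  sSup {d : ℕ | ∃ H : Finset (Finset (Fin n)),
    (∀ e ∈ H, e.card = 3) ∧ (∃ x, ¬ CovK t H x) ∧ d = minDeg H}

/-- `c₁(K_t⁽³⁾) = limsup_{n → ∞} c₁(n, K_t⁽³⁾)/C(n−1, 2)`. -/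
noncomputable def c1Kdens (t : ℕ) : ℝ :=
  Filter.limsup (fun n : ℕ => (c1K t n : ℝ) / ((n - 1).choose 2 : ℝ)) Filter.atTop

namespace Stmt5Aux

/-- parameters -/
def Mp (n : ℕ) : ℕ := n / 3 - (n / 3) % 2   -- even part size used internally
def Dp (n : ℕ) : ℕ := 2 * (n / 54)          -- internal degree (even)

abbrev good (D k : ℕ) : Prop := k % 2 = 1 ∧ k ≤ D

/-- internal adjacency on positions within a part -/
abbrev intadj (M D a b : ℕ) : Prop :=
  a < M ∧ b < M ∧ (good D ((b + (M - a)) % M) ∨ good D ((a + (M - b)) % M))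

/-- the link graph adjacency on vertex indices -/
abbrev adj (n a b : ℕ) : Prop :=
  a < n ∧ b < n ∧ (¬ a % 3 = b % 3 ∨
    (a % 3 = b % 3 ∧ intadj (Mp n) (Dp n) (a / 3) (b / 3)))

lemma Mp_even (n : ℕ) : Mp n % 2 = 0 := by unfold Mp; omega

lemma intadj_symm {M D a b : ℕ} (h : intadj M D a b) : intadj M D b a := by
  obtain ⟨h1, h2, h3⟩ := h; exact ⟨h2, h1, h3.symm⟩

lemma adj_symm {n a b : ℕ} (h : adj n a b) : adj n b a := by
  obtain ⟨h1, h2, h3⟩ := h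
  refine ⟨h2, h1, ?_⟩
  rcases h3 with h3 | ⟨h3, h4⟩
  · exact Or.inl (fun hh => h3 hh.symm)
  · exact Or.inr ⟨h3.symm, intadj_symm h4⟩

/-- parity of internal adjacency : positions have different parity (M even) -/
lemma intadj_parity {M D a b : ℕ} (hM : M % 2 = 0) (h : intadj M D a b) :
    (a + b) % 2 = 1 := by
  obtain ⟨ha, hb, hc⟩ := h
  have h2M : (2 : ℕ) ∣ M := by omega
  rcases hc with ⟨hodd, -⟩ | ⟨hodd, -⟩
  · have : (b + (M - a)) % 2 = 1 := by
      rw [← Nat.mod_mod_of_dvd _ h2M]; exact hodd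
    omega
  · have : (a + (M - b)) % 2 = 1 := by
      rw [← Nat.mod_mod_of_dvd _ h2M]; exact hodd
    omega

lemma intadj_ne {M D a b : ℕ} (hM : M % 2 = 0) (h : intadj M D a b) : a ≠ b := by
  have := intadj_parity hM h; omega

lemma adj_lt {n a b : ℕ} (h : adj n a b) : a < n ∧ b < n := ⟨h.1, h.2.1⟩

lemma adj_ne {n a b : ℕ} (h : adj n a b) : a ≠ b := by
  obtain ⟨h1, h2, h3⟩ := h
  rcases h3 with h3 | ⟨h3, h4⟩
  · intro he; exact h3 (by rw [he])
  · have := intadj_parity (Mp_even n) h4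
    intro he; rw [he] at this; omega

/-- decoding: if `r = (b + (M - a)) % M` then `b = (a + r) % M`. -/
lemma decode1 {M a b : ℕ} (ha : a < M) (hb : b < M) :
    b = (a + (b + (M - a)) % M) % M := by
  rw [Nat.add_mod_mod, show a + (b + (M - a)) = b + M by omega,
    Nat.add_mod_right, Nat.mod_eq_of_lt hb]

/-- the two offsets sum to 0 or M -/
lemma offsets_sum {M a b : ℕ} (ha : a < M) (hb : b < M) :
    (b + (M - a)) % M + (a + (M - b)) % M = 0 ∨
    (b + (M - a)) % M + (a + (M - b)) % M = M := by
  have hM : 0 < M := by omega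
  have h1 : (b + (M - a)) % M < M := Nat.mod_lt _ hM
  have h2 : (a + (M - b)) % M < M := Nat.mod_lt _ hM
  have h3 : ((b + (M - a)) % M + (a + (M - b)) % M) % M = 0 := by
    rw [Nat.mod_add_mod, Nat.add_mod_mod, show b + (M - a) + (a + (M - b)) = M + M by omega]
    simp [Nat.add_mod_right]
  have h4 : M ∣ ((b + (M - a)) % M + (a + (M - b)) % M) := Nat.dvd_of_mod_eq_zero h3
  obtain ⟨k, hk⟩ := h4
  rcases Nat.lt_or_ge k 2 with hk2 | hk2
  · interval_cases k <;> omega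
  · have : M * 2 ≤ M * k := Nat.mul_le_mul_left _ hk2
    omega

/-- decoding the minus side: if `r = (a + (M - b)) % M` with r ≤ M then
    `b = (a + (M - r)) % M`. -/
lemma decode2 {M a b : ℕ} (ha : a < M) (hb : b < M) :
    b = (a + (M - (a + (M - b)) % M)) % M := by
  have hM : 0 < M := by omega
  have hrM : (a + (M - b)) % M < M := Nat.mod_lt _ hM
  have hbM : (b + (M - a)) % M < M := Nat.mod_lt _ hM
  have key : (b + (M - a)) % M = (M - (a + (M - b)) % M) % M := by
    rcases offsets_sum ha hb with h | h
    · have hb0 : (b + (M - a)) % M = 0 := by omega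
      have hr0 : (a + (M - b)) % M = 0 := by omega
      rw [hb0, hr0]; simp [Nat.mod_self]
    · have h2 : (b + (M - a)) % M = M - (a + (M - b)) % M := by omega
      rw [h2]; exact (Nat.mod_eq_of_lt (by omega)).symm
  have hd := decode1 ha hb
  rw [key] at hd
  rwa [Nat.add_mod_mod] at hd

/-- encoding of a neighbor: returns (k, side) with offset 2k+1 -/
def enc (M D a b : ℕ) : ℕ × Bool :=
  if (b + (M - a)) % M ≤ D then (((b + (M - a)) % M - 1) / 2, true)
  else (((a + (M - b)) % M - 1) / 2, false)

lemma enc_spec {M D a b : ℕ} (hM : M % 2 = 0) (hD : D % 2 = 0)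
    (h : intadj M D a b) :
    2 * (enc M D a b).1 + 1 ≤ D ∧
    b = (if (enc M D a b).2 then (a + (2 * (enc M D a b).1 + 1)) % M
         else (a + (M - (2 * (enc M D a b).1 + 1))) % M) := by
  obtain ⟨ha, hb, hc⟩ := h
  have hM0 : 0 < M := by omega
  have h1 : (b + (M - a)) % M < M := Nat.mod_lt _ hM0
  have h2 : (a + (M - b)) % M < M := Nat.mod_lt _ hM0
  have hsum := offsets_sum ha hb
  by_cases hif : (b + (M - a)) % M ≤ D
  · have hodd : (b + (M - a)) % M % 2 = 1 := by
      rcases hc with ⟨ho, -⟩ | ⟨ho, hle⟩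
      · exact ho
      · omega
    have henc : enc M D a b = (((b + (M - a)) % M - 1) / 2, true) := by
      unfold enc; rw [if_pos hif]
    rw [henc]
    refine ⟨by omega, ?_⟩
    simp only [if_true]
    rw [show 2 * (((b + (M - a)) % M - 1) / 2) + 1 = (b + (M - a)) % M by omega]
    exact decode1 ha hb
  · have hgood : good D ((a + (M - b)) % M) := by
      rcases hc with ⟨ho, hle⟩ | hg
      · omega
      · exact hg
    obtain ⟨ho, hle⟩ := hgood
    have henc : enc M D a b = (((a + (M - b)) % M - 1) / 2, false) := by
      unfold enc; rw [if_neg hif]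
    rw [henc]
    refine ⟨by omega, ?_⟩
    simp only [Bool.false_eq_true, if_false]
    rw [show 2 * (((a + (M - b)) % M - 1) / 2) + 1 = (a + (M - b)) % M by omega]
    exact decode2 ha hb

lemma enc_lt {M D a b : ℕ} (hM : M % 2 = 0) (hD : D % 2 = 0)
    (h : intadj M D a b) : (enc M D a b).1 < D / 2 := by
  have := (enc_spec hM hD h).1; omega

/-- b is determined by a and enc -/
lemma enc_inj {M D a b b' : ℕ} (hM : M % 2 = 0) (hD : D % 2 = 0)
    (h : intadj M D a b) (h' : intadj M D a b')
    (he : enc M D a b = enc M D a b') : b = b' := by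
  have s1 := (enc_spec hM hD h).2
  have s2 := (enc_spec hM hD h').2
  rw [he] at s1
  exact s1.trans s2.symm

/-- constructing neighbors: plus side -/
lemma intadj_plus {M D a k : ℕ} (hM : M % 2 = 0) (ha : a < M) (hDM : D < M)
    (hk : 2 * k + 1 ≤ D) : intadj M D a ((a + (2 * k + 1)) % M) := by
  have hM0 : 0 < M := by omega
  have hb : (a + (2 * k + 1)) % M < M := Nat.mod_lt _ hM0
  refine ⟨ha, hb, Or.inl ?_⟩
  have key : ((a + (2 * k + 1)) % M + (M - a)) % M = 2 * k + 1 := by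
    rw [Nat.mod_add_mod, show a + (2 * k + 1) + (M - a) = (2 * k + 1) + M by omega,
      Nat.add_mod_right, Nat.mod_eq_of_lt (by omega)]
  rw [key]; exact ⟨by omega, hk⟩

/-- constructing neighbors: minus side -/
lemma intadj_minus {M D a k : ℕ} (hM : M % 2 = 0) (ha : a < M) (hDM : D < M)
    (hk : 2 * k + 1 ≤ D) : intadj M D a ((a + (M - (2 * k + 1))) % M) := by
  have hM0 : 0 < M := by omega
  have hb : (a + (M - (2 * k + 1))) % M < M := Nat.mod_lt _ hM0
  refine ⟨ha, hb, Or.inr ?_⟩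
  have h1 : ((a + (M - (2 * k + 1))) % M + (2 * k + 1)) % M = a := by
    rw [Nat.mod_add_mod, show a + (M - (2 * k + 1)) + (2 * k + 1) = a + M by omega,
      Nat.add_mod_right, Nat.mod_eq_of_lt (by omega)]
  have h3 : (a + (M - (a + (M - (2 * k + 1))) % M)) % M
      = (((a + (M - (2 * k + 1))) % M + (2 * k + 1)) % M
          + (M - (a + (M - (2 * k + 1))) % M)) % M := by rw [h1]
  rw [Nat.mod_add_mod,
    show (a + (M - (2 * k + 1))) % M + (2 * k + 1) + (M - (a + (M - (2 * k + 1))) % M)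
       = (2 * k + 1) + M by omega,
    Nat.add_mod_right] at h3
  rw [h3, Nat.mod_eq_of_lt (show 2 * k + 1 < M by omega)]
  exact ⟨by omega, hk⟩

/-- injectivity of the neighbor construction -/
lemma nbr_inj {M D a k1 k2 : ℕ} {s1 s2 : Bool} (hM : M % 2 = 0) (ha : a < M)
    (h2D : 2 * D < M) (hk1 : 2 * k1 + 1 ≤ D) (hk2 : 2 * k2 + 1 ≤ D)
    (he : (if s1 then (a + (2 * k1 + 1)) % M else (a + (M - (2 * k1 + 1))) % M)
        = (if s2 then (a + (2 * k2 + 1)) % M else (a + (M - (2 * k2 + 1))) % M)) :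
    k1 = k2 ∧ s1 = s2 := by
  have hM0 : 0 < M := by omega
  have cancel : ∀ x y : ℕ, x < M → y < M → (a + x) % M = (a + y) % M → x = y := by
    intro x y hx hy hxy
    have : x % M = y % M := Nat.ModEq.add_left_cancel' a hxy
    rwa [Nat.mod_eq_of_lt hx, Nat.mod_eq_of_lt hy] at this
  have mixed : ∀ x y : ℕ, 0 < x → x ≤ D → 0 < y → y ≤ D →
      (a + x) % M ≠ (a + (M - y)) % M := by
    intro x y hx hxD hy hyD hxy
    have e1 := congrArg (fun t => (t + y) % M) hxy
    simp only [Nat.mod_add_mod] at e1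
    rw [show a + (M - y) + y = a + M by omega, Nat.add_mod_right] at e1
    have e2 : (a + (x + y)) % M = (a + 0) % M := by
      rw [Nat.add_zero, ← Nat.add_assoc]; exact e1
    have := cancel (x + y) 0 (by omega) (by omega) e2
    omega
  cases s1 <;> cases s2 <;>
    simp only [Bool.false_eq_true, if_false, if_true] at he
  · exact ⟨by have := cancel _ _ (by omega) (by omega) he; omega, rfl⟩
  · exact absurd he.symm (mixed (2 * k2 + 1) (2 * k1 + 1) (by omega) hk2 (by omega) hk1)
  · exact absurd he (mixed (2 * k1 + 1) (2 * k2 + 1) (by omega) hk1 (by omega) hk2)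
  · exact ⟨by have := cancel _ _ (by omega) (by omega) he; omega, rfl⟩

section Counting
variable {α : Type*} [DecidableEq α]

/-- ordered pair count is twice unordered -/
lemma pair_card (A : Finset (α × α)) (h1 : ∀ p ∈ A, p.1 ≠ p.2)
    (h2 : ∀ p ∈ A, (p.2, p.1) ∈ A) :
    A.card = 2 * (A.image (fun p => ({p.1, p.2} : Finset α))).card := by
  rw [Finset.card_eq_sum_card_fiberwise
    (f := fun p => ({p.1, p.2} : Finset α)) (t := A.image (fun p => ({p.1, p.2} : Finset α)))
    (fun p hp => Finset.mem_image_of_mem _ hp)]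
  have hfib : ∀ e ∈ A.image (fun p => ({p.1, p.2} : Finset α)),
      (A.filter (fun q => ({q.1, q.2} : Finset α) = e)).card = 2 := by
    intro e he
    obtain ⟨p, hp, hpe⟩ := Finset.mem_image.mp he
    have hab : p.1 ≠ p.2 := h1 p hp
    have hset : A.filter (fun q => ({q.1, q.2} : Finset α) = e)
        = {(p.1, p.2), (p.2, p.1)} := by
      ext q
      simp only [Finset.mem_filter, Finset.mem_insert, Finset.mem_singleton]
      constructor
      · rintro ⟨hq, hqe⟩
        rw [← hpe] at hqe
        have hq1 : q.1 ∈ ({p.1, p.2} : Finset α) := by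
          rw [← hqe]; exact Finset.mem_insert_self _ _
        have hq2 : q.2 ∈ ({p.1, p.2} : Finset α) := by
          rw [← hqe]; exact Finset.mem_insert_of_mem (Finset.mem_singleton_self _)
        simp only [Finset.mem_insert, Finset.mem_singleton] at hq1 hq2
        have hqq := h1 q hq
        rcases hq1 with h1' | h1' <;> rcases hq2 with h2' | h2'
        · exact absurd (h1'.trans h2'.symm) hqq
        · exact Or.inl (Prod.ext h1' h2')
        · exact Or.inr (Prod.ext h1' h2')
        · exact absurd (h1'.trans h2'.symm) hqq
      · rintro (rfl | rfl)
        · exact ⟨by simpa using hp, by simpa using hpe⟩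
        · refine ⟨by simpa using h2 p hp, ?_⟩
          simp only
          rw [Finset.pair_comm]; simpa using hpe
    rw [hset]
    rw [Finset.card_insert_of_notMem (by
      simp only [Finset.mem_singleton, Prod.ext_iff]
      rintro ⟨h', -⟩; exact hab h'), Finset.card_singleton]
  rw [Finset.sum_congr rfl hfib, Finset.sum_const, smul_eq_mul, mul_comm]

/-- standard link bijection for powersetCard filters -/
lemma card_pcard_filter (s : Finset α) (v : α) (hv : v ∈ s) (k : ℕ)
    (Q : Finset α → Prop) [DecidablePred Q] :
    ((s.powersetCard (k+1)).filter (fun e => v ∈ e ∧ Q e)).card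
      = (((s.erase v).powersetCard k).filter (fun f => Q (insert v f))).card := by
  apply Finset.card_nbij' (fun e => e.erase v) (fun f => insert v f)
  · intro e he
    simp only [Finset.mem_coe, Finset.mem_filter, Finset.mem_powersetCard] at he ⊢
    obtain ⟨⟨hsub, hcard⟩, hve, hQ⟩ := he
    refine ⟨⟨Finset.erase_subset_erase _ hsub, ?_⟩, ?_⟩
    · rw [Finset.card_erase_of_mem hve, hcard]; omega
    · rw [Finset.insert_erase hve]; exact hQ
  · intro f hf
    simp only [Finset.mem_coe, Finset.mem_filter, Finset.mem_powersetCard] at hf ⊢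
    obtain ⟨⟨hsub, hcard⟩, hQ⟩ := hf
    have hvf : v ∉ f := fun hvf => (Finset.mem_erase.mp (hsub hvf)).1 rfl
    refine ⟨⟨?_, ?_⟩, Finset.mem_insert_self _ _, hQ⟩
    · exact Finset.insert_subset hv (hsub.trans (Finset.erase_subset _ _))
    · rw [Finset.card_insert_of_notMem hvf, hcard]
  · intro e he
    simp only [Finset.mem_coe, Finset.mem_filter] at he
    exact Finset.insert_erase he.2.1
  · intro f hf
    simp only [Finset.mem_coe, Finset.mem_filter, Finset.mem_powersetCard] at hf
    exact Finset.erase_insert (fun hvf => (Finset.mem_erase.mp (hf.1.1 hvf)).1 rfl)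

end Counting

section Graph
open Finset
open scoped Classical
variable (n : ℕ)

def x0 : Fin (n + 1) := Fin.last n

abbrev adjF (u v : Fin (n + 1)) : Prop := adj n u.val v.val

abbrev Tri (e : Finset (Fin (n + 1))) : Prop := ∀ u ∈ e, ∀ v ∈ e, u ≠ v → adjF n u v

noncomputable def Hgraph : Finset (Finset (Fin (n + 1))) :=
  (Finset.univ.powersetCard 3).filter (fun e =>
    (x0 n ∈ e ∧ ∀ u ∈ e, ∀ v ∈ e, u ≠ x0 n → v ≠ x0 n → u ≠ v → adjF n u v)
    ∨ (x0 n ∉ e ∧ ¬ Tri n e))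

lemma Hgraph_card : ∀ e ∈ Hgraph n, e.card = 3 := by
  intro e he
  rw [Hgraph, mem_filter, mem_powersetCard] at he
  exact he.1.2

lemma adjF_ne_x0 {u v : Fin (n + 1)} (h : adjF n u v) : u ≠ x0 n ∧ v ≠ x0 n := by
  obtain ⟨h1, h2, -⟩ := h
  constructor <;> intro hh <;> subst hh <;> simp [x0, Fin.last] at h1 h2 <;> omega

lemma Hgraph_uncovered : ¬ CovK 4 (Hgraph n) (x0 n) := by
  rintro ⟨S, hxS, hS4, hall⟩
  set T := S.erase (x0 n) with hT
  have hT3 : T.card = 3 := by rw [hT, card_erase_of_mem hxS, hS4]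
  have hTH : T ∈ Hgraph n := hall T (erase_subset _ _) hT3
  have hTri : Tri n T := by
    intro u hu v hv huv
    have hux : u ≠ x0 n := (mem_erase.mp hu).1
    have hvx : v ≠ x0 n := (mem_erase.mp hv).1
    have he : ({x0 n, u, v} : Finset (Fin (n+1))) ∈ Hgraph n := by
      apply hall
      · intro w hw
        simp only [mem_insert, mem_singleton] at hw
        rcases hw with rfl | rfl | rfl
        · exact hxS
        · exact (erase_subset _ _) hu
        · exact (erase_subset _ _) hv
      · rw [card_insert_of_notMem (by simp [hux.symm, hvx.symm] : x0 n ∉ ({u, v} : Finset (Fin (n+1)))),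
          card_insert_of_notMem (by simp [huv]), card_singleton]
    rw [Hgraph, mem_filter] at he
    rcases he.2 with ⟨-, hpair⟩ | ⟨hx, -⟩
    · exact hpair u (by simp) v (by simp) hux hvx huv
    · exact absurd (mem_insert_self _ _) hx
  rw [Hgraph, mem_filter] at hTH
  rcases hTH.2 with ⟨hx, -⟩ | ⟨-, hnt⟩
  · exact (mem_erase.mp hx).1 rfl
  · exact hnt hTri

lemma Dp_even : Dp n % 2 = 0 := by unfold Dp; omega

lemma adj_same_part {a b : ℕ} (h : adj n a b) (hp : a % 3 = b % 3) :
    intadj (Mp n) (Dp n) (a / 3) (b / 3) := by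
  rcases h.2.2 with h' | ⟨-, h'⟩
  · exact absurd hp h'
  · exact h'

lemma ne_x0_iff (v : Fin (n + 1)) : v ≠ x0 n ↔ v.val < n := by
  have hx : (x0 n).val = n := rfl
  rw [ne_eq, Fin.ext_iff, hx]
  have := v.isLt
  omega

/-- the set of graph vertices (all but x0) -/
noncomputable def VS : Finset (Fin (n + 1)) := univ.filter (fun u => u.val < n)

lemma card_VS : (VS n).card = n := by
  have : VS n = univ.erase (x0 n) := by
    ext u
    simp only [VS, mem_filter, mem_univ, true_and, mem_erase, and_true]
    rw [← ne_x0_iff]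
  rw [this, card_erase_of_mem (mem_univ _), card_univ, Fintype.card_fin]
  omega

/-- part q of the vertex set -/
noncomputable def Pq (q : ℕ) : Finset (Fin (n + 1)) :=
  univ.filter (fun u => u.val < n ∧ u.val % 3 = q)

lemma card_Pq (q : ℕ) : (Pq n q).card ≤ n / 3 + 1 := by
  have : (Pq n q).card ≤ (range (n / 3 + 1)).card := by
    apply card_le_card_of_injOn (fun u => u.val / 3)
    · intro u hu
      simp only [mem_coe, Pq, mem_filter] at hu
      simp only [mem_coe, mem_range]
      omega
    · intro u hu u' hu' he
      simp only [Pq, mem_filter, mem_coe] at hu hu'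
      simp only at he
      apply Fin.val_injective
      omega
  simpa using this

/-- the ordered triangle count at v -/
noncomputable def Av (v : Fin (n + 1)) : Finset (Fin (n + 1) × Fin (n + 1)) :=
  (univ ×ˢ univ).filter (fun p => p.1 ≠ v ∧ p.2 ≠ v ∧ p.1 ≠ p.2 ∧
    adjF n v p.1 ∧ adjF n v p.2 ∧ adjF n p.1 p.2)

lemma card_Av (v : Fin (n + 1)) (hv : v.val < n) (h2D : 2 * Dp n < Mp n) :
    (Av n v).card ≤ 2 * (n / 3 + 1) ^ 2 + 6 * (Dp n * (n / 3 + 1)) := by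
  classical
  set p := v.val % 3 with hp
  set q1 := (p + 1) % 3 with hq1
  set q2 := (p + 2) % 3 with hq2
  set M := Mp n
  set D := Dp n
  have hMe : M % 2 = 0 := Mp_even n
  have hDe : D % 2 = 0 := Dp_even n
  -- the four covering sets
  set S1 : Finset (Fin (n+1) × Fin (n+1)) := (Pq n q1 ×ˢ Pq n q2) ∪ (Pq n q2 ×ˢ Pq n q1) with hS1
  set S2 : Finset (Fin (n+1) × Fin (n+1)) :=
    (((Pq n q1 ∪ Pq n q2) ×ˢ VS n).filter
      (fun pr => pr.1.val % 3 = pr.2.val % 3 ∧ intadj M D (pr.1.val / 3) (pr.2.val / 3))) with hS2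
  set S3 : Finset (Fin (n+1) × Fin (n+1)) :=
    ((VS n ×ˢ VS n).filter
      (fun pr => pr.1.val % 3 = p ∧ intadj M D (v.val / 3) (pr.1.val / 3) ∧ pr.2.val % 3 ≠ p)) with hS3
  set S4 : Finset (Fin (n+1) × Fin (n+1)) :=
    ((VS n ×ˢ VS n).filter
      (fun pr => pr.2.val % 3 = p ∧ intadj M D (v.val / 3) (pr.2.val / 3) ∧ pr.1.val % 3 ≠ p)) with hS4
  have hmemVS : ∀ u : Fin (n+1), u.val < n → u ∈ VS n := by
    intro u hu; simp [VS, hu]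
  have hmemPq : ∀ (u : Fin (n+1)) (q : ℕ), u.val < n → u.val % 3 = q → u ∈ Pq n q := by
    intro u q hu hq; simp [Pq, hu, hq]
  have hcover : Av n v ⊆ ((S1 ∪ S2) ∪ (S3 ∪ S4)) := by
    intro pr hpr
    simp only [Av, mem_filter, mem_product, mem_univ, true_and] at hpr
    obtain ⟨h1, h2, h3, hvu, hvw, huw⟩ := hpr
    have hun : pr.1.val < n := hvu.2.1
    have hwn : pr.2.val < n := hvw.2.1
    simp only [mem_union]
    by_cases hup : pr.1.val % 3 = p
    · -- u in part p
      have hiu : intadj M D (v.val / 3) (pr.1.val / 3) := adj_same_part n hvu hup.symm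
      have hwp : pr.2.val % 3 ≠ p := by
        intro hwp
        have hiw : intadj M D (v.val / 3) (pr.2.val / 3) := adj_same_part n hvw hwp.symm
        have hiuw : intadj M D (pr.1.val / 3) (pr.2.val / 3) :=
          adj_same_part n huw (by omega)
        have e1 := intadj_parity hMe hiu
        have e2 := intadj_parity hMe hiw
        have e3 := intadj_parity hMe hiuw
        omega
      exact Or.inr (Or.inl (by
        simp only [hS3, mem_filter, mem_product]
        exact ⟨⟨hmemVS _ hun, hmemVS _ hwn⟩, hup, hiu, hwp⟩))
    · by_cases hwp : pr.2.val % 3 = p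
      · have hiw : intadj M D (v.val / 3) (pr.2.val / 3) := adj_same_part n hvw hwp.symm
        exact Or.inr (Or.inr (by
          simp only [hS4, mem_filter, mem_product]
          exact ⟨⟨hmemVS _ hun, hmemVS _ hwn⟩, hwp, hiw, hup⟩))
      · by_cases hsame : pr.1.val % 3 = pr.2.val % 3
        · have hiuw : intadj M D (pr.1.val / 3) (pr.2.val / 3) := adj_same_part n huw hsame
          refine Or.inl (Or.inr ?_)
          simp only [hS2, mem_filter, mem_product, mem_union]
          refine ⟨⟨?_, hmemVS _ hwn⟩, hsame, hiuw⟩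
          have : pr.1.val % 3 = q1 ∨ pr.1.val % 3 = q2 := by omega
          rcases this with h | h
          · exact Or.inl (hmemPq _ _ hun h)
          · exact Or.inr (hmemPq _ _ hun h)
        · refine Or.inl (Or.inl ?_)
          simp only [hS1, mem_union, mem_product]
          have hu12 : pr.1.val % 3 = q1 ∨ pr.1.val % 3 = q2 := by omega
          rcases hu12 with h | h
          · exact Or.inl ⟨hmemPq _ _ hun h, hmemPq _ _ hwn (by omega)⟩
          · exact Or.inr ⟨hmemPq _ _ hun h, hmemPq _ _ hwn (by omega)⟩
  have c1 : S1.card ≤ 2 * (n / 3 + 1) ^ 2 := by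
    calc S1.card ≤ (Pq n q1 ×ˢ Pq n q2).card + (Pq n q2 ×ˢ Pq n q1).card := card_union_le _ _
    _ ≤ 2 * (n / 3 + 1) ^ 2 := by
        rw [card_product, card_product]
        have a1 := card_Pq n q1
        have a2 := card_Pq n q2
        nlinarith
  have c2 : S2.card ≤ 2 * ((n / 3 + 1) * D) := by
    have : S2.card ≤ ((Pq n q1 ∪ Pq n q2) ×ˢ (range (D / 2) ×ˢ (univ : Finset Bool))).card := by
      apply card_le_card_of_injOn
        (fun pr => (pr.1, enc M D (pr.1.val / 3) (pr.2.val / 3)))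
      · intro pr hpr
        simp only [mem_coe, hS2, mem_filter, mem_product] at hpr
        obtain ⟨⟨hu, -⟩, hsame, hint⟩ := hpr
        simp only [mem_coe, mem_product, mem_range]
        exact ⟨hu, enc_lt hMe hDe hint, mem_univ _⟩
      · intro pr hpr pr' hpr' he
        simp only [hS2, mem_filter, mem_product, mem_coe] at hpr hpr'
        obtain ⟨⟨-, hw⟩, hsame, hint⟩ := hpr
        obtain ⟨⟨-, hw'⟩, hsame', hint'⟩ := hpr'
        rw [Prod.ext_iff] at he
        obtain ⟨he1, he2⟩ := he
        simp only at he1 he2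
        refine Prod.ext he1 ?_
        rw [he1] at hint hsame he2
        have hpos : pr.2.val / 3 = pr'.2.val / 3 := enc_inj hMe hDe hint hint' he2
        apply Fin.val_injective
        omega
    calc S2.card ≤ _ := this
    _ ≤ 2 * ((n / 3 + 1) * D) := by
        rw [card_product, card_product, card_range, card_univ]
        simp only [Fintype.card_bool]
        have a1 := card_Pq n q1
        have a2 := card_Pq n q2
        have a3 : (Pq n q1 ∪ Pq n q2).card ≤ (n/3+1) + (n/3+1) := le_trans (card_union_le _ _) (by omega)
        rw [show D / 2 * 2 = D by omega]
        calc (Pq n q1 ∪ Pq n q2).card * D ≤ ((n/3+1) + (n/3+1)) * D := Nat.mul_le_mul_right _ a3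
        _ = 2 * ((n / 3 + 1) * D) := by ring
  have c3 : S3.card ≤ 2 * (Dp n * (n / 3 + 1)) := by
    have hsub : (VS n).filter (fun w => w.val % 3 ≠ p) ⊆ Pq n q1 ∪ Pq n q2 := by
      intro w hw
      simp only [VS, mem_filter, mem_univ, true_and] at hw
      obtain ⟨hwn, hwp⟩ := hw
      simp only [mem_union]
      have : w.val % 3 = q1 ∨ w.val % 3 = q2 := by omega
      rcases this with h | h
      · exact Or.inl (hmemPq _ _ hwn h)
      · exact Or.inr (hmemPq _ _ hwn h)
    have hstep : S3.card ≤ (((range (D / 2) ×ˢ (univ : Finset Bool)))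
        ×ˢ ((VS n).filter (fun w => w.val % 3 ≠ p))).card := by
      apply card_le_card_of_injOn (fun pr => (enc M D (v.val / 3) (pr.1.val / 3), pr.2))
      · intro pr hpr
        simp only [mem_coe, hS3, mem_filter, mem_product] at hpr
        obtain ⟨⟨hu, hw⟩, hup, hint, hwp⟩ := hpr
        simp only [mem_coe, mem_product, mem_range, mem_filter]
        exact ⟨⟨enc_lt hMe hDe hint, mem_univ _⟩, hw, hwp⟩
      · intro pr hpr pr' hpr' he
        simp only [hS3, mem_filter, mem_product, mem_coe] at hpr hpr'
        obtain ⟨⟨hu, hw⟩, hup, hint, hwp⟩ := hpr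
        obtain ⟨⟨hu', hw'⟩, hup', hint', hwp'⟩ := hpr'
        rw [Prod.ext_iff] at he
        obtain ⟨he1, he2⟩ := he
        simp only at he1 he2
        refine Prod.ext ?_ he2
        have hpos : pr.1.val / 3 = pr'.1.val / 3 := enc_inj hMe hDe hint hint' he1
        apply Fin.val_injective
        simp only [VS, mem_filter] at hu hu'
        omega
    have hc : ((VS n).filter (fun w => w.val % 3 ≠ p)).card ≤ (n / 3 + 1) + (n / 3 + 1) := by
      calc ((VS n).filter (fun w => w.val % 3 ≠ p)).card ≤ (Pq n q1 ∪ Pq n q2).card :=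
            card_le_card hsub
      _ ≤ _ := le_trans (card_union_le _ _) (by
            have := card_Pq n q1; have := card_Pq n q2; omega)
    calc S3.card ≤ _ := hstep
    _ ≤ 2 * (Dp n * (n / 3 + 1)) := by
        rw [card_product, card_product, card_range, card_univ]
        simp only [Fintype.card_bool]
        rw [show D / 2 * 2 = D by omega]
        calc D * ((VS n).filter (fun w => w.val % 3 ≠ p)).card
            ≤ D * ((n / 3 + 1) + (n / 3 + 1)) := Nat.mul_le_mul_left _ hc
        _ = 2 * (Dp n * (n / 3 + 1)) := by show D * _ = 2 * (D * _); ring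
  have c4 : S4.card ≤ 2 * (Dp n * (n / 3 + 1)) := by
    have hsub : (VS n).filter (fun w => w.val % 3 ≠ p) ⊆ Pq n q1 ∪ Pq n q2 := by
      intro w hw
      simp only [VS, mem_filter, mem_univ, true_and] at hw
      obtain ⟨hwn, hwp⟩ := hw
      simp only [mem_union]
      have : w.val % 3 = q1 ∨ w.val % 3 = q2 := by omega
      rcases this with h | h
      · exact Or.inl (hmemPq _ _ hwn h)
      · exact Or.inr (hmemPq _ _ hwn h)
    have hstep : S4.card ≤ (((range (D / 2) ×ˢ (univ : Finset Bool)))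
        ×ˢ ((VS n).filter (fun w => w.val % 3 ≠ p))).card := by
      apply card_le_card_of_injOn (fun pr => (enc M D (v.val / 3) (pr.2.val / 3), pr.1))
      · intro pr hpr
        simp only [mem_coe, hS4, mem_filter, mem_product] at hpr
        obtain ⟨⟨hu, hw⟩, hup, hint, hwp⟩ := hpr
        simp only [mem_coe, mem_product, mem_range, mem_filter]
        exact ⟨⟨enc_lt hMe hDe hint, mem_univ _⟩, hu, hwp⟩
      · intro pr hpr pr' hpr' he
        simp only [hS4, mem_filter, mem_product, mem_coe] at hpr hpr'
        obtain ⟨⟨hu, hw⟩, hup, hint, hwp⟩ := hpr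
        obtain ⟨⟨hu', hw'⟩, hup', hint', hwp'⟩ := hpr'
        rw [Prod.ext_iff] at he
        obtain ⟨he1, he2⟩ := he
        simp only at he1 he2
        refine Prod.ext he2 ?_
        have hpos : pr.2.val / 3 = pr'.2.val / 3 := enc_inj hMe hDe hint hint' he1
        apply Fin.val_injective
        simp only [VS, mem_filter] at hw hw'
        omega
    have hc : ((VS n).filter (fun w => w.val % 3 ≠ p)).card ≤ (n / 3 + 1) + (n / 3 + 1) := by
      calc ((VS n).filter (fun w => w.val % 3 ≠ p)).card ≤ (Pq n q1 ∪ Pq n q2).card :=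
            card_le_card hsub
      _ ≤ _ := le_trans (card_union_le _ _) (by
            have := card_Pq n q1; have := card_Pq n q2; omega)
    calc S4.card ≤ _ := hstep
    _ ≤ 2 * (Dp n * (n / 3 + 1)) := by
        rw [card_product, card_product, card_range, card_univ]
        simp only [Fintype.card_bool]
        rw [show D / 2 * 2 = D by omega]
        calc D * ((VS n).filter (fun w => w.val % 3 ≠ p)).card
            ≤ D * ((n / 3 + 1) + (n / 3 + 1)) := Nat.mul_le_mul_left _ hc
        _ = 2 * (Dp n * (n / 3 + 1)) := by show D * _ = 2 * (D * _); ring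
  have hcomm : (n / 3 + 1) * D = Dp n * (n / 3 + 1) := Nat.mul_comm _ _
  calc (Av n v).card ≤ ((S1 ∪ S2) ∪ (S3 ∪ S4)).card := card_le_card hcover
  _ ≤ (S1 ∪ S2).card + (S3 ∪ S4).card := card_union_le _ _
  _ ≤ (S1.card + S2.card) + (S3.card + S4.card) :=
      Nat.add_le_add (card_union_le _ _) (card_union_le _ _)
  _ ≤ 2 * (n / 3 + 1) ^ 2 + 6 * (Dp n * (n / 3 + 1)) := by
      rw [hcomm] at c2
      linarith

/-- main degree bound for non-apex vertices -/
lemma deg_v (v : Fin (n + 1)) (hv : v ≠ x0 n) (h2D : 2 * Dp n < Mp n) :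
    (n - 1).choose 2 ≤ hdeg (Hgraph n) v + ((n / 3 + 1) ^ 2 + 3 * (Dp n * (n / 3 + 1))) := by
  classical
  have hvn : v.val < n := (ne_x0_iff n v).mp hv
  set W : Finset (Fin (n + 1)) := (univ.erase v).erase (x0 n) with hW
  have hWcard : W.card = n - 1 := by
    rw [hW, card_erase_of_mem (mem_erase.mpr ⟨fun h => hv h.symm, mem_univ _⟩),
      card_erase_of_mem (mem_univ _), card_univ, Fintype.card_fin]
    omega
  -- step A: lower bound hdeg by the good triples through v
  have hA : ((univ.powersetCard 3).filter
      (fun e => v ∈ e ∧ (x0 n ∉ e ∧ ¬ Tri n e))).card ≤ hdeg (Hgraph n) v := by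
    unfold hdeg
    apply card_le_card
    intro e he
    simp only [mem_filter] at he ⊢
    obtain ⟨hpc, hve, hxe, hnt⟩ := he
    exact ⟨by rw [Hgraph, mem_filter]; exact ⟨hpc, Or.inr ⟨hxe, hnt⟩⟩, hve⟩
  -- step B: bijection with pairs
  have hB : ((univ.powersetCard 3).filter
      (fun e => v ∈ e ∧ (x0 n ∉ e ∧ ¬ Tri n e))).card
      = (((univ.erase v).powersetCard 2).filter
          (fun f => x0 n ∉ insert v f ∧ ¬ Tri n (insert v f))).card :=
    card_pcard_filter univ v (mem_univ v) 2 (fun e => x0 n ∉ e ∧ ¬ Tri n e)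
  -- step C: remove x0 from the basis
  have hC : (((univ.erase v).powersetCard 2).filter
      (fun f => x0 n ∉ insert v f ∧ ¬ Tri n (insert v f)))
      = ((W.powersetCard 2).filter (fun f => ¬ Tri n (insert v f))) := by
    ext f
    simp only [mem_filter, mem_powersetCard, hW, subset_erase, mem_insert, not_or]
    constructor
    · rintro ⟨⟨hsub, hcard⟩, ⟨hx1, hx2⟩, hnt⟩
      exact ⟨⟨⟨hsub, hx2⟩, hcard⟩, hnt⟩
    · rintro ⟨⟨⟨hsub, hx2⟩, hcard⟩, hnt⟩
      exact ⟨⟨hsub, hcard⟩, ⟨fun h => hv h.symm, hx2⟩, hnt⟩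
  -- step D: splitting
  have hD : ((W.powersetCard 2).filter (fun f => Tri n (insert v f))).card
      + ((W.powersetCard 2).filter (fun f => ¬ Tri n (insert v f))).card
      = (n - 1).choose 2 := by
    rw [card_filter_add_card_filter_not, card_powersetCard, hWcard]
  -- step E: bound the triangles via ordered pairs
  have hE : 2 * ((W.powersetCard 2).filter (fun f => Tri n (insert v f))).card
      ≤ (Av n v).card := by
    have hpc : (Av n v).card
        = 2 * ((Av n v).image (fun p => ({p.1, p.2} : Finset (Fin (n + 1))))).card := by
      apply pair_card
      · intro p hp
        simp only [Av, mem_filter] at hp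
        exact hp.2.2.2.1
      · intro p hp
        simp only [Av, mem_filter, mem_product, mem_univ, true_and] at hp ⊢
        obtain ⟨h1, h2, h3, h4, h5, h6⟩ := hp
        exact ⟨h2, h1, h3.symm, h5, h4, adj_symm h6⟩
    have himg : ((W.powersetCard 2).filter (fun f => Tri n (insert v f)))
        ⊆ (Av n v).image (fun p => ({p.1, p.2} : Finset (Fin (n + 1)))) := by
      intro f hf
      simp only [mem_filter, mem_powersetCard] at hf
      obtain ⟨⟨hsub, hcard2⟩, htri⟩ := hf
      obtain ⟨u, w, huw, rfl⟩ := card_eq_two.mp hcard2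
      have hu : u ∈ W := hsub (mem_insert_self _ _)
      have hw : w ∈ W := hsub (mem_insert_of_mem (mem_singleton_self _))
      have hune : u ≠ v := by
        rw [hW] at hu
        exact (mem_erase.mp (mem_of_mem_erase hu)).1
      have hwne : w ≠ v := by
        rw [hW] at hw
        exact (mem_erase.mp (mem_of_mem_erase hw)).1
      have hvm : v ∈ insert v ({u, w} : Finset (Fin (n + 1))) := mem_insert_self _ _
      have hum : u ∈ insert v ({u, w} : Finset (Fin (n + 1))) := by simp
      have hwm : w ∈ insert v ({u, w} : Finset (Fin (n + 1))) := by simp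
      refine mem_image.mpr ⟨(u, w), ?_, rfl⟩
      simp only [Av, mem_filter, mem_product, mem_univ, true_and]
      exact ⟨hune, hwne, huw, htri v hvm u hum (fun h => hune h.symm),
        htri v hvm w hwm (fun h => hwne h.symm), htri u hum w hwm huw⟩
    have := card_le_card himg
    omega
  have hF := card_Av n v hvn h2D
  rw [hC] at hB
  omega

/-- helper to build vertices -/
def umk (k : ℕ) : Fin (n + 1) := ⟨k % (n + 1), Nat.mod_lt _ (Nat.succ_pos n)⟩

lemma umk_val {k : ℕ} (hk : k ≤ n) : (umk n k).val = k := Nat.mod_eq_of_lt (by omega)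

/-- main degree bound at the apex -/
lemma deg_x (hn : 200 ≤ n) (h2D : 2 * Dp n < Mp n) :
    n * n + 3 * (Mp n * Dp n) ≤ 2 * hdeg (Hgraph n) (x0 n) + 3 * (n / 3 + 1) ^ 2 := by
  classical
  set M := Mp n with hM
  set D := Dp n with hD
  have hMe : M % 2 = 0 := Mp_even n
  have hDe : D % 2 = 0 := Dp_even n
  have h3M : 3 * M ≤ n := by rw [hM]; unfold Mp; omega
  have hDM : D < M := by omega
  set EDG : Finset (Fin (n+1) × Fin (n+1)) :=
    (univ ×ˢ univ).filter (fun p => adjF n p.1 p.2) with hEDG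
  -- (1) ordered = 2 * unordered
  have hpc : EDG.card = 2 * (EDG.image (fun p => ({p.1, p.2} : Finset (Fin (n+1))))).card := by
    apply pair_card
    · intro p hp
      simp only [hEDG, mem_filter] at hp
      intro h
      exact adj_ne hp.2 (by rw [h])
    · intro p hp
      simp only [hEDG, mem_filter, mem_product, mem_univ, true_and] at hp ⊢
      exact adj_symm hp
  -- (2) unordered injects into edges at x0
  have himg : (EDG.image (fun p => ({p.1, p.2} : Finset (Fin (n+1))))).card
      ≤ hdeg (Hgraph n) (x0 n) := by
    unfold hdeg
    apply card_le_card_of_injOn (fun f => insert (x0 n) f)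
    · intro f hf
      obtain ⟨p, hp, rfl⟩ := mem_image.mp hf
      simp only [hEDG, mem_filter, mem_product, mem_univ, true_and] at hp
      have h1 : p.1 ≠ p.2 := fun h => adj_ne hp (by rw [h])
      have hx1 : p.1 ≠ x0 n := (ne_x0_iff n p.1).mpr hp.1
      have hx2 : p.2 ≠ x0 n := (ne_x0_iff n p.2).mpr hp.2.1
      have hxf : x0 n ∉ ({p.1, p.2} : Finset (Fin (n+1))) := by
        simp [hx1.symm, hx2.symm]
      simp only [mem_coe, mem_filter]
      constructor
      · rw [Hgraph, mem_filter, mem_powersetCard]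
        refine ⟨⟨subset_univ _, ?_⟩, Or.inl ⟨mem_insert_self _ _, ?_⟩⟩
        · rw [card_insert_of_notMem hxf, card_insert_of_notMem (by simp [h1]),
            card_singleton]
        · intro a ha b hb hax hbx hab
          simp only [mem_insert, mem_singleton] at ha hb
          rcases ha with rfl | rfl | rfl
          · exact absurd rfl hax
          · rcases hb with rfl | rfl | rfl
            · exact absurd rfl hbx
            · exact absurd rfl hab
            · exact hp
          · rcases hb with rfl | rfl | rfl
            · exact absurd rfl hbx
            · exact adj_symm hp
            · exact absurd rfl hab
      · exact mem_insert_self _ _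
    · intro f hf f' hf' he
      obtain ⟨p, hp, rfl⟩ := mem_image.mp hf
      obtain ⟨p', hp', rfl⟩ := mem_image.mp hf'
      simp only [hEDG, mem_filter, mem_product, mem_univ, true_and] at hp hp'
      have hxf : x0 n ∉ ({p.1, p.2} : Finset (Fin (n+1))) := by
        simp [((ne_x0_iff n p.1).mpr hp.1).symm, ((ne_x0_iff n p.2).mpr hp.2.1).symm]
      have hxf' : x0 n ∉ ({p'.1, p'.2} : Finset (Fin (n+1))) := by
        simp [((ne_x0_iff n p'.1).mpr hp'.1).symm, ((ne_x0_iff n p'.2).mpr hp'.2.1).symm]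
      have := congrArg (fun s => Finset.erase s (x0 n)) he
      simpa [erase_insert hxf, erase_insert hxf'] using this
  -- (3) cross pairs and internal pairs
  set Cross : Finset (Fin (n+1) × Fin (n+1)) :=
    ((VS n ×ˢ VS n).filter (fun p => ¬ p.1.val % 3 = p.2.val % 3)) with hCross
  set Same : Finset (Fin (n+1) × Fin (n+1)) :=
    ((VS n ×ˢ VS n).filter (fun p => p.1.val % 3 = p.2.val % 3)) with hSame
  have hsplit : Same.card + Cross.card = n * n := by
    rw [hSame, hCross, card_filter_add_card_filter_not, card_product, card_VS]
  have hSameBound : Same.card ≤ 3 * (n / 3 + 1) ^ 2 := by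
    have hsub : Same ⊆ (Pq n 0 ×ˢ Pq n 0) ∪ (Pq n 1 ×ˢ Pq n 1) ∪ (Pq n 2 ×ˢ Pq n 2) := by
      intro p hp
      simp only [hSame, mem_filter, mem_product, VS, mem_univ, true_and] at hp
      obtain ⟨⟨h1, h2⟩, h3⟩ := hp
      simp only [mem_union, mem_product, Pq, mem_filter, mem_univ, true_and]
      have : p.1.val % 3 = 0 ∨ p.1.val % 3 = 1 ∨ p.1.val % 3 = 2 := by omega
      rcases this with h | h | h
      · exact Or.inl (Or.inl ⟨⟨h1, h⟩, ⟨h2, by omega⟩⟩)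
      · exact Or.inl (Or.inr ⟨⟨h1, h⟩, ⟨h2, by omega⟩⟩)
      · exact Or.inr ⟨⟨h1, h⟩, ⟨h2, by omega⟩⟩
    calc Same.card ≤ _ := card_le_card hsub
    _ ≤ (Pq n 0 ×ˢ Pq n 0).card + (Pq n 1 ×ˢ Pq n 1).card + (Pq n 2 ×ˢ Pq n 2).card :=
        le_trans (card_union_le _ _) (by have := card_union_le (Pq n 0 ×ˢ Pq n 0) (Pq n 1 ×ˢ Pq n 1); omega)
    _ ≤ 3 * (n / 3 + 1) ^ 2 := by
        rw [card_product, card_product, card_product]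
        have a0 := card_Pq n 0
        have a1 := card_Pq n 1
        have a2 := card_Pq n 2
        nlinarith
  set Internal : Finset (Fin (n+1) × Fin (n+1)) :=
    ((univ ×ˢ univ).filter (fun p => adjF n p.1 p.2 ∧ p.1.val % 3 = p.2.val % 3)) with hInternal
  have hIntBound : 3 * (M * D) ≤ Internal.card := by
    have hinj : ((range (3 * M)) ×ˢ ((range (D / 2)) ×ˢ (univ : Finset Bool))).card
        ≤ Internal.card := by
      apply card_le_card_of_injOn (fun t =>
        (umk n t.1, umk n (3 * (if t.2.2 then (t.1 / 3 + (2 * t.2.1 + 1)) % M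
          else (t.1 / 3 + (M - (2 * t.2.1 + 1))) % M) + t.1 % 3)))
      · intro t ht
        simp only [mem_coe, mem_product, mem_range] at ht
        obtain ⟨hk, hj, -⟩ := ht
        have ha : t.1 / 3 < M := by omega
        have hjD : 2 * t.2.1 + 1 ≤ D := by omega
        have hw : (if t.2.2 then (t.1 / 3 + (2 * t.2.1 + 1)) % M
            else (t.1 / 3 + (M - (2 * t.2.1 + 1))) % M) < M := by
          split <;> exact Nat.mod_lt _ (by omega)
        have hval1 : (umk n t.1).val = t.1 := umk_val n (by omega)
        have hval2 : (umk n (3 * (if t.2.2 then (t.1 / 3 + (2 * t.2.1 + 1)) % M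
            else (t.1 / 3 + (M - (2 * t.2.1 + 1))) % M) + t.1 % 3)).val
            = 3 * (if t.2.2 then (t.1 / 3 + (2 * t.2.1 + 1)) % M
              else (t.1 / 3 + (M - (2 * t.2.1 + 1))) % M) + t.1 % 3 := umk_val n (by omega)
        have hint : intadj M D (t.1 / 3) (if t.2.2 then (t.1 / 3 + (2 * t.2.1 + 1)) % M
            else (t.1 / 3 + (M - (2 * t.2.1 + 1))) % M) := by
          split
          · exact intadj_plus hMe ha hDM hjD
          · exact intadj_minus hMe ha hDM hjD
        simp only [mem_coe, hInternal, mem_filter, mem_product, mem_univ, true_and]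
        refine ⟨⟨?_, ?_, Or.inr ⟨?_, ?_⟩⟩, ?_⟩
        · rw [hval1]; omega
        · rw [hval2]; omega
        · rw [hval1, hval2]; omega
        · rw [hval1, hval2]
          rw [show (3 * (if t.2.2 then (t.1 / 3 + (2 * t.2.1 + 1)) % M
            else (t.1 / 3 + (M - (2 * t.2.1 + 1))) % M) + t.1 % 3) / 3
            = (if t.2.2 then (t.1 / 3 + (2 * t.2.1 + 1)) % M
              else (t.1 / 3 + (M - (2 * t.2.1 + 1))) % M) by omega]
          exact hint
        · rw [hval1, hval2]; omega
      · intro t ht t' ht' he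
        simp only [mem_product, mem_range, mem_coe] at ht ht'
        obtain ⟨hk, hj, -⟩ := ht
        obtain ⟨hk', hj', -⟩ := ht'
        rw [Prod.ext_iff] at he
        obtain ⟨he1, he2⟩ := he
        simp only at he1 he2
        have hv1 : t.1 = t'.1 := by
          have e1 := congrArg Fin.val he1
          rw [umk_val n (by omega), umk_val n (by omega)] at e1
          exact e1
        have hw : (if t.2.2 then (t.1 / 3 + (2 * t.2.1 + 1)) % M
            else (t.1 / 3 + (M - (2 * t.2.1 + 1))) % M) < M := by
          split <;> exact Nat.mod_lt _ (by omega)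
        have hw' : (if t'.2.2 then (t'.1 / 3 + (2 * t'.2.1 + 1)) % M
            else (t'.1 / 3 + (M - (2 * t'.2.1 + 1))) % M) < M := by
          split <;> exact Nat.mod_lt _ (by omega)
        have e2 := congrArg Fin.val he2
        rw [umk_val n (by omega), umk_val n (by omega)] at e2
        rw [hv1] at e2
        have hpos : (if t.2.2 then (t'.1 / 3 + (2 * t.2.1 + 1)) % M
            else (t'.1 / 3 + (M - (2 * t.2.1 + 1))) % M)
            = (if t'.2.2 then (t'.1 / 3 + (2 * t'.2.1 + 1)) % M
              else (t'.1 / 3 + (M - (2 * t'.2.1 + 1))) % M) := by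
          omega
        have := nbr_inj (a := t'.1 / 3) hMe (by omega) h2D (by omega) (by omega) hpos
        have ht2 : t.2 = t'.2 := Prod.ext this.1 this.2
        exact Prod.ext hv1 ht2
    calc 3 * (M * D) = (range (3 * M) ×ˢ (range (D / 2) ×ˢ (univ : Finset Bool))).card := by
          rw [card_product, card_product, card_range, card_range, card_univ]
          simp only [Fintype.card_bool]
          rw [show D / 2 * 2 = D by omega]
          ring
    _ ≤ Internal.card := hinj
  -- (4) assemble
  have hsub2 : Cross ∪ Internal ⊆ EDG := by
    intro p hp
    rcases mem_union.mp hp with hc | hi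
    · rw [hCross, mem_filter, mem_product] at hc
      obtain ⟨⟨hm1, hm2⟩, hne⟩ := hc
      simp only [VS, mem_filter, mem_univ, true_and] at hm1 hm2
      rw [hEDG, mem_filter, mem_product]
      exact ⟨⟨mem_univ _, mem_univ _⟩, hm1, hm2, Or.inl hne⟩
    · rw [hInternal, mem_filter] at hi
      rw [hEDG, mem_filter]
      exact ⟨hi.1, hi.2.1⟩
  have hdisj : Disjoint Cross Internal := by
    rw [disjoint_left]
    intro p hp hp'
    simp only [hCross, hInternal, mem_filter] at hp hp'
    exact hp.2 hp'.2.2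
  have hEDGbound : Cross.card + Internal.card ≤ EDG.card := by
    rw [← card_union_of_disjoint hdisj]
    exact card_le_card hsub2
  omega

end Graph

lemma choose2_nat (k : ℕ) : 2 * k.choose 2 = k * (k - 1) := by
  rcases k with _ | k
  · simp
  · have hev : Even ((k + 1) * k) := by
      have := Nat.even_mul_succ_self k
      rwa [mul_comm] at this
    rw [Nat.choose_two_right, Nat.succ_sub_one, Nat.mul_div_cancel' hev.two_dvd]

lemma cast_choose2 (k : ℕ) : 2 * ((k.choose 2 : ℕ) : ℝ) = (k : ℝ) * ((k : ℝ) - 1) := by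
  rcases k with _ | k
  · simp
  · have h := choose2_nat (k + 1)
    rw [Nat.succ_sub_one] at h
    have := congrArg (fun t : ℕ => (t : ℝ)) h
    push_cast at this ⊢
    linarith

/-- upper bound on the degree of any vertex in a 3-graph -/
lemma hdeg_le {m : ℕ} (H : Finset (Finset (Fin m))) (h3 : ∀ e ∈ H, e.card = 3)
    (v : Fin m) : hdeg H v ≤ (m - 1).choose 2 := by
  classical
  unfold hdeg
  have hstep : (H.filter (fun e => v ∈ e)).card
      ≤ (((univ : Finset (Fin m)).erase v).powersetCard 2).card := by
    apply card_le_card_of_injOn (fun e => e.erase v)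
    · intro e he
      rw [mem_coe, mem_filter] at he
      rw [mem_coe, mem_powersetCard]
      constructor
      · exact erase_subset_erase _ (subset_univ _)
      · rw [card_erase_of_mem he.2, h3 e he.1]
    · intro e he e' he' hee
      rw [mem_coe, mem_filter] at he he'
      simp only at hee
      have : insert v (e.erase v) = insert v (e'.erase v) := by rw [hee]
      rwa [insert_erase he.2, insert_erase he'.2] at this
  rw [card_powersetCard, card_erase_of_mem (mem_univ _), card_univ, Fintype.card_fin] at hstep
  exact hstep

lemma bddAbove_c1K_set (t m : ℕ) :
    BddAbove {d : ℕ | ∃ H : Finset (Finset (Fin m)),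
      (∀ e ∈ H, e.card = 3) ∧ (∃ x, ¬ CovK t H x) ∧ d = minDeg H} := by
  refine ⟨(m - 1).choose 2, fun d hd => ?_⟩
  obtain ⟨H, h3, ⟨x, -⟩, rfl⟩ := hd
  calc minDeg H ≤ hdeg H x := Nat.sInf_le ⟨x, rfl⟩
  _ ≤ (m - 1).choose 2 := hdeg_le H h3 x

lemma c1K_le (t m : ℕ) : c1K t m ≤ (m - 1).choose 2 := by
  unfold c1K
  rcases Set.eq_empty_or_nonempty {d : ℕ | ∃ H : Finset (Finset (Fin m)),
      (∀ e ∈ H, e.card = 3) ∧ (∃ x, ¬ CovK t H x) ∧ d = minDeg H} with he | hne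
  · rw [he, csSup_empty]
    exact Nat.zero_le _
  · apply csSup_le hne
    intro d hd
    obtain ⟨H, h3, ⟨x, -⟩, rfl⟩ := hd
    calc minDeg H ≤ hdeg H x := Nat.sInf_le ⟨x, rfl⟩
    _ ≤ (m - 1).choose 2 := hdeg_le H h3 x

set_option maxHeartbeats 2000000 in
/-- the construction part of the theorem -/
lemma construction (ε : ℝ) (hε : 0 < ε) :
    ∃ n0 : ℕ, ∀ n : ℕ, n0 ≤ n →
      ∃ H : Finset (Finset (Fin (n + 1))),
        (∀ e ∈ H, e.card = 3) ∧
        (∀ v : Fin (n + 1),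
          (19 / 27 - ε) * (((n : ℕ) - 1).choose 2 : ℝ) ≤ (hdeg H v : ℝ)) ∧
        ∃ x : Fin (n + 1), ¬ CovK 4 H x := by
  refine ⟨max 5000 ⌈(3000 : ℝ) / ε⌉₊, fun n hn => ?_⟩
  have hn5 : 5000 ≤ n := le_trans (le_max_left _ _) hn
  have hnc : ((3000 : ℝ) / ε) ≤ n := by
    calc (3000 : ℝ) / ε ≤ (⌈(3000 : ℝ) / ε⌉₊ : ℝ) := Nat.le_ceil _
    _ ≤ n := by exact_mod_cast le_trans (le_max_right _ _) hn
  have hεn : 3000 ≤ ε * n := by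
    rw [div_le_iff₀ hε] at hnc
    linarith
  have h2D : 2 * Dp n < Mp n := by unfold Dp Mp; omega
  refine ⟨Hgraph n, Hgraph_card n, ?_, x0 n, Hgraph_uncovered n⟩
  intro v
  -- real-valued facts
  set x : ℝ := (n : ℝ) with hx
  have hx0 : (5000 : ℝ) ≤ x := by rw [hx]; exact_mod_cast hn5
  set a : ℝ := ((n / 3 + 1 : ℕ) : ℝ) with ha
  set b : ℝ := ((Dp n : ℕ) : ℝ) with hb
  set m : ℝ := ((Mp n : ℕ) : ℝ) with hm
  set c : ℝ := (((n - 1).choose 2 : ℕ) : ℝ) with hc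
  have ha0 : 0 ≤ a := Nat.cast_nonneg _
  have hb0 : 0 ≤ b := Nat.cast_nonneg _
  have hm0 : 0 ≤ m := Nat.cast_nonneg _
  have hc0 : 0 ≤ c := Nat.cast_nonneg _
  have castle : ∀ p q : ℕ, p ≤ q → (p : ℝ) ≤ (q : ℝ) := fun p q h => Nat.cast_le.mpr h
  have f1 : 3 * a ≤ x + 3 ∧ x + 1 ≤ 3 * a := by
    constructor
    · have := castle _ _ (show 3 * (n / 3 + 1) ≤ n + 3 by omega)
      push_cast at this; rw [ha, hx]; push_cast; linarith
    · have := castle _ _ (show n + 1 ≤ 3 * (n / 3 + 1) by omega)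
      push_cast at this; rw [ha, hx]; push_cast; linarith
  have f2 : 3 * m ≤ x ∧ x ≤ 3 * m + 5 := by
    constructor
    · have := castle _ _ (show 3 * Mp n ≤ n by unfold Mp; omega)
      push_cast at this; rw [hm, hx]; linarith
    · have := castle _ _ (show n ≤ 3 * Mp n + 5 by unfold Mp; omega)
      push_cast at this; rw [hm, hx]; linarith
  have f3 : 27 * b ≤ x ∧ x ≤ 27 * b + 53 := by
    constructor
    · have := castle _ _ (show 27 * Dp n ≤ n by unfold Dp; omega)
      push_cast at this; rw [hb, hx]; linarith
    · have := castle _ _ (show n ≤ 27 * Dp n + 53 by unfold Dp; omega)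
      push_cast at this; rw [hb, hx]; linarith
  have e1 : ((n - 1 : ℕ) : ℝ) = (n : ℝ) - 1 := by
    rw [Nat.cast_sub (by omega : 1 ≤ n)]; norm_num
  have f4 : 2 * c = (x - 1) * (x - 2) := by
    have h1 := cast_choose2 (n - 1)
    rw [e1] at h1
    rw [hc, hx]
    rw [h1]; ring
  have ha2 : 9 * a ^ 2 ≤ (x + 3) ^ 2 := by nlinarith [f1.1, ha0]
  have hab : 81 * (b * a) ≤ x * (x + 3) := by nlinarith [f1.1, f3.1, ha0, hb0, hx0]
  have hεc : 3000 * (x - 3) ≤ 2 * (ε * c) := by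
    have k1 : x * (x - 3) ≤ 2 * c := by nlinarith [f4]
    have k2 : 3000 * (x - 3) ≤ (ε * x) * (x - 3) :=
      mul_le_mul_of_nonneg_right hεn (by linarith)
    nlinarith [mul_le_mul_of_nonneg_left k1 (le_of_lt hε)]
  by_cases hvx : v = x0 n
  · -- the apex vertex
    subst hvx
    have hN := deg_x n (by omega) h2D
    have hNr : x * x + 3 * (m * b) ≤ 2 * (hdeg (Hgraph n) (x0 n) : ℝ) + 3 * a ^ 2 := by
      have := castle _ _ hN
      push_cast at this
      rw [hx, hm, hb, ha]
      push_cast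
      nlinarith [this]
    have hmb : (x - 5) * (x - 53) ≤ 81 * (m * b) := by
      nlinarith [mul_nonneg (show (0:ℝ) ≤ 3*m - (x-5) by linarith [f2.2]) (show (0:ℝ) ≤ x - 53 by linarith),
        mul_nonneg (show (0:ℝ) ≤ 27*b - (x-53) by linarith [f3.2]) (show (0:ℝ) ≤ 3*m by linarith [hm0])]
    nlinarith [hNr, hmb, ha2, hεc, f4, hx0, hc0]
  · -- ordinary vertices
    have hN := deg_v n v hvx h2D
    have hNr : c ≤ (hdeg (Hgraph n) v : ℝ) + (a ^ 2 + 3 * (b * a)) := by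
      have := castle _ _ hN
      push_cast at this
      rw [hc, ha, hb]
      push_cast
      nlinarith [this]
    nlinarith [hNr, hab, ha2, hεc, f4, hx0, hc0]

end Stmt5Aux


set_option maxHeartbeats 1000000 in
theorem stmt5 (ε : ℝ) (hε : 0 < ε) :
    (∃ n0 : ℕ, ∀ n : ℕ, n0 ≤ n →
      ∃ H : Finset (Finset (Fin (n + 1))),
        (∀ e ∈ H, e.card = 3) ∧
        (∀ v : Fin (n + 1),
          (19 / 27 - ε) * ((n - 1).choose 2 : ℝ) ≤ (hdeg H v : ℝ)) ∧
        ∃ x : Fin (n + 1), ¬ CovK 4 H x) ∧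
    (19 / 27 : ℝ) ≤ c1Kdens 4 := by
  constructor
  · exact Stmt5Aux.construction ε hε
  · -- the limsup bound
    have hbdd : Filter.IsBoundedUnder (· ≤ ·) Filter.atTop
        (fun m : ℕ => (c1K 4 m : ℝ) / (((m : ℕ) - 1).choose 2 : ℝ)) := by
      apply Filter.isBoundedUnder_of
      refine ⟨1, fun m => ?_⟩
      rcases eq_or_ne ((((m : ℕ) - 1).choose 2 : ℕ) : ℝ) 0 with h | h
      · rw [h, div_zero]; norm_num
      · rw [div_le_one (lt_of_le_of_ne (Nat.cast_nonneg _) (Ne.symm h))]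
        exact_mod_cast Stmt5Aux.c1K_le 4 m
    have claim : ∀ δ : ℝ, 0 < δ → δ ≤ 1/4 → 19/27 - δ ≤ c1Kdens 4 := by
      intro δ hδ hδ4
      obtain ⟨n0, hcon⟩ := Stmt5Aux.construction (δ/2) (by linarith)
      unfold c1Kdens
      apply Filter.le_limsup_of_frequently_le _ hbdd
      apply Filter.Eventually.frequently
      rw [Filter.eventually_atTop]
      refine ⟨max (n0 + 4) (⌈(200:ℝ)/δ⌉₊ + 4), fun m hm => ?_⟩
      obtain ⟨n, rfl⟩ : ∃ n, m = n + 1 := ⟨m - 1, by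
        have := le_trans (le_max_left _ _) hm; omega⟩
      have hn0 : n0 ≤ n := by
        have := le_trans (le_max_left _ _) hm; omega
      have hceil : ⌈(200:ℝ)/δ⌉₊ + 3 ≤ n := by
        have := le_trans (le_max_right _ _) hm; omega
      have hδn : (200:ℝ) ≤ δ * n := by
        have h2 : ((200:ℝ)/δ) ≤ (⌈(200:ℝ)/δ⌉₊ : ℝ) := Nat.le_ceil _
        have h3 : ((⌈(200:ℝ)/δ⌉₊ : ℕ) : ℝ) ≤ (n : ℝ) := by
          exact_mod_cast (by omega : ⌈(200:ℝ)/δ⌉₊ ≤ n)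
        rw [div_le_iff₀ hδ] at h2
        nlinarith [h2, h3, hδ]
      have hn800 : (800:ℝ) ≤ (n : ℝ) := by nlinarith [hδn, hδ4, hδ, Nat.cast_nonneg (α := ℝ) n]
      obtain ⟨H, h3, hdegb, xx, hxcov⟩ := hcon n hn0
      have hmem : minDeg H ∈ {d : ℕ | ∃ H' : Finset (Finset (Fin (n+1))),
          (∀ e ∈ H', e.card = 3) ∧ (∃ x, ¬ CovK 4 H' x) ∧ d = minDeg H'} :=
        ⟨H, h3, ⟨xx, hxcov⟩, rfl⟩
      have hc1 : minDeg H ≤ c1K 4 (n+1) := le_csSup (Stmt5Aux.bddAbove_c1K_set 4 (n+1)) hmem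
      have hmd : ((19:ℝ)/27 - δ/2) * (((n : ℕ) - 1).choose 2 : ℝ) ≤ (minDeg H : ℝ) := by
        obtain ⟨v, hv⟩ := Nat.sInf_mem (Set.range_nonempty (hdeg H))
        unfold minDeg
        rw [← hv]
        exact hdegb v
      simp only [Nat.add_sub_cancel]
      have hpos : (0:ℝ) < (n.choose 2 : ℝ) := by
        have : 0 < n.choose 2 := Nat.choose_pos (by omega)
        exact_mod_cast this
      rw [le_div_iff₀ hpos]
      have hchain : ((19:ℝ)/27 - δ/2) * (((n : ℕ) - 1).choose 2 : ℝ) ≤ (c1K 4 (n+1) : ℝ) :=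
        le_trans hmd (by exact_mod_cast hc1)
      have hA := Stmt5Aux.cast_choose2 n
      have hB := Stmt5Aux.cast_choose2 (n - 1)
      have e1 : ((n - 1 : ℕ) : ℝ) = (n : ℝ) - 1 := by
        rw [Nat.cast_sub (by omega : 1 ≤ n)]
        norm_num
      rw [e1] at hB
      have key : ((19:ℝ)/27 - δ) * ((n:ℝ) * ((n:ℝ) - 1))
          ≤ (19/27 - δ/2) * (((n:ℝ) - 1) * ((n:ℝ) - 2)) := by
        nlinarith [mul_le_mul_of_nonneg_right hδn (show (0:ℝ) ≤ (n:ℝ) - 1 by linarith),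
          mul_nonneg hδ.le (show (0:ℝ) ≤ (n:ℝ) - 1 by linarith), hn800, hδ4]
      have hA' : δ * (2 * ((n.choose 2 : ℕ) : ℝ)) = δ * ((n:ℝ) * ((n:ℝ) - 1)) := by rw [hA]
      have hB' : δ * (2 * (((n - 1).choose 2 : ℕ) : ℝ)) = δ * (((n:ℝ) - 1) * ((n:ℝ) - 1 - 1)) := by
        rw [hB]
      linarith [key, hA, hB, hA', hB', hchain]
    by_contra hcontra
    push_neg at hcontra
    have hδpos : 0 < min ((19/27 - c1Kdens 4)/2) (1/4) := by
      apply lt_min <;> linarith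
    have := claim _ hδpos (min_le_right _ _)
    have hle := min_le_left ((19/27 - c1Kdens 4)/2) (1/4)
    linarith
end

section
/- Let f : ℝ → ℝ be a convex function, let a_1 ≤ a_2 ≤ … ≤ a_n be real numbers with Σ_{i=1}^n a_i = ā·n for some ā > 0, and let η > 0. Set B := {i ∈ [n] : a_i ≤ (1−η)ā}. Then |B| < n and Σ_{i=1}^n f(a_i) ≥ |B|·f((1−η)ā) + (n−|B|)·f((1 + η|B|/(n−|B|))·ā). -/
open Finset

lemma chord_left_aux (f : ℝ → ℝ) (hf : ConvexOn ℝ Set.univ f) {x p c : ℝ}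
    (hx : x ≤ p) (hpc : p < c) :
    f p + (f c - f p) / (c - p) * (x - p) ≤ f x := by
  rcases eq_or_lt_of_le hx with h | h
  · subst h; simp
  · have hs := hf.slope_mono_adjacent (Set.mem_univ x) (Set.mem_univ c) h hpc
    rw [div_le_div_iff₀ (by linarith) (by linarith)] at hs
    rw [add_comm, ← le_sub_iff_add_le, div_mul_eq_mul_div, div_le_iff₀ (by linarith)]
    nlinarith

lemma chord_right_aux (f : ℝ → ℝ) (hf : ConvexOn ℝ Set.univ f) {y p c : ℝ}
    (hy : c ≤ y) (hpc : p < c) :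
    f c + (f c - f p) / (c - p) * (y - c) ≤ f y := by
  rcases eq_or_lt_of_le hy with h | h
  · subst h; simp
  · have hs := hf.slope_mono_adjacent (Set.mem_univ p) (Set.mem_univ y) hpc h
    rw [div_le_div_iff₀ (by linarith) (by linarith)] at hs
    rw [add_comm, ← le_sub_iff_add_le, div_mul_eq_mul_div, div_le_iff₀ (by linarith)]
    nlinarith

lemma jensen_avg {ι : Type*} (T : Finset ι) (hT : T.Nonempty) (f : ℝ → ℝ)
    (hf : ConvexOn ℝ Set.univ f) (a : ι → ℝ) :
    (T.card : ℝ) * f ((∑ i ∈ T, a i) / T.card) ≤ ∑ i ∈ T, f (a i) := by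
  have hcard : (0 : ℝ) < T.card := by exact_mod_cast Finset.card_pos.2 hT
  have h := hf.map_centerMass_le (t := T) (w := fun _ => 1) (p := a)
    (fun i _ => zero_le_one) (by simpa using hcard) (fun i _ => Set.mem_univ _)
  simp only [centerMass, sum_const, nsmul_eq_mul, mul_one, one_mul, one_smul, smul_eq_mul,
    Function.comp] at h
  rw [div_eq_inv_mul]
  calc (T.card : ℝ) * f ((T.card:ℝ)⁻¹ * ∑ i ∈ T, a i)
      ≤ (T.card:ℝ) * ((T.card:ℝ)⁻¹ * ∑ i ∈ T, f (a i)) :=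
        mul_le_mul_of_nonneg_left h hcard.le
    _ = ∑ i ∈ T, f (a i) := by field_simp

theorem stmt7 (n : ℕ) (hn : 0 < n) (f : ℝ → ℝ) (hf : ConvexOn ℝ Set.univ f)
    (a : Fin n → ℝ) (hmono : Monotone a) (abar η : ℝ) (habar : 0 < abar)
    (hη : 0 < η) (hsum : ∑ i, a i = abar * n)
    (B : Finset (Fin n)) (hB : B = Finset.univ.filter (fun i => a i ≤ (1 - η) * abar)) :
    B.card < n ∧
    (B.card : ℝ) * f ((1 - η) * abar) +
        ((n : ℝ) - B.card) * f ((1 + η * B.card / ((n : ℝ) - B.card)) * abar)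
      ≤ ∑ i, f (a i) := by
  have hn' : (1:ℝ) ≤ n := by exact_mod_cast hn
  have hBle : ∀ i ∈ B, a i ≤ (1 - η) * abar := by
    intro i hi; rw [hB] at hi; exact (Finset.mem_filter.1 hi).2
  -- Part 1: B.card < n
  have hkn : B.card < n := by
    by_contra h
    push_neg at h
    have hcard : B.card = Fintype.card (Fin n) := by
      have h1 : B.card ≤ n := by simpa using B.card_le_univ
      simp [le_antisymm h1 h]
    have hBuniv : B = Finset.univ := Finset.eq_univ_of_card B hcard
    have hle : ∑ i, a i ≤ ∑ _i : Fin n, (1 - η) * abar :=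
      Finset.sum_le_sum (fun i hi => hBle i (hBuniv ▸ hi))
    rw [hsum, Finset.sum_const] at hle
    simp only [card_univ, Fintype.card_fin, nsmul_eq_mul] at hle
    nlinarith [mul_pos hη habar]
  refine ⟨hkn, ?_⟩
  set p : ℝ := (1 - η) * abar with hp
  set k : ℝ := (B.card : ℝ) with hkdef
  set m : ℝ := (n : ℝ) - k with hmdef
  have hk0 : 0 ≤ k := Nat.cast_nonneg _
  have hm : 0 < m := by
    rw [hmdef, hkdef, sub_pos]
    exact_mod_cast hkn
  set c : ℝ := (1 + η * k / m) * abar with hc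
  set s : ℝ := (f c - f p) / (c - p) with hs
  have hpc : p < c := by
    have h0 : 0 ≤ η * k / m := div_nonneg (mul_nonneg hη.le hk0) hm.le
    have := mul_pos hη habar
    rw [hp, hc]; nlinarith
  set T : Finset (Fin n) := Bᶜ with hT
  have hTcard : (T.card : ℝ) = m := by
    rw [hT, Finset.card_compl, hmdef, hkdef, Fintype.card_fin]
    exact Nat.cast_sub hkn.le
  have hTne : T.Nonempty := by
    rw [← Finset.card_pos]
    have : (0:ℝ) < (T.card : ℝ) := by rw [hTcard]; exact hm
    exact_mod_cast this
  set S : ℝ := ∑ i ∈ T, a i with hS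
  have hsplit : ∑ i ∈ B, a i + S = abar * n := by
    rw [hS, hT, Finset.sum_add_sum_compl, hsum]
  have hSB : ∑ i ∈ B, a i ≤ k * p := by
    have := Finset.sum_le_card_nsmul B a p hBle
    rw [nsmul_eq_mul] at this
    exact this
  have hceq : m * c = abar * n - k * p := by
    rw [hc, hp, hmdef]
    have hm' : (n:ℝ) - k ≠ 0 := hm.ne'
    field_simp
    ring
  -- Jensen on T
  have hJ : m * f (S / m) ≤ ∑ i ∈ T, f (a i) := by
    have := jensen_avg T hTne f hf a
    rwa [hTcard, ← hS] at this
  have havg : c ≤ S / m := by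
    rw [le_div_iff₀ hm]
    nlinarith
  have hchordT := chord_right_aux f hf havg hpc
  rw [← hs] at hchordT
  have hTsum : m * f c + s * (S - m * c) ≤ ∑ i ∈ T, f (a i) := by
    have h1 : m * (f c + s * (S / m - c)) ≤ m * f (S / m) :=
      mul_le_mul_of_nonneg_left hchordT hm.le
    have h2 : m * (f c + s * (S / m - c)) = m * f c + s * (S - m * c) := by
      field_simp
    exact (h2.symm.trans_le h1).trans hJ
  -- chord on B
  have hBsum : k * f p + s * ((∑ i ∈ B, a i) - k * p) ≤ ∑ i ∈ B, f (a i) := by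
    have h1 : ∑ i ∈ B, (f p + s * (a i - p)) ≤ ∑ i ∈ B, f (a i) := by
      refine Finset.sum_le_sum (fun i hi => ?_)
      have := chord_left_aux f hf (hBle i hi) hpc
      rwa [← hs] at this
    have h2 : ∑ i ∈ B, (f p + s * (a i - p))
        = k * f p + s * ((∑ i ∈ B, a i) - k * p) := by
      rw [Finset.sum_add_distrib, Finset.sum_const, nsmul_eq_mul, ← Finset.mul_sum,
        Finset.sum_sub_distrib, Finset.sum_const, nsmul_eq_mul, hkdef]
      try ring
    linarith
  -- combine
  have hz : s * ((∑ i ∈ B, a i) - k * p) + s * (S - m * c) = 0 := by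
    have key : ((∑ i ∈ B, a i) - k * p) + (S - m * c) = 0 := by
      rw [hceq]; linarith
    rw [← mul_add, key, mul_zero]
  have hfin : ∑ i ∈ B, f (a i) + ∑ i ∈ T, f (a i) = ∑ i, f (a i) := by
    rw [hT, Finset.sum_add_sum_compl]
  linarith
end

section
/- For every n ≥ 1 there exists a 3-graph H on 3n+1 vertices with minimum vertex degree δ1(H) ≥ C(n,2) + C(2n,2) = (5/9)·C(3n,2) − 2n/3 in which some vertex is not covered by any copy of C5^{(3)}. Consequently c1(3n+1, C5^{(3)}) ≥ (5/9)·C(3n,2) − 2n/3. -/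
open Finset

/-- Vertex `x` is covered by a copy of the tight 3-uniform 5-cycle `C₅⁽³⁾` in `H`. -/
def CovC5 {V : Type*} [DecidableEq V] (H : Finset (Finset V)) (x : V) : Prop :=
  ∃ v : Fin 5 → V, Function.Injective v ∧ (∃ i, v i = x) ∧
    ∀ i : Fin 5, ({v i, v (i + 1), v (i + 2)} : Finset V) ∈ H

/-- `c₁(n, C₅⁽³⁾)`: the maximum of `δ₁(G)` over `n`-vertex 3-graphs `G` having
no `C₅⁽³⁾`-covering. -/
noncomputable def c1C5 (n : ℕ) : ℕ :=
  sSup {d : ℕ | ∃ H : Finset (Finset (Fin n)),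
    (∀ e ∈ H, e.card = 3) ∧ (∃ x, ¬ CovC5 H x) ∧ d = minDeg H}


lemma tmc (m : ℕ) : 2 * (m+1).choose 2 = (m+1) * m := by
  induction m with
  | zero => rfl
  | succ k ih =>
    rw [Nat.choose_succ_succ (k+1) 1]
    simp [Nat.choose_one_right]
    ring_nf
    ring_nf at ih
    omega

lemma arithA (m : ℕ) :
    (m+1).choose 2 + (2*(m+1)).choose 2 + m.choose 2 ≤ (3*(m+1)-1).choose 2 + m := by
  have h1 : m.choose 2 ≤ (m+1).choose 2 := Nat.choose_le_choose 2 (by omega)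
  rw [show 2*(m+1) = (2*m+1)+1 by ring, show 3*(m+1)-1 = (3*m+1)+1 by omega]
  have t1 := tmc m
  have t2 := tmc (2*m+1)
  have t3 := tmc (3*m+1)
  nlinarith [sq_nonneg m]

lemma arithB (m : ℕ) :
    (m+1).choose 2 + (2*(m+1)).choose 2 + (2*(m+1)-1).choose 2 ≤ (3*(m+1)-1).choose 2 + (2*(m+1)-1) := by
  rw [show 2*(m+1)-1 = (2*m)+1 by omega, show 2*(m+1) = (2*m+1)+1 by ring,
    show 3*(m+1)-1 = (3*m+1)+1 by omega]
  have t1 := tmc m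
  have t2 := tmc (2*m+1)
  have t2' := tmc (2*m)
  have t3 := tmc (3*m+1)
  nlinarith [sq_nonneg m]

lemma arithA' (n : ℕ) (hn : 1 ≤ n) :
    n.choose 2 + (2*n).choose 2 + (n-1).choose 2 ≤ (3*n-1).choose 2 + (n-1) := by
  obtain ⟨m, rfl⟩ : ∃ m, n = m + 1 := ⟨n - 1, by omega⟩
  simpa using arithA m

lemma arithB' (n : ℕ) (hn : 1 ≤ n) :
    n.choose 2 + (2*n).choose 2 + (2*n-1).choose 2 ≤ (3*n-1).choose 2 + (2*n-1) := by
  obtain ⟨m, rfl⟩ : ∃ m, n = m + 1 := ⟨n - 1, by omega⟩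
  exact arithB m

variable (n : ℕ)

def AS : Finset (Fin (3*n+1)) := univ.filter (fun v => 1 ≤ v.val ∧ v.val ≤ n)
def BS : Finset (Fin (3*n+1)) := univ.filter (fun v => n+1 ≤ v.val)

def HG : Finset (Finset (Fin (3*n+1))) :=
  univ.filter (fun e => e.card = 3 ∧
    (((0:Fin (3*n+1)) ∈ e ∧ (e.erase 0 ⊆ AS n ∨ e.erase 0 ⊆ BS n)) ∨
     ((0:Fin (3*n+1)) ∉ e ∧ (e ∩ AS n).Nonempty ∧ (e ∩ BS n).Nonempty)))

lemma mem_HG (e : Finset (Fin (3*n+1))) : e ∈ HG n ↔ e.card = 3 ∧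
    (((0:Fin (3*n+1)) ∈ e ∧ (e.erase 0 ⊆ AS n ∨ e.erase 0 ⊆ BS n)) ∨
     ((0:Fin (3*n+1)) ∉ e ∧ (e ∩ AS n).Nonempty ∧ (e ∩ BS n).Nonempty)) := by
  simp [HG]

lemma zero_not_AS : (0 : Fin (3*n+1)) ∉ AS n := by simp [AS]
lemma zero_not_BS : (0 : Fin (3*n+1)) ∉ BS n := by simp [BS]
lemma AS_BS_disj (u : Fin (3*n+1)) (h1 : u ∈ AS n) (h2 : u ∈ BS n) : False := by
  simp [AS, BS] at h1 h2; omega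

lemma filter_val_card (p : ℕ → Prop) [DecidablePred p] :
    ((univ : Finset (Fin (3*n+1))).filter (fun v => p v.val)).card
      = ((range (3*n+1)).filter p).card := by
  rw [← Finset.card_image_of_injective _ Fin.val_injective]
  congr 1
  ext a
  simp only [mem_image, mem_filter, mem_univ, true_and, mem_range]
  constructor
  · rintro ⟨v, hv, rfl⟩; exact ⟨v.isLt, hv⟩
  · rintro ⟨ha, hp⟩; exact ⟨⟨a, ha⟩, hp, rfl⟩

lemma card_AS : (AS n).card = n := by
  rw [AS, filter_val_card n (fun a => 1 ≤ a ∧ a ≤ n)]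
  rw [show (range (3*n+1)).filter (fun a => 1 ≤ a ∧ a ≤ n) = Ico 1 (n+1) by
    ext a; simp [mem_range, mem_Ico]; omega]
  simp

lemma card_BS : (BS n).card = 2*n := by
  rw [BS, filter_val_card n (fun a => n+1 ≤ a)]
  rw [show (range (3*n+1)).filter (fun a => n+1 ≤ a) = Ico (n+1) (3*n+1) by
    ext a; simp [mem_range, mem_Ico]; omega]
  rw [Nat.card_Ico]; omega

lemma hdeg_ge {V : Type*} [DecidableEq V] (G : Finset (Finset V)) (y : V)
    (L : Finset (Finset V)) (hL : ∀ p ∈ L, y ∉ p ∧ insert y p ∈ G) :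
    L.card ≤ hdeg G y := by
  apply Finset.card_le_card_of_injOn (fun p => insert y p)
  · intro p hp
    simp only [mem_filter]
    exact Finset.mem_coe.mpr (mem_filter.mpr ⟨(hL p hp).2, mem_insert_self _ _⟩)
  · intro p hp q hq h
    simp only at h
    have : (insert y p).erase y = (insert y q).erase y := by rw [h]
    rwa [Finset.erase_insert (hL p hp).1, Finset.erase_insert (hL q hq).1] at this

lemma deg_zero (hn : 1 ≤ n) : n.choose 2 + (2*n).choose 2 ≤ hdeg (HG n) 0 := by
  have hL : ∀ p ∈ (powersetCard 2 (AS n)) ∪ (powersetCard 2 (BS n)),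
      (0:Fin (3*n+1)) ∉ p ∧ insert 0 p ∈ HG n := by
    intro p hp
    rw [mem_union, mem_powersetCard, mem_powersetCard] at hp
    have h0 : (0:Fin (3*n+1)) ∉ p := by
      rcases hp with ⟨hs, _⟩ | ⟨hs, _⟩
      · exact fun hc => zero_not_AS n (hs hc)
      · exact fun hc => zero_not_BS n (hs hc)
    refine ⟨h0, ?_⟩
    rw [mem_HG]
    constructor
    · rw [card_insert_of_notMem h0]
      rcases hp with ⟨_, hc⟩ | ⟨_, hc⟩ <;> omega
    · left
      refine ⟨mem_insert_self _ _, ?_⟩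
      rw [Finset.erase_insert h0]
      rcases hp with ⟨hs, _⟩ | ⟨hs, _⟩
      · exact Or.inl hs
      · exact Or.inr hs
  have key := hdeg_ge (HG n) 0 _ hL
  rw [card_union_of_disjoint, card_powersetCard, card_powersetCard, card_AS, card_BS] at key
  · exact key
  · rw [Finset.disjoint_left]
    intro p hp1 hp2
    rw [mem_powersetCard] at hp1 hp2
    obtain ⟨u, hu⟩ : p.Nonempty := Finset.card_pos.mp (by omega)
    exact AS_BS_disj n u (hp1.1 hu) (hp2.1 hu)

lemma deg_side (S T : Finset (Fin (3*n+1))) (y : Fin (3*n+1))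
    (hy : y ∈ S) (h0S : (0:Fin (3*n+1)) ∉ S) (h0T : (0:Fin (3*n+1)) ∉ T)
    (hdisj : ∀ u, u ∈ S → u ∈ T → False)
    (hcover : ∀ u : Fin (3*n+1), u ≠ 0 → u ∈ S ∨ u ∈ T)
    (hmem : ∀ e : Finset (Fin (3*n+1)), e ∈ HG n ↔ e.card = 3 ∧
      ((0 ∈ e ∧ (e.erase 0 ⊆ S ∨ e.erase 0 ⊆ T)) ∨
       (0 ∉ e ∧ (e ∩ S).Nonempty ∧ (e ∩ T).Nonempty))) :
    (3*n-1).choose 2 - (S.card - 1).choose 2 + (S.card - 1) ≤ hdeg (HG n) y := by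
  have hy0 : y ≠ 0 := fun hc => h0S (hc ▸ hy)
  set W : Finset (Fin (3*n+1)) := (univ.erase 0).erase y with hW
  have hWcard : W.card = 3*n - 1 := by
    rw [hW, card_erase_of_mem, card_erase_of_mem (mem_univ 0), card_univ,
      Fintype.card_fin]
    · omega
    · exact mem_erase.mpr ⟨hy0, mem_univ y⟩
  have hWmem : ∀ u : Fin (3*n+1), u ∈ W ↔ u ≠ y ∧ u ≠ 0 := by
    intro u; simp [hW]
  set L1 := (powersetCard 2 W).filter (fun p => (p ∩ T).Nonempty) with hL1
  set L2 := (S.erase y).image (fun u => ({0, u} : Finset (Fin (3*n+1)))) with hL2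
  have hL1card : L1.card = (3*n-1).choose 2 - (S.card - 1).choose 2 := by
    have hsplit := Finset.card_filter_add_card_filter_not
      (s := powersetCard 2 W) (p := fun p => (p ∩ T).Nonempty)
    have hneg : (powersetCard 2 W).filter (fun p => ¬(p ∩ T).Nonempty)
        = powersetCard 2 (S.erase y) := by
      ext p
      rw [mem_filter, mem_powersetCard, mem_powersetCard, Finset.not_nonempty_iff_eq_empty,
        ← Finset.disjoint_iff_inter_eq_empty, Finset.disjoint_right]
      constructor
      · rintro ⟨⟨hpW, hc⟩, hT⟩
        refine ⟨fun u hu => ?_, hc⟩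
        have := (hWmem u).mp (hpW hu)
        rcases hcover u this.2 with h | h
        · exact mem_erase.mpr ⟨this.1, h⟩
        · exact absurd hu (hT h)
      · rintro ⟨hpS, hc⟩
        refine ⟨⟨fun u hu => ?_, hc⟩, fun u hu hup => ?_⟩
        · have := mem_erase.mp (hpS hu)
          exact (hWmem u).mpr ⟨this.1, fun h0 => h0S (h0 ▸ this.2)⟩
        · exact hdisj u (mem_erase.mp (hpS hup)).2 hu
    rw [hneg, card_powersetCard, card_powersetCard, hWcard, card_erase_of_mem hy] at hsplit
    rw [hL1]
    omega
  have hL2card : L2.card = S.card - 1 := by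
    rw [hL2, Finset.card_image_of_injOn, card_erase_of_mem hy]
    intro u hu u' hu' h
    have hu0 : u ≠ 0 := fun hc => h0S (hc ▸ (mem_erase.mp hu).2)
    have : u ∈ ({0, u'} : Finset (Fin (3*n+1))) := by
      rw [show ({0, u'} : Finset (Fin (3*n+1))) = {0, u} from (by simpa using h.symm)]
      simp
    simp at this
    tauto
  have hdisj12 : Disjoint L1 L2 := by
    rw [Finset.disjoint_left]
    intro p hp1 hp2
    rw [hL1, mem_filter, mem_powersetCard] at hp1
    rw [hL2, mem_image] at hp2
    obtain ⟨u, _, rfl⟩ := hp2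
    have h0 : (0:Fin (3*n+1)) ∈ ({0, u} : Finset (Fin (3*n+1))) := by simp
    exact ((hWmem 0).mp (hp1.1.1 h0)).2 rfl
  have hL : ∀ p ∈ L1 ∪ L2, y ∉ p ∧ insert y p ∈ HG n := by
    intro p hp
    rw [mem_union] at hp
    rcases hp with hp | hp
    · rw [hL1, mem_filter, mem_powersetCard] at hp
      obtain ⟨⟨hpW, hpc⟩, hpT⟩ := hp
      have hyp : y ∉ p := fun hc => ((hWmem y).mp (hpW hc)).1 rfl
      have h0p : (0:Fin (3*n+1)) ∉ p := fun hc => ((hWmem 0).mp (hpW hc)).2 rfl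
      refine ⟨hyp, ?_⟩
      rw [hmem]
      constructor
      · rw [card_insert_of_notMem hyp]; omega
      · right
        refine ⟨?_, ⟨y, by simp [hy]⟩, ?_⟩
        · simp only [mem_insert, not_or]
          exact ⟨fun hc => hy0 hc.symm, h0p⟩
        · obtain ⟨u, hu⟩ := hpT
          rw [mem_inter] at hu
          exact ⟨u, mem_inter.mpr ⟨mem_insert_of_mem hu.1, hu.2⟩⟩
    · rw [hL2, mem_image] at hp
      obtain ⟨u, hu, rfl⟩ := hp
      obtain ⟨huy, huS⟩ := mem_erase.mp hu
      have hu0 : u ≠ 0 := fun hc => h0S (hc ▸ huS)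
      have hyp : y ∉ ({0, u} : Finset (Fin (3*n+1))) := by
        simp only [mem_insert, mem_singleton, not_or]
        exact ⟨hy0, fun hc => huy hc.symm⟩
      refine ⟨hyp, ?_⟩
      rw [hmem]
      constructor
      · rw [card_insert_of_notMem hyp, Finset.card_pair (Ne.symm hu0)]
      · left
        refine ⟨by simp, Or.inl ?_⟩
        intro v hv
        obtain ⟨hv0, hvm⟩ := mem_erase.mp hv
        simp only [mem_insert, mem_singleton] at hvm
        rcases hvm with rfl | rfl | rfl
        · exact hy
        · exact absurd rfl hv0
        · exact huS
  have key := hdeg_ge (HG n) y _ hL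
  rw [card_union_of_disjoint hdisj12, hL1card, hL2card] at key
  exact key

lemma not_cov : ¬ CovC5 (HG n) 0 := by
  rintro ⟨v, hinj, ⟨j, hj⟩, hed⟩
  set w : Fin 5 → Fin (3*n+1) := fun k => v (j + k) with hw
  have hw0 : w 0 = 0 := by simp [hw, hj]
  have hwinj : Function.Injective w := fun a b h => add_left_cancel (hinj h)
  have hE : ∀ i : Fin 5, ({w i, w (i+1), w (i+2)} : Finset (Fin (3*n+1))) ∈ HG n := by
    intro i
    have := hed (j + i)
    simpa [hw, add_assoc] using this
  have hne : ∀ k : Fin 5, k ≠ 0 → w k ≠ 0 := fun k hk hc => hk (hwinj (hc.trans hw0.symm))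
  have side : ∀ (a b : Fin (3*n+1)) (e : Finset (Fin (3*n+1))), e ∈ HG n → 0 ∈ e → a ∈ e → b ∈ e →
      a ≠ 0 → b ≠ 0 → (a ∈ AS n ∧ b ∈ AS n) ∨ (a ∈ BS n ∧ b ∈ BS n) := by
    intro a b e he h0 ha hb ha0 hb0
    rw [mem_HG] at he
    rcases he.2 with ⟨_, hS | hS⟩ | ⟨h0', _⟩
    · exact Or.inl ⟨hS (mem_erase.mpr ⟨ha0, ha⟩), hS (mem_erase.mpr ⟨hb0, hb⟩)⟩
    · exact Or.inr ⟨hS (mem_erase.mpr ⟨ha0, ha⟩), hS (mem_erase.mpr ⟨hb0, hb⟩)⟩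
    · exact absurd h0 h0'
  have e0 := hE 0
  have e1 := hE 1
  have e3 := hE 3
  have e4 := hE 4
  rw [show ((0:Fin 5)+1) = 1 from by decide, show ((0:Fin 5)+2) = 2 from by decide, hw0] at e0
  rw [show ((1:Fin 5)+1) = 2 from by decide, show ((1:Fin 5)+2) = 3 from by decide] at e1
  rw [show ((3:Fin 5)+1) = 4 from by decide, show ((3:Fin 5)+2) = 0 from by decide, hw0] at e3
  rw [show ((4:Fin 5)+1) = 0 from by decide, show ((4:Fin 5)+2) = 1 from by decide, hw0] at e4
  have h1 : w 1 ≠ 0 := hne 1 (by decide)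
  have h2 : w 2 ≠ 0 := hne 2 (by decide)
  have h3 : w 3 ≠ 0 := hne 3 (by decide)
  have h4 : w 4 ≠ 0 := hne 4 (by decide)
  have p12 := side (w 1) (w 2) _ e0 (by simp) (by simp) (by simp) h1 h2
  have p41 := side (w 4) (w 1) _ e4 (by simp) (by simp) (by simp) h4 h1
  have p34 := side (w 3) (w 4) _ e3 (by simp) (by simp) (by simp) h3 h4
  have h0e1 : (0:Fin (3*n+1)) ∉ ({w 1, w 2, w 3} : Finset (Fin (3*n+1))) := by
    simp only [mem_insert, mem_singleton, not_or]
    exact ⟨Ne.symm h1, Ne.symm h2, Ne.symm h3⟩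
  rw [mem_HG] at e1
  rcases e1.2 with ⟨h0', _⟩ | ⟨_, hA, hB⟩
  · exact h0e1 h0'
  rcases p12 with ⟨h1A, h2A⟩ | ⟨h1B, h2B⟩
  · have h4A : w 4 ∈ AS n := by
      rcases p41 with ⟨h, _⟩ | ⟨_, h⟩
      · exact h
      · exact absurd h1A (fun hc => AS_BS_disj n _ hc h)
    have h3A : w 3 ∈ AS n := by
      rcases p34 with ⟨h, _⟩ | ⟨_, h⟩
      · exact h
      · exact (AS_BS_disj n _ h4A h).elim
    obtain ⟨u, hu⟩ := hB
    rw [mem_inter] at hu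
    obtain ⟨hum, huB⟩ := hu
    simp only [mem_insert, mem_singleton] at hum
    rcases hum with rfl | rfl | rfl
    · exact AS_BS_disj n _ h1A huB
    · exact AS_BS_disj n _ h2A huB
    · exact AS_BS_disj n _ h3A huB
  · have h4B : w 4 ∈ BS n := by
      rcases p41 with ⟨_, h⟩ | ⟨h, _⟩
      · exact absurd h (fun hc => AS_BS_disj n _ hc h1B)
      · exact h
    have h3B : w 3 ∈ BS n := by
      rcases p34 with ⟨_, h⟩ | ⟨h, _⟩
      · exact absurd h (fun hc => AS_BS_disj n _ hc h4B)
      · exact h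
    obtain ⟨u, hu⟩ := hA
    rw [mem_inter] at hu
    obtain ⟨hum, huA⟩ := hu
    simp only [mem_insert, mem_singleton] at hum
    rcases hum with rfl | rfl | rfl
    · exact AS_BS_disj n _ huA h1B
    · exact AS_BS_disj n _ huA h2B
    · exact AS_BS_disj n _ huA h3B

lemma deg_all (hn : 1 ≤ n) (x : Fin (3*n+1)) :
    n.choose 2 + (2*n).choose 2 ≤ hdeg (HG n) x := by
  by_cases hx0 : x = 0
  · subst hx0; exact deg_zero n hn
  have hxv : x.val ≠ 0 := fun h => hx0 (Fin.ext h)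
  have hcover : ∀ u : Fin (3*n+1), u ≠ 0 → u ∈ AS n ∨ u ∈ BS n := by
    intro u hu
    have : u.val ≠ 0 := fun h => hu (Fin.ext h)
    simp only [AS, BS, mem_filter, mem_univ, true_and]
    omega
  by_cases hxA : x ∈ AS n
  · have h := deg_side n (AS n) (BS n) x hxA (zero_not_AS n) (zero_not_BS n)
      (AS_BS_disj n) hcover (mem_HG n)
    rw [card_AS] at h
    have harith := arithA' n hn
    have hmono : (n-1).choose 2 ≤ (3*n-1).choose 2 := Nat.choose_le_choose 2 (by omega)
    omega
  · have hxB : x ∈ BS n := (hcover x hx0).resolve_left hxA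
    have hmemBA : ∀ e : Finset (Fin (3*n+1)), e ∈ HG n ↔ e.card = 3 ∧
        ((0 ∈ e ∧ (e.erase 0 ⊆ BS n ∨ e.erase 0 ⊆ AS n)) ∨
         (0 ∉ e ∧ (e ∩ BS n).Nonempty ∧ (e ∩ AS n).Nonempty)) := by
      intro e; rw [mem_HG]; tauto
    have h := deg_side n (BS n) (AS n) x hxB (zero_not_BS n) (zero_not_AS n)
      (fun u h1 h2 => AS_BS_disj n u h2 h1) (fun u hu => (hcover u hu).symm) hmemBA
    rw [card_BS] at h
    have harith := arithB' n hn
    have hmono : (2*n-1).choose 2 ≤ (3*n-1).choose 2 := Nat.choose_le_choose 2 (by omega)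
    omega

theorem stmt8 (n : ℕ) (hn : 1 ≤ n) :
    (∃ H : Finset (Finset (Fin (3 * n + 1))),
      (∀ e ∈ H, e.card = 3) ∧
      (∀ x : Fin (3 * n + 1), n.choose 2 + (2 * n).choose 2 ≤ hdeg H x) ∧
      ∃ x : Fin (3 * n + 1), ¬ CovC5 H x) ∧
    ((n.choose 2 : ℝ) + ((2 * n).choose 2 : ℝ)
      = 5 / 9 * ((3 * n).choose 2 : ℝ) - 2 * n / 3) ∧
    n.choose 2 + (2 * n).choose 2 ≤ c1C5 (3 * n + 1) := by
  refine ⟨⟨HG n, fun e he => ((mem_HG n e).mp he).1, deg_all n hn, 0, not_cov n⟩, ?_, ?_⟩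
  · obtain ⟨m, rfl⟩ : ∃ m, n = m + 1 := ⟨n - 1, by omega⟩
    have r1 : (((m+1).choose 2 : ℕ) : ℝ) = ((m+1) * m : ℕ) / 2 := by
      rw [← tmc m]; push_cast; ring
    have r2 : (((2*(m+1)).choose 2 : ℕ) : ℝ) = ((2*m+1+1) * (2*m+1) : ℕ) / 2 := by
      rw [show 2*(m+1) = (2*m+1)+1 from by ring, ← tmc (2*m+1)]; push_cast; ring
    have r3 : (((3*(m+1)).choose 2 : ℕ) : ℝ) = ((3*m+2+1) * (3*m+2) : ℕ) / 2 := by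
      rw [show 3*(m+1) = (3*m+2)+1 from by ring, ← tmc (3*m+2)]; push_cast; ring
    rw [r1, r2, r3]
    push_cast
    ring
  · have hmin : n.choose 2 + (2*n).choose 2 ≤ minDeg (HG n) := by
      unfold minDeg
      refine le_csInf ⟨hdeg (HG n) 0, 0, rfl⟩ ?_
      rintro b ⟨x, rfl⟩
      exact deg_all n hn x
    have hbdd : BddAbove {d : ℕ | ∃ H : Finset (Finset (Fin (3*n+1))),
        (∀ e ∈ H, e.card = 3) ∧ (∃ x, ¬ CovC5 H x) ∧ d = minDeg H} := by
      refine ⟨Fintype.card (Finset (Fin (3*n+1))), ?_⟩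
      rintro d ⟨H', _, _, rfl⟩
      calc minDeg H' ≤ hdeg H' 0 := by unfold minDeg; exact Nat.sInf_le ⟨0, rfl⟩
        _ ≤ H'.card := Finset.card_filter_le _ _
        _ ≤ _ := Finset.card_le_univ H'
    have hmem : minDeg (HG n) ∈ {d : ℕ | ∃ H : Finset (Finset (Fin (3*n+1))),
        (∀ e ∈ H, e.card = 3) ∧ (∃ x, ¬ CovC5 H x) ∧ d = minDeg H} :=
      ⟨HG n, fun e he => ((mem_HG n e).mp he).1, ⟨0, not_cov n⟩, rfl⟩
    exact le_trans hmin (le_csSup hbdd hmem)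
end
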